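/- arXiv:1606.00853 — 6 statements merged into one kernel-verified Lean document; each statement's English description precedes it below -/
import Mathlib

section
/- Let n ≥ 3 be an integer and let P be a convex integer N-gon containing no point of nℤ² that lies in a slab of the form jn ≤ x₁ ≤ (j+1)n or jn ≤ x₂ ≤ (j+1)n for some integer j (a type I_n polygon). Then: (i) N ≤ 2n + 2; (ii) if n is even and all vertices of P belong to a sublattice of ℤ² with invariant factor sequence (1, n/2), then N ≤ 2n; (iii) if all vertices of P belong to a sublattice of ℤ² with invariant factor sequence (1, n), then N ≤ 2n − 2. -/
/-!
Each vertical line meets at most two vertices and the slab `jn ≤ x₁ ≤ (j + 1)n` has `n + 1`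
integer columns, whence `N ≤ 2n + 2`. Write `Λ = Aℤ²` with `A = !![a, b; c, d]`. If
`g = gcd(a, b) > 1`, all vertices lie on the `n / g + 1 ≤ n / 2 + 1` columns with `g ∣ x₁`. If `a`
and `b` are coprime, a point of `Λ` with `det A ∣ x₁` also has `det A ∣ x₂`. On the two boundary
columns `x₁ ∈ nℤ` this puts the points of `Λ` into `nℤ²` when `|det A| = n`, so these columns carry
no vertex; when `|det A| = n / 2` it puts them at multiples of `n / 2`, so each boundary column
carries at most one vertex, since between two of them would lie a point of `nℤ²`.
-/

open Set

/-- The point of `ℝ²` corresponding to an integer point. -/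
def intPt (p : ℤ × ℤ) : ℝ × ℝ := ((p.1 : ℝ), (p.2 : ℝ))

/-- A convex integer polygon: the convex hull of a finite set of integer points,
with nonempty interior. -/
def IsConvexIntegerPolygon (P : Set (ℝ × ℝ)) : Prop :=
  ∃ V : Finset (ℤ × ℤ), P = convexHull ℝ (intPt '' ↑V) ∧ (interior P).Nonempty

/-- A sublattice of `ℤ²`: a subgroup generated by two linearly independent vectors. -/
def IsSublatticeZ2 (Λ : AddSubgroup (ℤ × ℤ)) : Prop :=
  ∃ f g : ℤ × ℤ, f.1 * g.2 - f.2 * g.1 ≠ 0 ∧ Λ = AddSubgroup.closure {f, g}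

/-- `Λ` has invariant factor sequence `(δ, n)`: it equals `A·ℤ²` for an integer matrix `A`
with nonzero determinant, where `δ` is the gcd of the four entries of `A` and
`n = |det A| / δ`. -/
def HasInvFactors (Λ : AddSubgroup (ℤ × ℤ)) (δ n : ℕ) : Prop :=
  ∃ a b c d : ℤ, a * d - b * c ≠ 0 ∧
    (∀ p : ℤ × ℤ, p ∈ Λ ↔ ∃ u v : ℤ, p = (a * u + b * v, c * u + d * v)) ∧
    δ = Nat.gcd (Nat.gcd a.natAbs b.natAbs) (Nat.gcd c.natAbs d.natAbs) ∧
    n = (a * d - b * c).natAbs / δ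

/-- All vertices (extreme points) of `P` belong to the lattice `Λ`. -/
def VerticesIn (P : Set (ℝ × ℝ)) (Λ : AddSubgroup (ℤ × ℤ)) : Prop :=
  ∀ x ∈ Set.extremePoints ℝ P, ∃ p ∈ Λ, x = intPt p

/-- `P` contains no point of the lattice `nℤ² = (nℤ) × (nℤ)`. -/
def FreeOfLattice (n : ℕ) (P : Set (ℝ × ℝ)) : Prop :=
  ∀ u v : ℤ, intPt ((n : ℤ) * u, (n : ℤ) * v) ∉ P

/-- Type I_n polygon: a convex integer polygon free of points of `nℤ²` lying in a slab
`jn ≤ x₁ ≤ (j+1)n` or `jn ≤ x₂ ≤ (j+1)n` for some integer `j`. -/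
def TypeI (n : ℕ) (P : Set (ℝ × ℝ)) : Prop :=
  IsConvexIntegerPolygon P ∧ FreeOfLattice n P ∧
  ∃ j : ℤ, (∀ x ∈ P, ((j * n : ℤ) : ℝ) ≤ x.1 ∧ x.1 ≤ (((j + 1) * n : ℤ) : ℝ)) ∨
           (∀ x ∈ P, ((j * n : ℤ) : ℝ) ≤ x.2 ∧ x.2 ≤ (((j + 1) * n : ℤ) : ℝ))

open Finset

lemma intPt_injective : Function.Injective intPt := fun _ _ h =>
  Prod.ext (Int.cast_injective (congrArg Prod.fst h)) (Int.cast_injective (congrArg Prod.snd h))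

lemma intPt_mem_segment_of_fst_eq {p q r : ℤ × ℤ} (hp : p.1 = q.1) (hr : r.1 = q.1)
    (h₁ : p.2 ≤ q.2) (h₂ : q.2 ≤ r.2) : intPt q ∈ segment ℝ (intPt p) (intPt r) := by
  have key : ((q.1 : ℝ), (q.2 : ℝ)) ∈ segment ℝ ((q.1 : ℝ), (p.2 : ℝ)) ((q.1 : ℝ), (r.2 : ℝ)) := by
    rw [← Prod.image_mk_segment_right, segment_eq_Icc (by exact_mod_cast h₁.trans h₂)]
    exact ⟨_, ⟨by exact_mod_cast h₁, by exact_mod_cast h₂⟩, rfl⟩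
  simpa [intPt, hp, hr] using key

lemma exists_two_mul_dvd_mem_Icc {m x y : ℤ} (hx : m ∣ x) (hy : m ∣ y) (hxy : x < y) :
    ∃ z ∈ Set.Icc x y, 2 * m ∣ z := by
  suffices ∃ z ∈ Set.Icc x y, 2 * |m| ∣ z by
    obtain ⟨z, hz, hdvd⟩ := this
    exact ⟨z, hz, (abs_dvd _ _).1 (by rwa [abs_mul, abs_two])⟩
  rw [← abs_dvd] at hx hy
  obtain ⟨s, rfl⟩ := hx
  have hstep : |m| ≤ y - |m| * s := Int.le_of_dvd (by omega) (dvd_sub hy (dvd_mul_right _ _))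
  rcases Int.even_or_odd s with ⟨w, rfl⟩ | ⟨w, rfl⟩
  · exact ⟨|m| * (w + w), ⟨le_rfl, hxy.le⟩, w, by ring⟩
  · exact ⟨|m| * (2 * w + 1) + |m|, ⟨by linarith [abs_nonneg m], by linarith⟩, w + 1, by ring⟩

/-- The lattice `A ℤ²` for `A = !![a, b; c, d]`. -/
def matLattice (a b c d : ℤ) : Set (ℤ × ℤ) :=
  {p | ∃ u v : ℤ, p = (a * u + b * v, c * u + d * v)}

section matLattice

variable {a b c d : ℤ} {p : ℤ × ℤ}

lemma swap_mem_matLattice : p.swap ∈ matLattice a b c d ↔ p ∈ matLattice c d a b := by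
  simp only [matLattice, Set.mem_ofPred_eq, Prod.ext_iff, Prod.fst_swap, Prod.snd_swap]
  exact exists₂_congr fun _ _ => and_comm

lemma gcd_dvd_fst_of_mem_matLattice (hp : p ∈ matLattice a b c d) :
    (Int.gcd a b : ℤ) ∣ p.1 := by
  obtain ⟨u, v, rfl⟩ := hp
  exact dvd_add ((Int.gcd_dvd_left a b).mul_right u) ((Int.gcd_dvd_right a b).mul_right v)

/-- As `a (c u + d v) - c (a u + b v) = v det A` and `b (c u + d v) - d (a u + b v) = -u det A`,
`det A` divides `a p.2` and `b p.2` as soon as it divides `p.1`. -/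
lemma dvd_snd_of_mem_matLattice (hab : IsCoprime a b) (hp : p ∈ matLattice a b c d)
    (h : a * d - b * c ∣ p.1) : a * d - b * c ∣ p.2 := by
  obtain ⟨u, v, rfl⟩ := hp
  obtain ⟨x, y, hxy⟩ := hab
  obtain ⟨w, hw : a * u + b * v = (a * d - b * c) * w⟩ := h
  exact ⟨x * (c * w + v) + y * (d * w - u),
    by linear_combination -(c * u + d * v) * hxy + (x * c + y * d) * hw⟩

lemma HasInvFactors.exists_matLattice {Λ : AddSubgroup (ℤ × ℤ)} {m : ℕ}
    (h : HasInvFactors Λ 1 m) :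
    ∃ a b c d : ℤ, (a * d - b * c).natAbs = m ∧ ∀ p, p ∈ Λ ↔ p ∈ matLattice a b c d := by
  obtain ⟨a, b, c, d, -, hΛ, -, rfl⟩ := h
  exact ⟨a, b, c, d, (Nat.div_one _).symm, hΛ⟩

end matLattice

/-- What the counting uses of the integer vertices `S` of a polygon lying in the slab
`j n ≤ x₁ ≤ (j + 1) n` and containing no point of `nℤ²`. -/
structure IsSlabVertexSet (n : ℕ) (j : ℤ) (S : Finset (ℤ × ℤ)) : Prop where
  mem_slab : ∀ p ∈ S, j * n ≤ p.1 ∧ p.1 ≤ (j + 1) * n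
  card_column_le_two : ∀ k, #{p ∈ S | p.1 = k} ≤ 2
  not_dvd_of_mem_chord : ∀ p ∈ S, ∀ q ∈ S, p.1 = q.1 → (n : ℤ) ∣ p.1 →
    ∀ y, p.2 ≤ y → y ≤ q.2 → ¬ (n : ℤ) ∣ y

namespace IsSlabVertexSet

variable {n : ℕ} {j : ℤ} {S : Finset (ℤ × ℤ)}

lemma card_le_of_card_column_le (h : IsSlabVertexSet n j S) (hn : 0 < n) (b : ℕ)
    (hb : ∀ k, (n : ℤ) ∣ k → #{p ∈ S | p.1 = k} ≤ b) : #S ≤ 2 * (n - 1) + 2 * b := by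
  have hboundary : #{p ∈ S | (n : ℤ) ∣ p.1} ≤ b * #({j * n, (j + 1) * n} : Finset ℤ) := by
    refine card_le_mul_card_image_of_maps_to (f := Prod.fst) (fun p hp => ?_) b
      fun k hk => (Finset.card_le_card (filter_subset_filter _ (filter_subset _ S))).trans ?_
    · obtain ⟨hpS, t, ht⟩ := mem_filter.1 hp
      obtain ⟨h₁, h₂⟩ := h.mem_slab p hpS
      rw [ht] at h₁ h₂
      have hn' : (0 : ℤ) < n := by exact_mod_cast hn
      have : j ≤ t := le_of_mul_le_mul_left (by linarith) hn'
      have : t ≤ j + 1 := le_of_mul_le_mul_left (by linarith) hn'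
      rcases (by omega : t = j ∨ t = j + 1) with rfl | rfl <;> simp [ht, mul_comm]
    · simp only [Finset.mem_insert, Finset.mem_singleton] at hk
      rcases hk with rfl | rfl <;> exact hb _ (dvd_mul_left _ _)
  have hinterior : #{p ∈ S | ¬ (n : ℤ) ∣ p.1} ≤ 2 * #(Ioo (j * n) ((j + 1) * n)) := by
    refine card_le_mul_card_image_of_maps_to (f := Prod.fst) (fun p hp => ?_) 2
      fun k _ => (Finset.card_le_card (filter_subset_filter _ (filter_subset _ S))).trans
        (h.card_column_le_two k)
    obtain ⟨hpS, hp⟩ := mem_filter.1 hp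
    obtain ⟨h₁, h₂⟩ := h.mem_slab p hpS
    have : p.1 ≠ j * n := fun he => hp ⟨j, by rw [he, mul_comm]⟩
    have : p.1 ≠ (j + 1) * n := fun he => hp ⟨j + 1, by rw [he, mul_comm]⟩
    exact mem_Ioo.2 ⟨by omega, by omega⟩
  have hcols : #(Ioo (j * n) ((j + 1) * n)) = n - 1 := by
    rw [Int.card_Ioo, show (j + 1) * (n : ℤ) - j * n - 1 = n - 1 by ring]
    omega
  have := Nat.mul_le_mul_left b (card_le_two (a := j * (n : ℤ)) (b := (j + 1) * n))
  rw [← card_filter_add_card_filter_not (fun p : ℤ × ℤ => (n : ℤ) ∣ p.1)]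
  omega

lemma card_le_two_mul_add_two (h : IsSlabVertexSet n j S) (hn : 0 < n) : #S ≤ 2 * n + 2 := by
  have := h.card_le_of_card_column_le hn 2 fun k _ => h.card_column_le_two k
  omega

lemma card_le_of_dvd_fst (h : IsSlabVertexSet n j S) {g m : ℕ} (hg : 0 < g) (hgn : n = g * m)
    (hS : ∀ p ∈ S, (g : ℤ) ∣ p.1) : #S ≤ 2 * (m + 1) := by
  have hg' : (0 : ℤ) < g := by exact_mod_cast hg
  have hcols : #(Icc (j * m) ((j + 1) * m)) = m + 1 := by
    rw [Int.card_Icc, show (j + 1) * (m : ℤ) + 1 - j * m = m + 1 by ring]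
    omega
  rw [← hcols]
  refine card_le_mul_card_image_of_maps_to (f := fun p : ℤ × ℤ => p.1 / (g : ℤ))
    (fun p hp => ?_) 2
    fun k _ => (Finset.card_le_card fun q hq => ?_).trans (h.card_column_le_two (g * k))
  · obtain ⟨t, ht⟩ := hS p hp
    obtain ⟨h₁, h₂⟩ := h.mem_slab p hp
    rw [ht, hgn, Nat.cast_mul] at h₁ h₂
    rw [ht, Int.mul_ediv_cancel_left _ hg'.ne']
    exact mem_Icc.2
      ⟨le_of_mul_le_mul_left (by linarith) hg', le_of_mul_le_mul_left (by linarith) hg'⟩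
  · obtain ⟨hqS, rfl⟩ := mem_filter.1 hq
    exact mem_filter.2 ⟨hqS, (Int.mul_ediv_cancel' (hS q hqS)).symm⟩

variable {a b c d : ℤ}

lemma card_le_of_not_isCoprime (h : IsSlabVertexSet n j S) (hn : 0 < n)
    (hdet : (a * d - b * c).natAbs ∣ n) (hab : ¬ IsCoprime a b)
    (hS : ↑S ⊆ matLattice a b c d) : #S ≤ 2 * (n / 2 + 1) := by
  have hdet0 : a * d - b * c ≠ 0 := by
    rintro h0
    rw [h0, Int.natAbs_zero, zero_dvd_iff] at hdet
    omega
  have hg0 : Int.gcd a b ≠ 0 := fun h0 => hdet0 <| by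
    obtain ⟨rfl, rfl⟩ := Int.gcd_eq_zero_iff.1 h0
    ring
  have hg1 : Int.gcd a b ≠ 1 := fun h1 => hab (Int.isCoprime_iff_gcd_eq_one.2 h1)
  have hgdet : (Int.gcd a b : ℤ) ∣ a * d - b * c :=
    dvd_sub ((Int.gcd_dvd_left a b).mul_right d) ((Int.gcd_dvd_right a b).mul_right c)
  obtain ⟨m, hm⟩ := (Int.natCast_dvd.1 hgdet).trans hdet
  have := h.card_le_of_dvd_fst (Nat.pos_of_ne_zero hg0) hm
    fun p hp => gcd_dvd_fst_of_mem_matLattice (hS hp)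
  have : m ≤ n / 2 := (Nat.le_div_iff_mul_le two_pos).2 <| by
    rw [hm, mul_comm]
    exact Nat.mul_le_mul_right m (by omega)
  omega

lemma card_le_two_mul_sub_two (h : IsSlabVertexSet n j S) (hn : 3 ≤ n)
    (hdet : (a * d - b * c).natAbs = n) (hS : ↑S ⊆ matLattice a b c d) : #S ≤ 2 * n - 2 := by
  by_cases hab : IsCoprime a b
  · have := h.card_le_of_card_column_le (by omega) 0 fun k hk => ?_
    · omega
    rw [Nat.le_zero, Finset.card_eq_zero, Finset.filter_eq_empty_iff]
    rintro p hp rfl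
    have hdvd : (n : ℤ) ∣ p.2 := by
      rw [← hdet, Int.natAbs_dvd] at hk ⊢
      exact dvd_snd_of_mem_matLattice hab (hS hp) hk
    exact h.not_dvd_of_mem_chord p hp p hp rfl hk p.2 le_rfl le_rfl hdvd
  · have := h.card_le_of_not_isCoprime (by omega) hdet.dvd hab hS
    omega

lemma card_le_two_mul (h : IsSlabVertexSet n j S) (hn : 0 < n)
    (hdet : 2 * (a * d - b * c).natAbs = n) (hS : ↑S ⊆ matLattice a b c d) : #S ≤ 2 * n := by
  by_cases hab : IsCoprime a b
  · have := h.card_le_of_card_column_le hn 1 fun k hk =>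
      Finset.card_le_one.2 fun p hp q hq => ?_
    · omega
    rw [mem_filter] at hp hq
    have hdet_dvd : a * d - b * c ∣ k :=
      Int.natAbs_dvd.1 ((Int.natCast_dvd_natCast.2 ⟨2, by omega⟩).trans hk)
    have hsnd_not_lt : ∀ p ∈ S, ∀ q ∈ S, p.1 = k → q.1 = k → ¬ p.2 < q.2 := by
      intro p hp q hq hpk hqk hlt
      have hp2 := dvd_snd_of_mem_matLattice hab (hS hp) (hpk ▸ hdet_dvd)
      have hq2 := dvd_snd_of_mem_matLattice hab (hS hq) (hqk ▸ hdet_dvd)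
      obtain ⟨z, ⟨h₁, h₂⟩, hz⟩ := exists_two_mul_dvd_mem_Icc hp2 hq2 hlt
      refine h.not_dvd_of_mem_chord p hp q hq (hpk.trans hqk.symm) (hpk ▸ hk) z h₁ h₂ ?_
      simpa [Int.natAbs_mul, hdet] using Int.natAbs_dvd.2 hz
    exact Prod.ext (hp.2.trans hq.2.symm) <| le_antisymm
      (not_lt.1 (hsnd_not_lt q hq.1 p hp.1 hq.2 hp.2))
      (not_lt.1 (hsnd_not_lt p hp.1 q hq.1 hp.2 hq.2))
  · have := h.card_le_of_not_isCoprime hn ⟨2, by omega⟩ hab hS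
    omega

end IsSlabVertexSet

section Geometry

variable {n : ℕ} {j : ℤ} {P : Set (ℝ × ℝ)} {S : Finset (ℤ × ℤ)}

lemma exists_image_intPt_eq_extremePoints (V : Finset (ℤ × ℤ)) :
    ∃ S : Finset (ℤ × ℤ), intPt '' S = extremePoints ℝ (convexHull ℝ (intPt '' V)) := by
  classical
  refine ⟨{p ∈ V | intPt p ∈ extremePoints ℝ (convexHull ℝ (intPt '' V))},
    Set.Subset.antisymm ?_ ?_⟩
  · rintro _ ⟨p, hp, rfl⟩
    exact (mem_filter.1 hp).2
  · intro x hx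
    obtain ⟨p, hpV, rfl⟩ := extremePoints_convexHull_subset hx
    exact ⟨p, mem_filter.2 ⟨hpV, hx⟩, rfl⟩

/-- Three extreme points cannot lie on a vertical line, and a vertical chord of `P` contains no
point of `nℤ²`. -/
lemma isSlabVertexSet_of_fst_mem_slab (hconv : Convex ℝ P)
    (hS : intPt '' S = extremePoints ℝ P) (hfree : FreeOfLattice n P)
    (hslab : ∀ x ∈ P, ((j * n : ℤ) : ℝ) ≤ x.1 ∧ x.1 ≤ (((j + 1) * n : ℤ) : ℝ)) :
    IsSlabVertexSet n j S := by
  have hext : ∀ {p}, p ∈ S ↔ intPt p ∈ extremePoints ℝ P := by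
    intro p
    rw [← hS, intPt_injective.mem_set_image, Finset.mem_coe]
  have hmem : ∀ p ∈ S, intPt p ∈ P := fun p hp => extremePoints_subset (hext.1 hp)
  refine ⟨fun p hp => ?_, fun k => ?_, fun p hp q hq hpq ⟨u, hu⟩ y hpy hyq ⟨v, hv⟩ => ?_⟩
  · obtain ⟨h₁, h₂⟩ := hslab _ (hmem p hp)
    exact ⟨Int.cast_le.1 h₁, Int.cast_le.1 h₂⟩
  · obtain hC | hC := Finset.eq_empty_or_nonempty {p ∈ S | p.1 = k}
    · simp [hC]
    obtain ⟨lo, hlo, hlo_le⟩ := Finset.exists_min_image _ Prod.snd hC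
    obtain ⟨hi, hhi, hle_hi⟩ := Finset.exists_max_image _ Prod.snd hC
    refine (Finset.card_le_card (t := {lo, hi}) fun p hp => ?_).trans card_le_two
    rw [mem_filter] at hlo hhi
    have hseg := intPt_mem_segment_of_fst_eq (hlo.2.trans (mem_filter.1 hp).2.symm)
      (hhi.2.trans (mem_filter.1 hp).2.symm) (hlo_le p hp) (hle_hi p hp)
    rcases (mem_extremePoints_iff_forall_segment.1 (hext.1 (mem_filter.1 hp).1)).2 _
      (hmem _ hlo.1) _ (hmem _ hhi.1) hseg with h | h <;> simp [intPt_injective h]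
  · apply hfree u v
    have := hconv.segment_subset (hmem p hp) (hmem q hq)
      (intPt_mem_segment_of_fst_eq (q := (p.1, y)) rfl hpq.symm hpy hyq)
    rwa [hu, hv] at this

lemma isSlabVertexSet_of_snd_mem_slab (hconv : Convex ℝ P)
    (hS : intPt '' S = extremePoints ℝ P) (hfree : FreeOfLattice n P)
    (hslab : ∀ x ∈ P, ((j * n : ℤ) : ℝ) ≤ x.2 ∧ x.2 ≤ (((j + 1) * n : ℤ) : ℝ)) :
    IsSlabVertexSet n j (S.image Prod.swap) := by
  let e := LinearEquiv.prodComm ℝ ℝ ℝ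
  refine isSlabVertexSet_of_fst_mem_slab (P := e '' P) (hconv.linear_image e.toLinearMap) ?_
    (fun u v ⟨x, hx, hxe⟩ => hfree v u ?_) (fun _ ⟨x, hx, hxe⟩ => hxe ▸ hslab x hx)
  · rw [← image_extremePoints, ← hS, Finset.coe_image, Set.image_image, Set.image_image]
    rfl
  · convert hx
    rw [← e.symm_apply_eq.2 hxe.symm]
    rfl

end Geometry

lemma VerticesIn.mem {P : Set (ℝ × ℝ)} {Λ : AddSubgroup (ℤ × ℤ)} (h : VerticesIn P Λ)
    {p : ℤ × ℤ} (hp : intPt p ∈ extremePoints ℝ P) : p ∈ Λ := by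
  obtain ⟨q, hq, hpq⟩ := h _ hp
  rwa [intPt_injective hpq]

/-- Swapping the coordinates turns a horizontal slab into a vertical one and swaps the rows of a
matrix spanning `Λ`. -/
lemma TypeI.exists_isSlabVertexSet {n : ℕ} {P : Set (ℝ × ℝ)} (hP : TypeI n P) :
    ∃ j : ℤ, ∃ T : Finset (ℤ × ℤ), IsSlabVertexSet n j T ∧ #T = (extremePoints ℝ P).ncard ∧
      ∀ Λ m, HasInvFactors Λ 1 m → VerticesIn P Λ →
        ∃ a b c d : ℤ, (a * d - b * c).natAbs = m ∧ ↑T ⊆ matLattice a b c d := by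
  obtain ⟨⟨V, rfl, -⟩, hfree, j, hslab⟩ := hP
  obtain ⟨S, hS⟩ := exists_image_intPt_eq_extremePoints V
  have hconv := convex_convexHull ℝ (intPt '' ↑V)
  have hcard : #S = (extremePoints ℝ (convexHull ℝ (intPt '' ↑V))).ncard := by
    rw [← hS, Set.ncard_image_of_injective _ intPt_injective, Set.ncard_coe_finset]
  have hΛ : ∀ Λ, VerticesIn (convexHull ℝ (intPt '' ↑V)) Λ → ∀ p ∈ S, p ∈ Λ :=
    fun Λ hV p hp => hV.mem (hS ▸ Set.mem_image_of_mem intPt hp)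
  refine ⟨j, ?_⟩
  rcases hslab with hslab | hslab
  · refine ⟨S, isSlabVertexSet_of_fst_mem_slab hconv hS hfree hslab, hcard,
      fun Λ m hinv hV => ?_⟩
    obtain ⟨a, b, c, d, hdet, hmem⟩ := hinv.exists_matLattice
    exact ⟨a, b, c, d, hdet, fun p hp => (hmem p).1 (hΛ Λ hV p hp)⟩
  · refine ⟨S.image Prod.swap, isSlabVertexSet_of_snd_mem_slab hconv hS hfree hslab,
      by rw [Finset.card_image_of_injective _ Prod.swap_injective, hcard],
      fun Λ m hinv hV => ?_⟩
    obtain ⟨a, b, c, d, hdet, hmem⟩ := hinv.exists_matLattice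
    refine ⟨c, d, a, b, by rw [← hdet, ← Int.natAbs_neg]; ring_nf, ?_⟩
    rintro _ hp
    obtain ⟨p, hpS, rfl⟩ := Finset.mem_image.1 hp
    exact swap_mem_matLattice.2 ((hmem p).1 (hΛ Λ hV p hpS))

/-- Sub-Theorem C for type I polygons. -/
theorem stmt3 (n N : ℕ) (hn : 3 ≤ n) (P : Set (ℝ × ℝ)) (hP : TypeI n P)
    (hcard : (Set.extremePoints ℝ P).ncard = N) :
    N ≤ 2 * n + 2 ∧
    (Even n → ∀ Λ : AddSubgroup (ℤ × ℤ), IsSublatticeZ2 Λ → HasInvFactors Λ 1 (n / 2) →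
      VerticesIn P Λ → N ≤ 2 * n) ∧
    (∀ Λ : AddSubgroup (ℤ × ℤ), IsSublatticeZ2 Λ → HasInvFactors Λ 1 n →
      VerticesIn P Λ → N ≤ 2 * n - 2) := by
  obtain ⟨j, S, hS, hcardS, hlat⟩ := hP.exists_isSlabVertexSet
  rw [← hcard, ← hcardS]
  refine ⟨hS.card_le_two_mul_add_two (by omega), fun hn_even Λ _ hinv hV => ?_,
    fun Λ _ hinv hV => ?_⟩
  · obtain ⟨a, b, c, d, hdet, hsub⟩ := hlat Λ _ hinv hV
    exact hS.card_le_two_mul (by omega) (by rw [hdet, Nat.two_mul_div_two_of_even hn_even]) hsub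
  · obtain ⟨a, b, c, d, hdet, hsub⟩ := hlat Λ _ hinv hV
    exact hS.card_le_two_mul_sub_two hn hdet hsub
end

section
/- Let (f₁, f₂) be a basis of ℤ² and let v and w be the endpoints of an integer slope with respect to (f₁, f₂) having N ≥ 1 edges, with w − v = b₁f₁ + b₂f₂. Then there exists an integer s such that 2N ≤ |b₁| + s, |b₂| ≥ s(s+1)/2, and 0 ≤ s ≤ N. If all the vertices of the slope belong to a sublattice of ℤ² whose small f₁-step (with respect to (f₁, f₂)) is greater than 1, one can take s = 0, so that 2N ≤ |b₁|. If all the vertices of the slope belong to the sublattice with basis (f₁ − a·f₂, m·f₂), where a and m are integers with 1 ≤ a ≤ m, then one can moreover replace the second inequality by |b₂| ≥ (2a + (s−1)m)·s/2. -/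
lemma key_count : ∀ (n : ℕ) (T : Finset ℕ) (k : ℕ → ℤ), T.card = n → Set.InjOn k T →
    (∀ i ∈ T, 0 ≤ k i) → (n : ℤ) * (n - 1) ≤ 2 * ∑ i ∈ T, k i := by
  intro n
  induction n with
  | zero =>
    intro T k hc _ _
    rw [Finset.card_eq_zero.mp hc]
    simp
  | succ n ih =>
    intro T k hc hinj hpos
    have hne : T.Nonempty := Finset.card_pos.mp (by omega)
    obtain ⟨i₀, hi₀, hmax⟩ := Finset.exists_max_image T k hne
    have himg : (T.image k).card = n + 1 := by
      rw [Finset.card_image_of_injOn hinj, hc]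
    have hsub : T.image k ⊆ Finset.Icc 0 (k i₀) := by
      intro x hx
      obtain ⟨i, hi, rfl⟩ := Finset.mem_image.mp hx
      exact Finset.mem_Icc.mpr ⟨hpos i hi, hmax i hi⟩
    have hcard := Finset.card_le_card hsub
    rw [himg, Int.card_Icc] at hcard
    have hk0 : (n : ℤ) ≤ k i₀ := by omega
    have herase := ih (T.erase i₀) k (by rw [Finset.card_erase_of_mem hi₀, hc]; rfl)
      (hinj.mono (by intro x hx; exact Finset.mem_of_mem_erase hx))
      (fun i hi => hpos i (Finset.mem_of_mem_erase hi))
    have hsum : ∑ i ∈ T, k i = k i₀ + ∑ i ∈ T.erase i₀, k i :=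
      (Finset.add_sum_erase T k hi₀).symm
    push_cast
    push_cast at herase
    rw [hsum]
    linarith

lemma sum_bound2 (S : Finset ℕ) (g : ℕ → ℤ) (a' m : ℤ) (ha : 1 ≤ a') (ham : a' ≤ m)
    (hinj : Set.InjOn g S) (hge : ∀ i ∈ S, 1 ≤ g i) (hdvd : ∀ i ∈ S, m ∣ g i - a') :
    (2 * a' + ((S.card : ℤ) - 1) * m) * S.card ≤ 2 * ∑ i ∈ S, g i := by
  have hm : 0 < m := by linarith
  set k : ℕ → ℤ := fun i => (g i - a') / m with hk
  have hgk : ∀ i ∈ S, g i = a' + m * k i := by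
    intro i hi
    have := Int.ediv_mul_cancel (hdvd i hi)
    simp only [hk]
    linarith [this]
  have hknn : ∀ i ∈ S, 0 ≤ k i := by
    intro i hi
    by_contra hneg
    push_neg at hneg
    have : m * k i ≤ -m := by
      have : k i ≤ -1 := by omega
      nlinarith
    have := hgk i hi
    have := hge i hi
    linarith
  have hkinj : Set.InjOn k S := by
    intro i hi j hj hij
    apply hinj hi hj
    rw [hgk i hi, hgk j hj, hij]
  have hkc := key_count S.card S k rfl hkinj hknn
  have hsg : ∑ i ∈ S, g i = S.card * a' + m * ∑ i ∈ S, k i := by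
    rw [Finset.sum_congr rfl hgk, Finset.sum_add_distrib, Finset.sum_const, Finset.mul_sum]
    simp [mul_comm]
  have hmul : m * ((S.card : ℤ) * (S.card - 1)) ≤ m * (2 * ∑ i ∈ S, k i) :=
    mul_le_mul_of_nonneg_left hkc (by linarith)
  rw [hsg]
  ring_nf
  ring_nf at hmul
  linarith

lemma coords_unique {f₁ f₂ : ℤ × ℤ} (hD : f₁.1 * f₂.2 - f₁.2 * f₂.1 ≠ 0)
    {x y x' y' : ℤ} (h : x • f₁ + y • f₂ = x' • f₁ + y' • f₂) : x = x' ∧ y = y' := by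
  rw [Prod.ext_iff] at h
  simp only [Prod.fst_add, Prod.snd_add, Prod.smul_fst, Prod.smul_snd, smul_eq_mul] at h
  obtain ⟨h1, h2⟩ := h
  constructor
  · have : (x - x') * (f₁.1 * f₂.2 - f₁.2 * f₂.1) = 0 := by linear_combination f₂.2 * h1 - f₂.1 * h2
    rcases mul_eq_zero.mp this with h | h
    · linarith
    · exact absurd h hD
  · have : (y - y') * (f₁.1 * f₂.2 - f₁.2 * f₂.1) = 0 := by linear_combination f₁.1 * h2 - f₁.2 * h1
    rcases mul_eq_zero.mp this with h | h
    · linarith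
    · exact absurd h hD

lemma slope_mono {N : ℕ} {a : ℕ → ℤ × ℤ}
    (hpos : ∀ i, 1 ≤ i → i ≤ N → 0 < (a i).1 ∧ (a i).2 < 0)
    (hcross : ∀ i, 1 ≤ i → i + 1 ≤ N → 0 < (a i).1 * (a (i + 1)).2 - (a i).2 * (a (i + 1)).1)
    {i j : ℕ} (hi : 1 ≤ i) (hij : i < j) (hjN : j ≤ N) :
    (a i).2 * (a j).1 < (a i).1 * (a j).2 := by
  have hij' : i + 1 ≤ j := hij
  induction j, hij' using Nat.le_induction with
  | base => have := hcross i hi hjN; linarith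
  | succ j hj ih =>
    have h1 := ih (by omega) (by omega)
    have h2 := hcross j (by omega) (by omega)
    have hxi := (hpos i hi (by omega)).1
    have hxj := (hpos j (by omega) (by omega)).1
    have hxj1 := (hpos (j+1) (by omega) (by omega)).1
    nlinarith [mul_lt_mul_of_pos_right h1 hxj1, mul_lt_mul_of_pos_right h2 hxi]

lemma half_le {X B : ℤ} (h : X ≤ 2 * B) : X / 2 ≤ B := by omega

theorem stmt8_aux (f₁ f₂ : ℤ × ℤ) (hbasis : f₁.1 * f₂.2 - f₁.2 * f₂.1 = 1 ∨ f₁.1 * f₂.2 - f₁.2 * f₂.1 = -1)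
    (N : ℕ) (hN : 1 ≤ N) (v a : ℕ → ℤ × ℤ)
    (hedge : ∀ i, 1 ≤ i → i ≤ N → v i - v (i - 1) = (a i).1 • f₁ + (a i).2 • f₂)
    (hpos : ∀ i, 1 ≤ i → i ≤ N → 0 < (a i).1 ∧ (a i).2 < 0)
    (hcross : ∀ i, 1 ≤ i → i + 1 ≤ N → 0 < (a i).1 * (a (i + 1)).2 - (a i).2 * (a (i + 1)).1)
    (b₁ b₂ : ℤ) (hb : v N - v 0 = b₁ • f₁ + b₂ • f₂) :
    (∃ s : ℤ, 2 * (N : ℤ) ≤ |b₁| + s ∧ s * (s + 1) / 2 ≤ |b₂| ∧ 0 ≤ s ∧ s ≤ (N : ℤ)) ∧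
    (∀ Λ : AddSubgroup (ℤ × ℤ), (∀ i ≤ N, v i ∈ Λ) →
      ∀ m : ℤ, 1 < m → (∀ u₁ : ℤ, (∃ u₂ : ℤ, u₁ • f₁ + u₂ • f₂ ∈ Λ) ↔ m ∣ u₁) →
      2 * (N : ℤ) ≤ |b₁|) ∧
    (∀ a' m : ℤ, 1 ≤ a' → a' ≤ m →
      (∀ i ≤ N, ∃ p q : ℤ, v i = p • (f₁ - a' • f₂) + q • (m • f₂)) →
      ∃ s : ℤ, 2 * (N : ℤ) ≤ |b₁| + s ∧ 0 ≤ s ∧ s ≤ (N : ℤ) ∧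
        (2 * a' + (s - 1) * m) * s / 2 ≤ |b₂|) := by
  have hD : f₁.1 * f₂.2 - f₁.2 * f₂.1 ≠ 0 := by rcases hbasis with h | h <;> omega
  have tele : ∀ n ≤ N, v n - v 0 =
      (∑ i ∈ Finset.Icc 1 n, (a i).1) • f₁ + (∑ i ∈ Finset.Icc 1 n, (a i).2) • f₂ := by
    intro n
    induction n with
    | zero => intro _; simp
    | succ n ihn =>
      intro hn
      have hE := hedge (n + 1) (by omega) hn
      simp only [Nat.add_sub_cancel] at hE
      rw [Finset.sum_Icc_succ_top (by omega : 1 ≤ n + 1),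
        Finset.sum_Icc_succ_top (by omega : 1 ≤ n + 1),
        add_smul, add_smul, show v (n+1) - v 0 = (v (n+1) - v n) + (v n - v 0) by abel,
        hE, ihn (by omega)]
      abel
  obtain ⟨hb₁, hb₂⟩ := coords_unique hD (hb.symm.trans (tele N le_rfl))
  set g : ℕ → ℤ := fun i => -(a i).2 with hg
  have hne : (Finset.Icc 1 N).Nonempty := ⟨1, by simp [Finset.mem_Icc]; omega⟩
  have habs1 : |b₁| = ∑ i ∈ Finset.Icc 1 N, (a i).1 := by
    rw [hb₁, abs_of_pos]
    exact Finset.sum_pos (fun i hi => by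
      rw [Finset.mem_Icc] at hi; exact (hpos i hi.1 hi.2).1) hne
  have habs2 : |b₂| = ∑ i ∈ Finset.Icc 1 N, g i := by
    rw [hb₂, abs_of_neg, ← Finset.sum_neg_distrib]
    exact Finset.sum_neg (fun i hi => by
      rw [Finset.mem_Icc] at hi; exact (hpos i hi.1 hi.2).2) hne
  set S : Finset ℕ := (Finset.Icc 1 N).filter (fun i => (a i).1 = 1) with hS
  have hSmem : ∀ i ∈ S, 1 ≤ i ∧ i ≤ N ∧ (a i).1 = 1 := by
    intro i hi
    rw [hS, Finset.mem_filter, Finset.mem_Icc] at hi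
    exact ⟨hi.1.1, hi.1.2, hi.2⟩
  have sN : S.card ≤ N := by
    have h := Finset.card_filter_le (Finset.Icc 1 N) (fun i => (a i).1 = 1)
    rw [← hS, Nat.card_Icc] at h
    omega
  have claim2N : 2 * (N : ℤ) ≤ |b₁| + S.card := by
    rw [habs1]
    have hsplit := Finset.sum_filter_add_sum_filter_not (Finset.Icc 1 N)
      (fun i => (a i).1 = 1) (fun i => (a i).1)
    rw [← hS] at hsplit
    have h1 : ∑ i ∈ S, (a i).1 = (S.card : ℤ) := by
      rw [Finset.sum_congr rfl (fun i hi => (hSmem i hi).2.2)]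
      simp
    have h2 : 2 * ((((Finset.Icc 1 N).filter (fun i => ¬ (a i).1 = 1)).card : ℤ)) ≤
        ∑ i ∈ (Finset.Icc 1 N).filter (fun i => ¬ (a i).1 = 1), (a i).1 := by
      have := Finset.sum_le_sum (s := (Finset.Icc 1 N).filter (fun i => ¬ (a i).1 = 1))
        (f := fun _ => (2 : ℤ)) (g := fun i => (a i).1)
        (fun i hi => by
          rw [Finset.mem_filter, Finset.mem_Icc] at hi
          have h3 := (hpos i hi.1.1 hi.1.2).1
          show (2 : ℤ) ≤ (a i).1
          omega)
      simpa [mul_comm] using this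
    have hc0 := Finset.card_filter_add_card_filter_not
      (s := Finset.Icc 1 N) (p := fun i => (a i).1 = 1)
    rw [← hS, Nat.card_Icc] at hc0
    have hcZ : (S.card : ℤ) + ((((Finset.Icc 1 N).filter (fun i => ¬ (a i).1 = 1)).card : ℤ)) = N := by
      omega
    rw [← hsplit, h1]
    linarith
  have hinjS : Set.InjOn g S := by
    intro i hi j hj hij
    rw [Finset.mem_coe] at hi hj
    obtain ⟨hi1, hiN, hia⟩ := hSmem i hi
    obtain ⟨hj1, hjN, hja⟩ := hSmem j hj
    by_contra hne'
    rcases lt_trichotomy i j with h | h | h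
    · have := slope_mono hpos hcross hi1 h hjN
      rw [hia, hja] at this
      simp only [hg] at hij
      omega
    · exact hne' h
    · have := slope_mono hpos hcross hj1 h hiN
      rw [hia, hja] at this
      simp only [hg] at hij
      omega
  have hgeS : ∀ i ∈ S, 1 ≤ g i := by
    intro i hi
    obtain ⟨hi1, hiN, _⟩ := hSmem i hi
    have := (hpos i hi1 hiN).2
    simp only [hg]
    omega
  have hsubsum : ∑ i ∈ S, g i ≤ |b₂| := by
    rw [habs2]
    exact Finset.sum_le_sum_of_subset_of_nonneg (Finset.filter_subset _ _)
      (fun i hi _ => by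
        rw [Finset.mem_Icc] at hi
        have := (hpos i hi.1 hi.2).2
        simp only [hg]; omega)
  refine ⟨?_, ?_, ?_⟩
  · refine ⟨(S.card : ℤ), claim2N, ?_, by positivity, by exact_mod_cast sN⟩
    have hsb := sum_bound2 S g 1 1 le_rfl le_rfl hinjS hgeS
      (fun i hi => ⟨g i - 1, by ring⟩)
    have hsb' : (S.card : ℤ) * ((S.card : ℤ) + 1) ≤ 2 * ∑ i ∈ S, g i := by
      ring_nf at hsb ⊢
      linarith
    exact half_le (by linarith)
  · intro Λ hvΛ m hm hstep
    have hdvd : ∀ i, 1 ≤ i → i ≤ N → m ∣ (a i).1 := by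
      intro i h1 h2
      apply (hstep (a i).1).mp
      exact ⟨(a i).2, by
        rw [← hedge i h1 h2]
        exact Λ.sub_mem (hvΛ i h2) (hvΛ (i - 1) (by omega))⟩
    rw [habs1]
    calc 2 * (N : ℤ) = ∑ _i ∈ Finset.Icc 1 N, (2 : ℤ) := by
          rw [Finset.sum_const, Nat.card_Icc]
          push_cast
          ring_nf
      _ ≤ ∑ i ∈ Finset.Icc 1 N, (a i).1 := by
          apply Finset.sum_le_sum
          intro i hi
          rw [Finset.mem_Icc] at hi
          have hp := (hpos i hi.1 hi.2).1
          have := Int.le_of_dvd hp (hdvd i hi.1 hi.2)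
          omega
  · intro a' m ha ham hcoords
    have hdvd3 : ∀ i, 1 ≤ i → i ≤ N → m ∣ (a i).2 + a' * (a i).1 := by
      intro i h1 h2
      obtain ⟨p, q, hp⟩ := hcoords i h2
      obtain ⟨p', q', hp'⟩ := hcoords (i - 1) (by omega)
      have hco : v i - v (i - 1) = (p - p') • f₁ + ((q - q') * m - (p - p') * a') • f₂ := by
        rw [hp, hp']
        module
      obtain ⟨e1, e2⟩ := coords_unique hD ((hedge i h1 h2).symm.trans hco)
      exact ⟨q - q', by rw [e1, e2]; ring⟩
    have hdvdS : ∀ i ∈ S, m ∣ g i - a' := by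
      intro i hi
      obtain ⟨hi1, hiN, hia⟩ := hSmem i hi
      have hd := hdvd3 i hi1 hiN
      have heq : g i - a' = -((a i).2 + a' * (a i).1) := by
        simp only [hg, hia]
        ring
      rw [heq]
      exact dvd_neg.mpr hd
    refine ⟨(S.card : ℤ), claim2N, by positivity, by exact_mod_cast sN, ?_⟩
    have hsb := sum_bound2 S g a' m ha ham hinjS hgeS hdvdS
    exact half_le (by linarith)



open Set

/-- `(f₁, f₂)` is a basis of the lattice `ℤ²`. -/
def IsZBasis (f₁ f₂ : ℤ × ℤ) : Prop :=
  f₁.1 * f₂.2 - f₁.2 * f₂.1 = 1 ∨ f₁.1 * f₂.2 - f₁.2 * f₂.1 = -1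

/-- `v 0, …, v N` are the vertices of an integer slope with respect to `(f₁, f₂)`,
with edge vectors `v i - v (i-1)` having coordinates `a i` with respect to `(f₁, f₂)`:
the edge vectors point right and down and turn counterclockwise. -/
def IsIntSlope (f₁ f₂ : ℤ × ℤ) (N : ℕ) (v a : ℕ → ℤ × ℤ) : Prop :=
  (∀ i, 1 ≤ i → i ≤ N → v i - v (i - 1) = (a i).1 • f₁ + (a i).2 • f₂) ∧
  (∀ i, 1 ≤ i → i ≤ N → 0 < (a i).1 ∧ (a i).2 < 0) ∧
  (∀ i, 1 ≤ i → i + 1 ≤ N → 0 < (a i).1 * (a (i + 1)).2 - (a i).2 * (a (i + 1)).1)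

/-- `c i` are the coordinates of the vertices `v i` with respect to the integer frame
`(o; f₁, f₂)`. -/
def FrameCoords (o f₁ f₂ : ℤ × ℤ) (N : ℕ) (v c : ℕ → ℤ × ℤ) : Prop :=
  ∀ i ≤ N, v i = o + (c i).1 • f₁ + (c i).2 • f₂

/-- The frame splits the slope (expressed via the frame coordinates `c i` of the vertices):
the endpoint `v 0` has coordinates `(<0, >0)`, the endpoint `v N` has coordinates `(>0, <0)`,
and some point of the slope has both frame coordinates positive. -/
def FrameSplits (N : ℕ) (c : ℕ → ℤ × ℤ) : Prop :=
  (c 0).1 < 0 ∧ 0 < (c 0).2 ∧ 0 < (c N).1 ∧ (c N).2 < 0 ∧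
  ∃ i, 1 ≤ i ∧ i ≤ N ∧ ∃ lam : ℝ, 0 ≤ lam ∧ lam ≤ 1 ∧
    0 < (1 - lam) * ((c (i - 1)).1 : ℝ) + lam * ((c i).1 : ℝ) ∧
    0 < (1 - lam) * ((c (i - 1)).2 : ℝ) + lam * ((c i).2 : ℝ)

/-- Proposition (edge count of a slope): bounds on the number `N` of edges of an integer slope
in terms of the coordinates `(b₁, b₂)` of the difference of its endpoints. -/
theorem stmt8 (f₁ f₂ : ℤ × ℤ) (hbasis : IsZBasis f₁ f₂)
    (N : ℕ) (hN : 1 ≤ N) (v a : ℕ → ℤ × ℤ) (hslope : IsIntSlope f₁ f₂ N v a)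
    (b₁ b₂ : ℤ) (hb : v N - v 0 = b₁ • f₁ + b₂ • f₂) :
    (∃ s : ℤ, 2 * (N : ℤ) ≤ |b₁| + s ∧ s * (s + 1) / 2 ≤ |b₂| ∧ 0 ≤ s ∧ s ≤ (N : ℤ)) ∧
    (∀ Λ : AddSubgroup (ℤ × ℤ), IsSublatticeZ2 Λ → (∀ i ≤ N, v i ∈ Λ) →
      ∀ m : ℤ, 1 < m → (∀ u₁ : ℤ, (∃ u₂ : ℤ, u₁ • f₁ + u₂ • f₂ ∈ Λ) ↔ m ∣ u₁) →
      2 * (N : ℤ) ≤ |b₁|) ∧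
    (∀ a' m : ℤ, 1 ≤ a' → a' ≤ m →
      (∀ i ≤ N, ∃ p q : ℤ, v i = p • (f₁ - a' • f₂) + q • (m • f₂)) →
      ∃ s : ℤ, 2 * (N : ℤ) ≤ |b₁| + s ∧ 0 ≤ s ∧ s ≤ (N : ℤ) ∧
        (2 * a' + (s - 1) * m) * s / 2 ≤ |b₂|) := by
  obtain ⟨hedge, hpos, hcross⟩ := hslope
  obtain ⟨h1, h2, h3⟩ := stmt8_aux f₁ f₂ hbasis N hN v a hedge hpos hcross b₁ b₂ hb
  exact ⟨h1, fun Λ _ hv m hm hst => h2 Λ hv m hm hst, h3⟩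
end

section
/- Suppose that an integer frame (o; f₁, f₂) splits an integer slope Q with vertices v₀, …, v_N (with respect to (f₁, f₂)), where v_i = o + v_{i1}f₁ + v_{i2}f₂ and a_i = v_i − v_{i−1}. Then: (1) the frame (o; f₂, f₁) splits Q as well (Q being a slope with respect to (f₂, f₁) with the vertices in reverse order); (2) writing k = min{i : v_{i2} < 0}, α = a_{k1}/(−a_{k2}), k̃ = min{i : v_{i1} ≥ 0}, and α̃ = (−a_{k̃2})/a_{k̃1}, at least one of α ≥ 1 and α̃ ≥ 1 holds (i.e., at least one of the two frames forms small angle with Q); (3) if there exists a point y = o + y₁f₁ + y₂f₂ of Q with y₂ > 0 and y₁ + y₂ ≤ 0, then α ≥ 1, i.e., (o; f₁, f₂) forms small angle with Q. -/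
open Set

set_option maxHeartbeats 2000000 in
/-- Proposition: if an integer frame `(o; f₁, f₂)` splits an integer slope `Q`, then
(1) the frame `(o; f₂, f₁)` splits `Q` (a slope with respect to `(f₂, f₁)` with vertices
reversed) as well; (2) at least one of the two frames forms small angle with `Q`;
(3) if some point `y` of `Q` has frame coordinates `y₂ > 0` and `y₁ + y₂ ≤ 0`, then
`(o; f₁, f₂)` forms small angle with `Q`, i.e. `α = a_{k1}/(−a_{k2}) ≥ 1`. -/
theorem stmt9 (o f₁ f₂ : ℤ × ℤ) (hbasis : IsZBasis f₁ f₂)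
    (N : ℕ) (hN : 1 ≤ N) (v a c : ℕ → ℤ × ℤ)
    (hslope : IsIntSlope f₁ f₂ N v a)
    (hcoords : FrameCoords o f₁ f₂ N v c)
    (hsplit : FrameSplits N c) :
    (IsIntSlope f₂ f₁ N (fun i => v (N - i))
        (fun i => (-(a (N - i + 1)).2, -(a (N - i + 1)).1)) ∧
      FrameCoords o f₂ f₁ N (fun i => v (N - i))
        (fun i => ((c (N - i)).2, (c (N - i)).1)) ∧
      FrameSplits N (fun i => ((c (N - i)).2, (c (N - i)).1))) ∧
    (∀ k kt : ℕ, k ≤ N → kt ≤ N →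
      ((c k).2 < 0 ∧ ∀ j < k, 0 ≤ (c j).2) →
      (0 ≤ (c kt).1 ∧ ∀ j < kt, (c j).1 < 0) →
      (1 ≤ ((a k).1 : ℝ) / (-((a k).2 : ℝ)) ∨ 1 ≤ (-((a kt).2 : ℝ)) / ((a kt).1 : ℝ))) ∧
    (∀ k : ℕ, k ≤ N → ((c k).2 < 0 ∧ ∀ j < k, 0 ≤ (c j).2) →
      (∃ i, 1 ≤ i ∧ i ≤ N ∧ ∃ lam : ℝ, 0 ≤ lam ∧ lam ≤ 1 ∧
        (0 < (1 - lam) * ((c (i - 1)).2 : ℝ) + lam * ((c i).2 : ℝ) ∧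
          ((1 - lam) * ((c (i - 1)).1 : ℝ) + lam * ((c i).1 : ℝ)) +
            ((1 - lam) * ((c (i - 1)).2 : ℝ) + lam * ((c i).2 : ℝ)) ≤ 0)) →
      1 ≤ ((a k).1 : ℝ) / (-((a k).2 : ℝ))) := by
  obtain ⟨hedge, hsign, hcross⟩ := hslope
  obtain ⟨h0x, h0y, hNx, hNy, i0, hi01, hi0N, lam0, hl00, hl01, hq1, hq2⟩ := hsplit
  -- a i is the coordinate difference c i - c (i-1)
  have hac : ∀ i, 1 ≤ i → i ≤ N →
      (a i).1 = (c i).1 - (c (i - 1)).1 ∧ (a i).2 = (c i).2 - (c (i - 1)).2 := by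
    intro i h1 h2
    have hv1 := hcoords i h2
    have hv0 := hcoords (i - 1) (by omega)
    have he := hedge i h1 h2
    rw [hv1, hv0] at he
    have he' : ((c i).1 - (c (i - 1)).1 - (a i).1) • f₁ +
        ((c i).2 - (c (i - 1)).2 - (a i).2) • f₂ = (0 : ℤ × ℤ) := by
      linear_combination (norm := module) he
    have k1 : ((c i).1 - (c (i - 1)).1 - (a i).1) * f₁.1 +
        ((c i).2 - (c (i - 1)).2 - (a i).2) * f₂.1 = 0 := by
      have := congrArg Prod.fst he'
      simpa [smul_eq_mul] using this
    have k2 : ((c i).1 - (c (i - 1)).1 - (a i).1) * f₁.2 +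
        ((c i).2 - (c (i - 1)).2 - (a i).2) * f₂.2 = 0 := by
      have := congrArg Prod.snd he'
      simpa [smul_eq_mul] using this
    rcases hbasis with hd | hd
    · constructor
      · linear_combination (-f₂.2) * k1 + f₂.1 * k2 +
          ((c i).1 - (c (i - 1)).1 - (a i).1) * hd
      · linear_combination f₁.2 * k1 + (-f₁.1) * k2 +
          ((c i).2 - (c (i - 1)).2 - (a i).2) * hd
    · constructor
      · linear_combination f₂.2 * k1 + (-f₂.1) * k2 +
          (-((c i).1 - (c (i - 1)).1 - (a i).1)) * hd
      · linear_combination (-f₁.2) * k1 + f₁.1 * k2 +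
          (-((c i).2 - (c (i - 1)).2 - (a i).2)) * hd
  have hcxlt : ∀ i, 1 ≤ i → i ≤ N → (c (i - 1)).1 < (c i).1 := by
    intro i h1 h2
    have h3 := (hac i h1 h2).1
    have h4 := (hsign i h1 h2).1
    omega
  have hcylt : ∀ i, 1 ≤ i → i ≤ N → (c i).2 < (c (i - 1)).2 := by
    intro i h1 h2
    have h3 := (hac i h1 h2).2
    have h4 := (hsign i h1 h2).2
    omega
  have hxmono : ∀ q, q ≤ N → ∀ p, p ≤ q → (c p).1 ≤ (c q).1 := by
    intro q
    induction q with
    | zero =>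
      intro _ p hp
      have hp0 : p = 0 := by omega
      simp [hp0]
    | succ n ih =>
      intro hq p hp
      rcases Nat.eq_or_lt_of_le hp with h | h
      · rw [h]
      · have h1 := ih (by omega) p (by omega)
        have h2 := hcxlt (n + 1) (by omega) hq
        simp only [Nat.add_sub_cancel] at h2
        omega
  have hymono : ∀ q, q ≤ N → ∀ p, p ≤ q → (c q).2 ≤ (c p).2 := by
    intro q
    induction q with
    | zero =>
      intro _ p hp
      have hp0 : p = 0 := by omega
      simp [hp0]
    | succ n ih =>
      intro hq p hp
      rcases Nat.eq_or_lt_of_le hp with h | h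
      · rw [h]
      · have h1 := ih (by omega) p (by omega)
        have h2 := hcylt (n + 1) (by omega) hq
        simp only [Nat.add_sub_cancel] at h2
        omega
  -- any point of the slope with positive second frame coordinate lies on a segment i ≤ k
  have hseg : ∀ k, k ≤ N → (c k).2 < 0 → ∀ i, 1 ≤ i → i ≤ N → ∀ lam : ℝ,
      0 ≤ lam → lam ≤ 1 →
      0 < (1 - lam) * ((c (i - 1)).2 : ℝ) + lam * ((c i).2 : ℝ) → i ≤ k := by
    intro k hkN hky i h1 h2 lam hl0 hl1 hpos
    by_contra h
    push_neg at h
    have hA : (c (i - 1)).2 < 0 := lt_of_le_of_lt (hymono (i - 1) (by omega) k (by omega)) hky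
    have hB : (c i).2 < 0 := lt_of_le_of_lt (hymono i h2 k (by omega)) hky
    have hA' : ((c (i - 1)).2 : ℝ) < 0 := by exact_mod_cast hA
    have hB' : ((c i).2 : ℝ) < 0 := by exact_mod_cast hB
    nlinarith [mul_nonneg (by linarith : (0:ℝ) ≤ 1 - lam) (by linarith : (0:ℝ) ≤ -((c (i-1)).2 : ℝ)),
      mul_nonneg hl0 (by linarith : (0:ℝ) ≤ -((c i).2 : ℝ))]
  -- sign monotonicity of sums a_i.1 + a_i.2
  have hstep : ∀ j, 1 ≤ j → j + 1 ≤ N → 0 ≤ (a j).1 + (a j).2 →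
      0 < (a (j + 1)).1 + (a (j + 1)).2 := by
    intro j h1 h2 hs
    have hc := hcross j h1 h2
    have h3 := hsign j h1 (by omega)
    have h4 := hsign (j + 1) (by omega) h2
    nlinarith [hc, h3.1, h3.2, h4.1, h4.2, hs, mul_nonneg hs (le_of_lt h4.1)]
  have hsmono : ∀ q, q ≤ N → ∀ p, 1 ≤ p → p < q → 0 ≤ (a p).1 + (a p).2 →
      0 < (a q).1 + (a q).2 := by
    intro q
    induction q with
    | zero => intro _ p _ hp _; omega
    | succ n ih =>
      intro hq p h1 hp hs
      rcases Nat.eq_or_lt_of_le (Nat.le_of_lt_succ hp) with h | h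
      · rw [← h]; exact hstep p h1 (by omega) hs
      · have hn := ih (by omega) p h1 h hs
        exact hstep n (by omega) hq (le_of_lt hn)
  refine ⟨⟨⟨?_, ?_, ?_⟩, ?_, ?_⟩, ?_, ?_⟩
  · -- reversed slope: edges
    intro i h1 h2
    show v (N - i) - v (N - (i - 1)) =
      (-(a (N - i + 1)).2) • f₂ + (-(a (N - i + 1)).1) • f₁
    have hj : N - (i - 1) = N - i + 1 := by omega
    rw [hj]
    have he := hedge (N - i + 1) (by omega) (by omega)
    have hr : N - i + 1 - 1 = N - i := rfl
    rw [hr] at he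
    linear_combination (norm := module) -he
  · -- reversed slope: signs
    intro i h1 h2
    obtain ⟨ha1, ha2⟩ := hsign (N - i + 1) (by omega) (by omega)
    exact ⟨neg_pos.mpr ha2, neg_neg_of_pos ha1⟩
  · -- reversed slope: cross products
    intro i h1 h2
    show 0 < (-(a (N - i + 1)).2) * (-(a (N - (i + 1) + 1)).1) -
      (-(a (N - i + 1)).1) * (-(a (N - (i + 1) + 1)).2)
    have hj : N - (i + 1) + 1 = N - i := by omega
    rw [hj]
    have hc := hcross (N - i) (by omega) (by omega)
    nlinarith [hc]
  · -- reversed coords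
    intro i hi
    show v (N - i) = o + (c (N - i)).2 • f₂ + (c (N - i)).1 • f₁
    rw [hcoords (N - i) (by omega)]
    abel
  · -- reversed split
    refine ⟨?_, ?_, ?_, ?_, ?_⟩
    · exact hNy
    · exact hNx
    · show 0 < (c (N - N)).2
      simp only [Nat.sub_self]
      exact h0y
    · show (c (N - N)).1 < 0
      simp only [Nat.sub_self]
      exact h0x
    · refine ⟨N - i0 + 1, by omega, by omega, 1 - lam0, by linarith, by linarith, ?_, ?_⟩
      · have e1 : N - (N - i0 + 1 - 1) = i0 := by omega
        have e2 : N - (N - i0 + 1) = i0 - 1 := by omega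
        simp only [e1, e2]
        show 0 < (1 - (1 - lam0)) * ((c i0).2 : ℝ) + (1 - lam0) * ((c (i0 - 1)).2 : ℝ)
        linarith [hq2]
      · have e1 : N - (N - i0 + 1 - 1) = i0 := by omega
        have e2 : N - (N - i0 + 1) = i0 - 1 := by omega
        simp only [e1, e2]
        show 0 < (1 - (1 - lam0)) * ((c i0).1 : ℝ) + (1 - lam0) * ((c (i0 - 1)).1 : ℝ)
        linarith [hq1]
  · -- part (2)
    intro k kt hkN hktN hk hkt
    obtain ⟨hky, hkmin⟩ := hk
    obtain ⟨hktx, hktmin⟩ := hkt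
    have hk1 : 1 ≤ k := by
      by_contra h
      have : k = 0 := by omega
      rw [this] at hky
      omega
    have hkt1 : 1 ≤ kt := by
      by_contra h
      have : kt = 0 := by omega
      rw [this] at hktx
      omega
    by_contra hcon
    push_neg at hcon
    obtain ⟨hα, hαt⟩ := hcon
    obtain ⟨hak1, hak2⟩ := hsign k hk1 hkN
    obtain ⟨hakt1, hakt2⟩ := hsign kt hkt1 hktN
    have hsk : (a k).1 + (a k).2 < 0 := by
      have hpos : (0:ℝ) < -((a k).2 : ℝ) := by
        have : (0:ℤ) < -(a k).2 := by omega
        exact_mod_cast this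
      have := (div_lt_one hpos).1 hα
      have h' : ((a k).1 : ℝ) < ((-(a k).2 : ℤ) : ℝ) := by push_cast; linarith
      have h'' : (a k).1 < -(a k).2 := by exact_mod_cast h'
      omega
    have hskt : 0 < (a kt).1 + (a kt).2 := by
      have hpos : (0:ℝ) < ((a kt).1 : ℝ) := by exact_mod_cast hakt1
      have := (div_lt_one hpos).1 hαt
      have h' : ((-(a kt).2 : ℤ) : ℝ) < ((a kt).1 : ℝ) := by push_cast; linarith
      have h'' : -(a kt).2 < (a kt).1 := by exact_mod_cast h'
      omega
    -- the split point lies on segment i0 with kt ≤ i0 ≤ k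
    have hi0k : i0 ≤ k := hseg k hkN hky i0 hi01 hi0N lam0 hl00 hl01 hq2
    have hci0 : 0 < (c i0).1 := by
      have hAB : ((c (i0 - 1)).1 : ℝ) ≤ ((c i0).1 : ℝ) := by
        exact_mod_cast le_of_lt (hcxlt i0 hi01 hi0N)
      have : (1 - lam0) * ((c (i0 - 1)).1 : ℝ) + lam0 * ((c i0).1 : ℝ) ≤ ((c i0).1 : ℝ) := by
        nlinarith [mul_nonneg (by linarith : (0:ℝ) ≤ 1 - lam0) (by linarith : (0:ℝ) ≤ ((c i0).1 : ℝ) - ((c (i0 - 1)).1 : ℝ))]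
      have h0 : (0:ℝ) < ((c i0).1 : ℝ) := lt_of_lt_of_le hq1 this
      exact_mod_cast h0
    have hkti0 : kt ≤ i0 := by
      by_contra h
      push_neg at h
      have := hktmin i0 h
      omega
    rcases Nat.eq_or_lt_of_le (le_trans hkti0 hi0k : kt ≤ k) with h | h
    · rw [h] at hskt; omega
    · have := hsmono k hkN kt hkt1 h (le_of_lt hskt)
      omega
  · -- part (3)
    intro k hkN hk hp
    obtain ⟨hky, hkmin⟩ := hk
    obtain ⟨ip, hip1, hipN, lamp, hlp0, hlp1, hpy, hpsum⟩ := hp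
    have hk1 : 1 ≤ k := by
      by_contra h
      have : k = 0 := by omega
      rw [this] at hky
      omega
    by_contra hα
    push_neg at hα
    obtain ⟨hak1, hak2⟩ := hsign k hk1 hkN
    have hsk : (a k).1 + (a k).2 < 0 := by
      have hpos : (0:ℝ) < -((a k).2 : ℝ) := by
        have : (0:ℤ) < -(a k).2 := by omega
        exact_mod_cast this
      have := (div_lt_one hpos).1 hα
      have h' : ((a k).1 : ℝ) < ((-(a k).2 : ℤ) : ℝ) := by push_cast; linarith
      have h'' : (a k).1 < -(a k).2 := by exact_mod_cast h'
      omega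
    have hsneg : ∀ j, 1 ≤ j → j ≤ k → (a j).1 + (a j).2 < 0 := by
      intro j h1 h2
      by_contra h
      push_neg at h
      rcases Nat.eq_or_lt_of_le h2 with hj | hj
      · rw [hj] at h; omega
      · have := hsmono k hkN j h1 hj h
        omega
    -- the coordinate sum is nonincreasing along vertices up to k
    have hsum : ∀ q, q ≤ k → ∀ p, p ≤ q → (c q).1 + (c q).2 ≤ (c p).1 + (c p).2 := by
      intro q
      induction q with
      | zero =>
      intro _ p hp
      have hp0 : p = 0 := by omega
      simp [hp0]
      | succ n ih =>
        intro hq p hp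
        rcases Nat.eq_or_lt_of_le hp with h | h
        · rw [h]
        · have h1 := ih (by omega) p (by omega)
          have h2 := hsneg (n + 1) (by omega) hq
          have h3 := hac (n + 1) (by omega) (by omega)
          simp only [Nat.add_sub_cancel] at h3
          omega
    have hipk : ip ≤ k := hseg k hkN hky ip hip1 hipN lamp hlp0 hlp1 hpy
    have hi0k : i0 ≤ k := hseg k hkN hky i0 hi01 hi0N lam0 hl00 hl01 hq2
    -- real abbreviations
    have hpx_neg : (1 - lamp) * ((c (ip - 1)).1 : ℝ) + lamp * ((c ip).1 : ℝ) < 0 := by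
      linarith [hpy, hpsum]
    rcases lt_trichotomy ip i0 with h | h | h
    · -- ip < i0 : coordinate sum contradiction
      have hBA : ((c i0).1 + (c i0).2 : ℤ) ≤ (c (i0 - 1)).1 + (c (i0 - 1)).2 :=
        hsum i0 hi0k (i0 - 1) (by omega)
      have h12 : ((c (i0 - 1)).1 + (c (i0 - 1)).2 : ℤ) ≤ (c ip).1 + (c ip).2 :=
        hsum (i0 - 1) (by omega) ip (by omega)
      have hBAp : ((c ip).1 + (c ip).2 : ℤ) ≤ (c (ip - 1)).1 + (c (ip - 1)).2 :=
        hsum ip hipk (ip - 1) (by omega)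
      have hBA' : ((c i0).1 : ℝ) + ((c i0).2 : ℝ) ≤ ((c (i0 - 1)).1 : ℝ) + ((c (i0 - 1)).2 : ℝ) := by
        exact_mod_cast hBA
      have h12' : ((c (i0 - 1)).1 : ℝ) + ((c (i0 - 1)).2 : ℝ) ≤ ((c ip).1 : ℝ) + ((c ip).2 : ℝ) := by
        exact_mod_cast h12
      have hBAp' : ((c ip).1 : ℝ) + ((c ip).2 : ℝ) ≤ ((c (ip - 1)).1 : ℝ) + ((c (ip - 1)).2 : ℝ) := by
        exact_mod_cast hBAp
      have e1 : ((1 - lam0) * ((c (i0 - 1)).1 : ℝ) + lam0 * ((c i0).1 : ℝ)) +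
          ((1 - lam0) * ((c (i0 - 1)).2 : ℝ) + lam0 * ((c i0).2 : ℝ)) ≤
          ((c (i0 - 1)).1 : ℝ) + ((c (i0 - 1)).2 : ℝ) := by
        nlinarith [mul_nonneg hl00 (by linarith :
          (0:ℝ) ≤ (((c (i0 - 1)).1 : ℝ) + ((c (i0 - 1)).2 : ℝ)) - (((c i0).1 : ℝ) + ((c i0).2 : ℝ)))]
      have e2 : ((c ip).1 : ℝ) + ((c ip).2 : ℝ) ≤
          ((1 - lamp) * ((c (ip - 1)).1 : ℝ) + lamp * ((c ip).1 : ℝ)) +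
          ((1 - lamp) * ((c (ip - 1)).2 : ℝ) + lamp * ((c ip).2 : ℝ)) := by
        nlinarith [mul_nonneg (by linarith : (0:ℝ) ≤ 1 - lamp) (by linarith :
          (0:ℝ) ≤ (((c (ip - 1)).1 : ℝ) + ((c (ip - 1)).2 : ℝ)) - (((c ip).1 : ℝ) + ((c ip).2 : ℝ)))]
      linarith [hq1, hq2, e1, e2, h12', hpsum]
    · -- ip = i0 : same segment
      rw [h] at hpx_neg hpy hpsum
      have hAB : ((c (i0 - 1)).1 : ℝ) < ((c i0).1 : ℝ) := by
        exact_mod_cast hcxlt i0 hi01 hi0N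
      have hlam : lamp < lam0 := by
        by_contra hll
        push_neg at hll
        nlinarith [mul_nonneg (by linarith : (0:ℝ) ≤ lamp - lam0)
          (by linarith : (0:ℝ) ≤ ((c i0).1 : ℝ) - ((c (i0 - 1)).1 : ℝ)), hq1, hpx_neg]
      have hBA : ((c i0).1 + (c i0).2 : ℤ) ≤ (c (i0 - 1)).1 + (c (i0 - 1)).2 :=
        hsum i0 hi0k (i0 - 1) (by omega)
      have hBA' : ((c i0).1 : ℝ) + ((c i0).2 : ℝ) ≤ ((c (i0 - 1)).1 : ℝ) + ((c (i0 - 1)).2 : ℝ) := by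
        exact_mod_cast hBA
      have e3 : ((1 - lam0) * ((c (i0 - 1)).1 : ℝ) + lam0 * ((c i0).1 : ℝ)) +
          ((1 - lam0) * ((c (i0 - 1)).2 : ℝ) + lam0 * ((c i0).2 : ℝ)) ≤
          ((1 - lamp) * ((c (i0 - 1)).1 : ℝ) + lamp * ((c i0).1 : ℝ)) +
          ((1 - lamp) * ((c (i0 - 1)).2 : ℝ) + lamp * ((c i0).2 : ℝ)) := by
        nlinarith [mul_nonneg (by linarith : (0:ℝ) ≤ lam0 - lamp) (by linarith :
          (0:ℝ) ≤ (((c (i0 - 1)).1 : ℝ) + ((c (i0 - 1)).2 : ℝ)) - (((c i0).1 : ℝ) + ((c i0).2 : ℝ)))]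
      linarith [hq1, hq2, e3, hpsum]
    · -- i0 < ip : x-coordinate contradiction
      have hAB0 : ((c (i0 - 1)).1 : ℝ) ≤ ((c i0).1 : ℝ) := by
        exact_mod_cast le_of_lt (hcxlt i0 hi01 hi0N)
      have hABp : ((c (ip - 1)).1 : ℝ) ≤ ((c ip).1 : ℝ) := by
        exact_mod_cast le_of_lt (hcxlt ip hip1 hipN)
      have hxm : ((c i0).1 : ℤ) ≤ (c (ip - 1)).1 := hxmono (ip - 1) (by omega) i0 (by omega)
      have hxm' : ((c i0).1 : ℝ) ≤ ((c (ip - 1)).1 : ℝ) := by exact_mod_cast hxm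
      have e4 : (1 - lam0) * ((c (i0 - 1)).1 : ℝ) + lam0 * ((c i0).1 : ℝ) ≤ ((c i0).1 : ℝ) := by
        nlinarith [mul_nonneg (by linarith : (0:ℝ) ≤ 1 - lam0) (by linarith :
          (0:ℝ) ≤ ((c i0).1 : ℝ) - ((c (i0 - 1)).1 : ℝ))]
      have e5 : ((c (ip - 1)).1 : ℝ) ≤ (1 - lamp) * ((c (ip - 1)).1 : ℝ) + lamp * ((c ip).1 : ℝ) := by
        nlinarith [mul_nonneg hlp0 (by linarith :
          (0:ℝ) ≤ ((c ip).1 : ℝ) - ((c (ip - 1)).1 : ℝ))]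
      linarith [hq1, e4, hxm', e5, hpx_neg]
end

section
/- Suppose that an integer frame (o; f₁, f₂) splits an integer slope Q having N edges and endpoints v = o + v₁f₁ + v₂f₂ with v₁ < 0, v₂ > 0 and w = o + w₁f₁ + w₂f₂ with w₁ > 0, w₂ < 0. Then 2N ≤ v₂ + w₁, and if (o; f₁, f₂) forms small angle with Q, then 2N ≤ v₂ + w₁ − ⌈(−w₂)/2⌉ + 1. -/
open Set

set_option maxHeartbeats 1000000

lemma tele_ge (f : ℕ → ℤ) (m : ℤ) (s t : ℕ) (hst : s ≤ t)
    (h : ∀ i, s < i → i ≤ t → f (i-1) + m ≤ f i) :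
    f s + m * ((t : ℤ) - (s : ℤ)) ≤ f t := by
  induction t, hst using Nat.le_induction with
  | base => simp
  | succ t ht IH =>
    have h1 : f s + m * ((t : ℤ) - (s : ℤ)) ≤ f t :=
      IH (fun i hi hit => h i hi (by omega))
    have h2 : f t + m ≤ f (t+1) := by
      have := h (t+1) (by omega) le_rfl
      simpa using this
    have hc : ((t+1 : ℕ) : ℤ) = (t : ℤ) + 1 := by push_cast; ring
    rw [hc]; nlinarith [h1, h2]

lemma chain3 (a b c d e f : ℤ) (hb : 0 < b) (hd : 0 < d) (hf : 0 < f)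
    (h1 : c * b < a * d) (h2 : e * d < c * f) : e * b < a * f := by
  nlinarith [mul_lt_mul_of_pos_right h2 hb, mul_lt_mul_of_pos_right h1 hf,
    mul_pos hb hd, mul_pos hd hf]

section Seq
variable (x y r b : ℕ → ℤ)

/-- windowed slope transitivity -/
lemma slopes_transW (lo hi : ℕ)
    (hr : ∀ i, lo < i → i ≤ hi → 1 ≤ r i)
    (hcross : ∀ i, lo < i → i + 1 ≤ hi → b (i+1) * r i < b i * r (i+1)) :
    ∀ i j, lo < i → i < j → j ≤ hi → b j * r i < b i * r j := by
  intro i j hi hij hjn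
  induction j, hij using Nat.le_induction with
  | base => exact hcross i hi (by omega)
  | succ j hj IH =>
    have hIH : b j * r i < b i * r j := IH (by omega)
    have hC : b (j+1) * r j < b j * r (j+1) := hcross j (by omega) (by omega)
    exact chain3 (b i) (r i) (b j) (r j) (b (j+1)) (r (j+1))
      (lt_of_lt_of_le one_pos (hr i hi (by omega)))
      (lt_of_lt_of_le one_pos (hr j (by omega) (by omega)))
      (lt_of_lt_of_le one_pos (hr (j+1) (by omega) (by omega)))
      hIH hC

/-- Tail counting lemma with floor(Σb/2) bonus (TLF). -/
lemma tlf (s t : ℕ) (hst : s ≤ t)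
    (hr : ∀ i, s < i → i ≤ t → 1 ≤ r i)
    (hb : ∀ i, s < i → i ≤ t → 1 ≤ b i)
    (hflat : ∀ i, s < i → i ≤ t → b i + 1 ≤ r i)
    (hcross : ∀ i, s < i → i + 1 ≤ t → b (i+1) * r i < b i * r (i+1))
    (hxs : ∀ i, s < i → i ≤ t → x i = x (i-1) + r i)
    (hys : ∀ i, s < i → i ≤ t → y i = y (i-1) - b i) :
    ∀ c : ℤ, 2*c ≤ y s - y t → x s + (2*((t:ℤ) - (s:ℤ)) + c) ≤ x t := by
  induction t, hst using Nat.le_induction with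
  | base => intro c hc; simp at hc ⊢; omega
  | succ t ht IH =>
    intro c hc
    have hyt1 : y (t+1) = y t - b (t+1) := by
      have := hys (t+1) (by omega) le_rfl; simpa using this
    have hxt1 : x (t+1) = x t + r (t+1) := by
      have := hxs (t+1) (by omega) le_rfl; simpa using this
    have hb1 : 1 ≤ b (t+1) := hb (t+1) (by omega) le_rfl
    have hr1 : 1 ≤ r (t+1) := hr (t+1) (by omega) le_rfl
    have IH' := IH (fun i hi hit => hr i hi (by omega)) (fun i hi hit => hb i hi (by omega))
      (fun i hi hit => hflat i hi (by omega)) (fun i hi hit => hcross i hi (by omega))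
      (fun i hi hit => hxs i hi (by omega)) (fun i hi hit => hys i hi (by omega))
    rcases lt_or_ge (2 * b (t+1)) (r (t+1)) with hsteep | hflat2
    · -- flat last edge with slope < 1/2 : peel it
      have h1 := IH' (c - (b (t+1) + 1) / 2) (by omega)
      push_cast at h1 ⊢
      omega
    · -- slope of last edge ≥ 1/2 : all previous b's ≥ 2
      have hbi2 : ∀ i, s < i → i ≤ t → 2 ≤ b i := by
        intro i hi hit
        have htr : b (t+1) * r i < b i * r (t+1) :=
          slopes_transW r b s (t+1) (fun j hj hjt => hr j hj (by omega))
            hcross i (t+1) hi (by omega) le_rfl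
        have : r i < 2 * b i := by
          have h2 : b i * r (t+1) ≤ b i * (2 * b (t+1)) :=
            mul_le_mul_of_nonneg_left hflat2 (by have := hb i hi (by omega); omega)
          nlinarith [hb (t+1) (by omega) le_rfl]
        have := hflat i hi (by omega)
        omega
      -- telescopes
      have T1 : (fun i => -(y i)) s + 2 * ((t:ℤ) - (s:ℤ)) ≤ (fun i => -(y i)) t := by
        apply tele_ge _ 2 s t ht
        intro i hi hit
        have := hys i hi (by omega)
        have := hbi2 i hi hit
        omega
      have T3 : (fun i => x i + y i) s + 1 * (((t+1:ℕ):ℤ) - (s:ℤ)) ≤ (fun i => x i + y i) (t+1) := by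
        apply tele_ge _ 1 s (t+1) (by omega)
        intro i hi hit
        have h4 := hys i hi hit
        have h5 := hxs i hi hit
        have h6 := hflat i hi hit
        omega
      push_cast at T1 T3 ⊢
      omega

/-- Tail counting when all slopes < 1/2 (TL2). -/
lemma tl2 (s t : ℕ) (hst : s ≤ t)
    (hb : ∀ i, s < i → i ≤ t → 1 ≤ b i)
    (hfl : ∀ i, s < i → i ≤ t → 2 * b i + 1 ≤ r i)
    (hxs : ∀ i, s < i → i ≤ t → x i = x (i-1) + r i)
    (hys : ∀ i, s < i → i ≤ t → y i = y (i-1) - b i) :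
    ∀ c : ℤ, s < t → 2*c ≤ y s - y t → x s + (2*((t:ℤ) - (s:ℤ)) + c + 1) ≤ x t := by
  intro c hst2 hc
  have T1 : (fun i => -(y i)) s + 1 * ((t:ℤ) - (s:ℤ)) ≤ (fun i => -(y i)) t := by
    apply tele_ge _ 1 s t hst
    intro i hi hit
    have := hys i hi hit; have := hb i hi hit
    omega
  have T2 : (fun i => x i + 2 * y i) s + 1 * ((t:ℤ) - (s:ℤ)) ≤ (fun i => x i + 2 * y i) t := by
    apply tele_ge _ 1 s t hst
    intro i hi hit
    have := hys i hi hit; have := hxs i hi hit; have := hfl i hi hit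
    omega
  have hts : (1:ℤ) ≤ (t:ℤ) - (s:ℤ) := by exact_mod_cast by omega
  beta_reduce at T1 T2
  omega
end Seq

section Seq
variable (x y r b : ℕ → ℤ) (n : ℕ)

/-- Key chain lemma (RLS): for a chain with strictly decreasing slopes,
`b m * (2m - 1 - Σ_{i<m} b i) ≤ r m + b m - 1`, where `Σ_{i<m} b i = y 0 - y (m-1)`. -/
lemma rls
    (hr : ∀ i, 1 ≤ i → i ≤ n → 1 ≤ r i)
    (hb : ∀ i, 1 ≤ i → i ≤ n → 1 ≤ b i)
    (hys : ∀ i, 1 ≤ i → i ≤ n → y i = y (i-1) - b i)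
    (hcross : ∀ i, 1 ≤ i → i + 1 ≤ n → b (i+1) * r i < b i * r (i+1)) :
    ∀ m, 1 ≤ m → m ≤ n → b m * (2*(m:ℤ) - 1 - (y 0 - y (m-1))) ≤ r m + b m - 1 := by
  intro m hm hmn
  induction m, hm using Nat.le_induction with
  | base =>
    simp only [Nat.sub_self]
    have h1 := hr 1 le_rfl (by omega)
    have h2 : ((1:ℕ):ℤ) = 1 := by norm_num
    rw [h2]
    have h3 : (2 * (1:ℤ) - 1 - (y 0 - y 0)) = 1 := by ring
    rw [h3]
    omega
  | succ m hm IH =>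
    have hmn' : m ≤ n := by omega
    have hIH := IH hmn'
    have hym : y m = y (m-1) - b m := hys m (by omega) hmn'
    have hbm : 1 ≤ b m := hb m (by omega) hmn'
    have hbm1 : 1 ≤ b (m+1) := hb (m+1) (by omega) (by omega)
    have hrm : 1 ≤ r m := hr m (by omega) hmn'
    have hrm1 : 1 ≤ r (m+1) := hr (m+1) (by omega) (by omega)
    have hC : b (m+1) * r m < b m * r (m+1) := hcross m (by omega) (by omega)
    have hsimp : (m + 1 - 1 : ℕ) = m := by omega
    rw [hsimp]
    have hcast : (2*((m:ℤ)+1) - 1 - (y 0 - y m)) = (2*(m:ℤ) - 1 - (y 0 - y (m-1))) + 2 - b m := by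
      rw [hym]; push_cast; ring
    push_cast
    rw [hcast]
    set C : ℤ := 2*(m:ℤ) - 1 - (y 0 - y (m-1)) with hCdef
    rcases le_or_gt (C + 2 - b m) 1 with h1 | h2
    · calc b (m+1) * (C + 2 - b m) ≤ b (m+1) * 1 := by
            apply mul_le_mul_of_nonneg_left h1 (by omega)
        _ ≤ r (m+1) + b (m+1) - 1 := by omega
    · -- C + 2 - b m ≥ 2
      have key : b m * (b (m+1) * (C + 2 - b m)) ≤ b m * (r (m+1) + b (m+1) - 1) := by
        nlinarith [mul_le_mul_of_nonneg_left hIH (by omega : (0:ℤ) ≤ b (m+1)),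
          mul_nonneg (by omega : (0:ℤ) ≤ b m - 1)
            (by nlinarith : (0:ℤ) ≤ b (m+1) * (b m - 1) - 1 + b (m+1))]
      exact le_of_mul_le_mul_left key (by omega)
end Seq

section Seq
variable (x y r b : ℕ → ℤ)

/-- Tail lemma with comparison to a steeper reference slope ρ/β, β ≥ 2 (TL3a). -/
lemma tl3a (ρ β : ℤ) (hβ : 2 ≤ β) (hρ : 2*β < ρ) (s t : ℕ)
    (hb : ∀ i, s < i → i ≤ t → 1 ≤ b i)
    (hcmp : ∀ i, s < i → i ≤ t → ρ * b i + 1 ≤ β * r i)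
    (hfl : ∀ i, s < i → i ≤ t → 2 * b i + 1 ≤ r i)
    (hxs : ∀ i, s < i → i ≤ t → x i = x (i-1) + r i)
    (hys : ∀ i, s < i → i ≤ t → y i = y (i-1) - b i) :
    ∀ c e : ℤ, s < t → 2*c ≤ y s - y t → e * β ≤ ρ + β - 1 →
      x s + (2*((t:ℤ) - (s:ℤ)) + c + e - 2) ≤ x t := by
  have hst : s ≤ t ∨ t < s := le_or_gt s t
  rcases hst with hst | hst
  swap
  · intro c e h; omega
  induction t, hst using Nat.le_induction with
  | base => intro c e h; omega
  | succ t ht IH =>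
    intro c e hst2 hc he
    have hyt1 : y (t+1) = y t - b (t+1) := by
      have := hys (t+1) (by omega) le_rfl; simpa using this
    have hxt1 : x (t+1) = x t + r (t+1) := by
      have := hxs (t+1) (by omega) le_rfl; simpa using this
    have hb1 : 1 ≤ b (t+1) := hb (t+1) (by omega) le_rfl
    have hcmp1 := hcmp (t+1) (by omega) le_rfl
    have hfl1 := hfl (t+1) (by omega) le_rfl
    rcases Nat.lt_or_ge s t with hst3 | hst4
    · -- peel last edge
      have IH' := IH (fun i hi hit => hb i hi (by omega)) (fun i hi hit => hcmp i hi (by omega))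
        (fun i hi hit => hfl i hi (by omega)) (fun i hi hit => hxs i hi (by omega))
        (fun i hi hit => hys i hi (by omega))
        (c - (b (t+1) + 1) / 2) e hst3 (by omega) he
      push_cast at IH' ⊢
      omega
    · -- base case t = s : single edge
      have hts : t = s := by omega
      subst hts
      push_cast
      -- goal : x t + (2*(t+1-t) + c + e - 2) ≤ x (t+1) i.e. r(t+1) ≥ c + e
      have hbb := hb (t+1) (by omega) le_rfl
      rcases le_or_gt 2 (b (t+1)) with hb2 | hb2
      · -- b ≥ 2
        have key : r (t+1) ≥ c + e := by
          nlinarith [mul_nonneg (by omega : (0:ℤ) ≤ β) (by omega : (0:ℤ) ≤ b (t+1) - 2),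
            mul_nonneg (by omega : (0:ℤ) ≤ ρ - 2*β - 1) (by omega : (0:ℤ) ≤ b (t+1) - 1)]
        omega
      · -- b = 1
        have hbe : b (t+1) = 1 := by omega
        have hce : c ≤ 0 := by omega
        have key : r (t+1) ≥ e := by nlinarith
        omega

/-- Tail lemma, comparison to reference slope with β = 1 (TL3b). -/
lemma tl3b (ρ : ℤ) (hρ : 3 ≤ ρ) (s t : ℕ)
    (hb : ∀ i, s < i → i ≤ t → 1 ≤ b i)
    (hcmp : ∀ i, s < i → i ≤ t → ρ * b i + 1 ≤ r i)
    (hxs : ∀ i, s < i → i ≤ t → x i = x (i-1) + r i)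
    (hys : ∀ i, s < i → i ≤ t → y i = y (i-1) - b i) :
    ∀ c : ℤ, s < t → 2*c ≤ y s - y t →
      x s + (2*((t:ℤ) - (s:ℤ)) + c + ρ - 1) ≤ x t := by
  intro c hst hc
  have T1 : (fun i => -(y i)) s + 1 * ((t:ℤ) - (s:ℤ)) ≤ (fun i => -(y i)) t := by
    apply tele_ge _ 1 s t (by omega)
    intro i hi hit
    have := hys i hi hit; have := hb i hi hit
    omega
  have T2 : (fun i => x i + ρ * y i) s + 1 * ((t:ℤ) - (s:ℤ)) ≤ (fun i => x i + ρ * y i) t := by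
    apply tele_ge _ 1 s t (by omega)
    intro i hi hit
    have h1 := hys i hi hit; have h2 := hxs i hi hit; have h3 := hcmp i hi hit
    have h4 := hb i hi hit
    simp only [] at *
    nlinarith
  beta_reduce at T1 T2
  have hts : (1:ℤ) ≤ (t:ℤ) - (s:ℤ) := by omega
  nlinarith [mul_nonneg (by omega : (0:ℤ) ≤ 2*ρ - 3) (by omega : (0:ℤ) ≤ (y s - y t) - 1)]
end Seq
-- arithmetic helpers

lemma bii_arith (B R u w e c N L xn y0 ylm1 : ℤ)
    (hB2 : 2 ≤ B) (huw : 1 ≤ u + w) (hw : 0 ≤ w)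
    (he2 : R ≤ e * B)
    (hT : u + (2*(N - L) + (c + w/2) + e - 2) ≤ xn)
    (hRLS : B * (2*L - 1 - (y0 - ylm1)) ≤ R + B - 1)
    (hylm : w = ylm1 - B) :
    2*N + c ≤ xn + y0 := by
  have hw2 : 0 ≤ w / 2 := Int.ediv_nonneg hw (by norm_num)
  have key : B*B - 3*B + 1 ≤ B * (xn + y0 - 2*N - c) := by
    nlinarith [mul_le_mul_of_nonneg_left hT (by omega : (0:ℤ) ≤ B),
      mul_le_mul_of_nonneg_left huw (by omega : (0:ℤ) ≤ B),
      mul_nonneg (by omega : (0:ℤ) ≤ B) hw2]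
  rcases (by omega : B = 2 ∨ 3 ≤ B) with hb2 | hb3
  · rw [hb2] at key; omega
  · nlinarith [key, mul_nonneg (by omega : (0:ℤ) ≤ B - 3) (by omega : (0:ℤ) ≤ B)]

lemma ln_arith (B R E Y1 c N y0 : ℤ)
    (hB : 1 ≤ B) (hR : B + 1 ≤ R) (hE : 1 ≤ E) (hY1 : 1 ≤ Y1)
    (hD : Y1 + 1 ≤ B)
    (hgn : 1 ≤ B * (-E) + R * Y1)
    (hRLS : B * (2*N - 1 - (y0 - Y1)) ≤ R + B - 1)
    (hc : 2*c ≤ B - Y1) :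
    2*N + c ≤ (-E + R) + y0 := by
  rcases (by omega : B = 2 ∧ Y1 = 1 ∨ 3 ≤ B) with ⟨hb2, hy11⟩ | hb3
  · subst hb2; subst hy11
    have hcc : c ≤ 0 := by omega
    have key : 0 ≤ 2 * ((-E + R) + y0 - 2*N - c) := by nlinarith [hRLS, hgn]
    omega
  · have key : 0 ≤ B * ((-E + R) + y0 - 2*N - c) := by
      nlinarith [hRLS, hgn,
        mul_nonneg (by omega : (0:ℤ) ≤ B - 3) (by omega : (0:ℤ) ≤ B),
        mul_nonneg (by omega : (0:ℤ) ≤ B - 2) (by omega : (0:ℤ) ≤ Y1 - 1),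
        mul_nonneg (by omega : (0:ℤ) ≤ R - B - 1) (by omega : (0:ℤ) ≤ B - Y1 - 1)]
    nlinarith [key]

lemma n1_arith (B R E c y0 : ℤ)
    (hB : 1 ≤ B) (hR : B ≤ R) (hE : 1 ≤ E) (hy0 : 1 ≤ y0)
    (hD : y0 + 1 ≤ B)
    (hgn : 1 ≤ B * (-E) + R * y0)
    (hc : 2*c ≤ B - y0) :
    2 + c ≤ (-E + R) + y0 := by
  have key : 0 ≤ B * ((-E + R) + y0 - 2 - c) := by
    nlinarith [hgn, mul_nonneg (by omega : (0:ℤ) ≤ B - 1) (by omega : (0:ℤ) ≤ B - 2),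
      mul_nonneg (by omega : (0:ℤ) ≤ B) (by omega : (0:ℤ) ≤ y0 - 1),
      mul_nonneg (by omega : (0:ℤ) ≤ R - B) (by omega : (0:ℤ) ≤ B - y0)]
  nlinarith [key]

/-- The all-flat case: slope crosses both axes, below-axis descent only on last edge. -/
lemma cii (x y r b : ℕ → ℤ) (n l : ℕ)
    (hn : 1 ≤ n)
    (hr : ∀ i, 1 ≤ i → i ≤ n → 1 ≤ r i)
    (hb : ∀ i, 1 ≤ i → i ≤ n → 1 ≤ b i)
    (hxs : ∀ i, 1 ≤ i → i ≤ n → x i = x (i-1) + r i)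
    (hys : ∀ i, 1 ≤ i → i ≤ n → y i = y (i-1) - b i)
    (hcross : ∀ i, 1 ≤ i → i + 1 ≤ n → b (i+1) * r i < b i * r (i+1))
    (hflat1 : b 1 ≤ r 1)
    (hx0 : x 0 ≤ -1) (hy0 : 1 ≤ y 0)
    (hyab : ∀ j, j < n → 0 ≤ y j)
    (hyn : y n ≤ -1)
    (hl1 : 1 ≤ l) (hln : l ≤ n)
    (hlx : ∀ j, j < l → x j ≤ -1)
    (hxl : 0 ≤ x l)
    (hgl : 1 ≤ b l * x (l-1) + r l * y (l-1))
    (hgn : 1 ≤ b n * x (n-1) + r n * y (n-1)) :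
    ∀ c : ℤ, 2*c ≤ -(y n) → 2*(n:ℤ) + c ≤ x n + y 0 := by
  intro c hc
  -- strict flatness for i ≥ 2
  have hstrict : ∀ i, 2 ≤ i → i ≤ n → b i + 1 ≤ r i := by
    intro i h2 hin
    have htr : b i * r 1 < b 1 * r i :=
      slopes_transW r b 0 n (fun j hj hjn => hr j hj hjn) hcross 1 i (by omega) (by omega) hin
    have h4 : b 1 * r i ≤ r 1 * r i :=
      mul_le_mul_of_nonneg_right hflat1 (by have := hr i (by omega) hin; omega)
    have h5 : b i * r 1 < r 1 * r i := lt_of_lt_of_le htr h4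
    have h6 : 1 ≤ r 1 := hr 1 (by omega) (by omega)
    nlinarith
  have hbl := hb l hl1 hln
  have hrl := hr l hl1 hln
  -- g_l at the right endpoint
  have hglr : 1 ≤ b l * x l + r l * y l := by
    have h1 := hxs l hl1 hln
    have h2 := hys l hl1 hln
    calc (1:ℤ) ≤ b l * x (l-1) + r l * y (l-1) := hgl
      _ = b l * x l + r l * y l := by rw [h1, h2]; ring
  rcases Nat.lt_or_ge l n with hlltn | hlgen
  · -- MAIN CASE : l ≤ n - 1
    have hw : 0 ≤ y l := hyab l hlltn
    have huw : 1 ≤ x l + y l := by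
      rcases le_or_gt 1 (y l) with h | h
      · omega
      · have hw0 : y l = 0 := by omega
        rw [hw0] at hglr
        nlinarith
    -- tail window hypotheses
    have hbT : ∀ i, l < i → i ≤ n → 1 ≤ b i := fun i hi hin => hb i (by omega) hin
    have hrT : ∀ i, l < i → i ≤ n → 1 ≤ r i := fun i hi hin => hr i (by omega) hin
    have hflT : ∀ i, l < i → i ≤ n → b i + 1 ≤ r i := fun i hi hin => hstrict i (by omega) hin
    have hxsT : ∀ i, l < i → i ≤ n → x i = x (i-1) + r i := fun i hi hin => hxs i (by omega) hin
    have hysT : ∀ i, l < i → i ≤ n → y i = y (i-1) - b i := fun i hi hin => hys i (by omega) hin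
    have hcT : ∀ i, l < i → i + 1 ≤ n → b (i+1) * r i < b i * r (i+1) :=
      fun i hi hin => hcross i (by omega) hin
    -- head count : b i ≥ 2 for 2 ≤ i ≤ l-1 in branch A; general head descent
    -- Σ_{i ≤ l} b i = y 0 - y l
    have hyl2c : 2*(c + y l / 2) ≤ y l - y n := by omega
    rcases le_or_gt (r l) (2 * b l) with hA | hB
    · -- Branch A : slope_l ≥ 1/2
      have hbi2 : ∀ i, 2 ≤ i → i ≤ l-1 → 2 ≤ b i := by
        intro i h2 hil
        have htr : b l * r i < b i * r l :=
          slopes_transW r b 0 n (fun j hj hjn => hr j hj hjn) hcross i l (by omega) (by omega) hln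
        have h4 : b i * r l ≤ b i * (2 * b l) :=
          mul_le_mul_of_nonneg_left hA (by have := hb i (by omega) (by omega); omega)
        have h6 : r i < 2 * b i := by nlinarith
        have := hstrict i h2 (by omega)
        omega
      rcases Nat.lt_or_ge l 2 with hl2 | hl2
      · -- A-I : l = 1
        have hl1' : l = 1 := by omega
        have hT := tlf x y r b l n (by omega) hrT hbT hflT hcT hxsT hysT (c + y l / 2) hyl2c
        have hys1 : y 1 = y 0 - b 1 := by
          have := hys 1 (by omega) (by omega); simpa using this
        have hyleq : y l = y 1 := by rw [hl1']
        have hb1 := hb 1 (by omega) (by omega)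
        have hlc : (l:ℤ) = 1 := by omega
        omega
      · -- l ≥ 2 : head bound  y 0 - y (l-1) ≥ 2*l - 3
        have hT1 := tele_ge (fun i => -(y i)) 2 1 (l-1) (by omega) (fun i hi hit => by
          have h1 := hys i (by omega) (by omega)
          have h2 := hbi2 i (by omega) (by omega)
          show -(y (i-1)) + 2 ≤ -(y i)
          omega)
        beta_reduce at hT1
        have hy1 : y 1 = y 0 - b 1 := by have := hys 1 (by omega) (by omega); simpa using this
        have hb1 := hb 1 (by omega) (by omega)
        have hylm : y l = y (l-1) - b l := by
          have := hys l (by omega) (by omega)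
          exact this
        have hcast : ((l-1:ℕ):ℤ) = (l:ℤ) - 1 := by omega
        have hcast1 : ((1:ℕ):ℤ) = (1:ℤ) := by norm_num
        rw [hcast, hcast1] at hT1
        -- Shead = y 0 - y l ≥ 2l - 3 + b l
        have hShead : y 0 - y l ≥ 2*(l:ℤ) - 3 + b l := by omega
        rcases le_or_gt 2 (b l) with hbl2 | hbl1
        · -- A-II
          have hT := tlf x y r b l n (by omega) hrT hbT hflT hcT hxsT hysT (c + y l / 2) hyl2c
          omega
        · -- A-III : b l = 1, r l = 2
          have hbl1' : b l = 1 := by omega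
          have hrl2 : r l = 2 := by
            have := hstrict l hl2 hln
            omega
          have hfl2 : ∀ i, l < i → i ≤ n → 2 * b i + 1 ≤ r i := by
            intro i hi hin
            have htr : b i * r l < b l * r i :=
              slopes_transW r b 0 n (fun j hj hjn => hr j hj hjn) hcross l i (by omega) hi hin
            rw [hbl1', hrl2] at htr
            omega
          have hT := tl2 x y r b l n (by omega) hbT hfl2 hxsT hysT (c + y l / 2) hlltn hyl2c
          omega
    · -- Branch B : slope_l < 1/2
      have hcmp : ∀ i, l < i → i ≤ n → r l * b i + 1 ≤ b l * r i := by
        intro i hi hin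
        have htr : b i * r l < b l * r i :=
          slopes_transW r b 0 n (fun j hj hjn => hr j hj hjn) hcross l i (by omega) hi hin
        nlinarith
      have hfl2 : ∀ i, l < i → i ≤ n → 2 * b i + 1 ≤ r i := by
        intro i hi hin
        have h1 := hcmp i hi hin
        have h2 := hb i (by omega) hin
        nlinarith
      -- RLS at l
      have hRLS := rls y r b n hr hb hys hcross l hl1 hln
      rcases le_or_gt 2 (b l) with hbl2 | hbl1
      · -- B-II : b l ≥ 2
        set e : ℤ := (r l + b l - 1) / b l with hedef
        have he1 : e * b l ≤ r l + b l - 1 := by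
          rw [hedef]
          exact Int.ediv_mul_le _ (by omega)
        have he2 : r l ≤ e * b l := by
          have := Int.lt_ediv_add_one_mul_self (r l + b l - 1) (by omega : (0:ℤ) < b l)
          nlinarith
        have hT := tl3a x y r b (r l) (b l) hbl2 hB l n hbT hcmp hfl2 hxsT hysT
          (c + y l / 2) e hlltn hyl2c he1
        -- combine with RLS
        have hylm : y l = y (l-1) - b l := hys l (by omega) (by omega)
        exact bii_arith (b l) (r l) (x l) (y l) e c (n:ℤ) (l:ℤ) (x n) (y 0) (y (l-1))
          hbl2 huw hw he2 hT hRLS (by omega)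
      · -- B-I : b l = 1
        have hbl1' : b l = 1 := by omega
        have hrl3 : 3 ≤ r l := by omega
        have hcmp' : ∀ i, l < i → i ≤ n → r l * b i + 1 ≤ r i := by
          intro i hi hin
          have := hcmp i hi hin
          rw [hbl1'] at this
          omega
        have hT := tl3b x y r b (r l) hrl3 l n hbT hcmp' hxsT hysT (c + y l / 2) hlltn hyl2c
        have hylm : y l = y (l-1) - b l := hys l (by omega) (by omega)
        rw [hbl1'] at hRLS hylm
        -- RLS: 1 * (2l - 1 - (y 0 - y (l-1))) ≤ r l
        have hRLS' : 2*(l:ℤ) - 1 - (y 0 - y (l-1)) ≤ r l := by nlinarith [hRLS]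
        omega
  · -- CASE l = n : both crossings on last edge
    have hleq : l = n := by omega
    subst hleq
    have hxl1 : x (l-1) ≤ -1 := hlx (l-1) (by omega)
    have hy1 : 1 ≤ y (l-1) := by
      by_contra h
      push_neg at h
      nlinarith [hgl, hb l hl1 hln, hr l hl1 hln]
    have hyll : y l = y (l-1) - b l := hys l (by omega) (by omega)
    have hxll : x l = x (l-1) + r l := hxs l (by omega) (by omega)
    rcases Nat.lt_or_ge l 2 with hn1 | hn2
    · -- n = 1
      have hl1' : l = 1 := by omega
      have hy00 : y (l-1) = y 0 := by rw [hl1']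
      have hx00 : x (l-1) = x 0 := by rw [hl1']
      rw [hy00] at hyll hgl hy1
      rw [hx00] at hxll hgl
      have hlc : (l:ℤ) = 1 := by omega
      rw [hlc]
      have hfl : b l ≤ r l := by
        have : b l = b 1 := by rw [hl1']
        have h2 : r l = r 1 := by rw [hl1']
        rw [this, h2]; exact hflat1
      have := n1_arith (b l) (r l) (-(x 0)) c (y 0) hbl hfl (by omega) hy0 (by omega)
        (by have : -(-(x 0)) = x 0 := by ring
            rw [this]; exact hgl) (by omega)
      linarith [this, hxll]
    · -- n = l ≥ 2
      have hrls := rls y r b l hr hb hys hcross l hl1 hln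
      have hstr : b l + 1 ≤ r l := hstrict l hn2 hln
      have := ln_arith (b l) (r l) (-(x (l-1))) (y (l-1)) c (l:ℤ) (y 0)
        hbl hstr (by omega) hy1 (by omega)
        (by have : -(-(x (l-1))) = x (l-1) := by ring
            rw [this]; exact hgl)
        hrls (by omega)
      linarith [this, hxll]
/-- Degenerate mid-config: last edge diagonal-ish slope 1, first edge (1,2). -/
lemma mid5 (x y r b : ℕ → ℤ) (n : ℕ)
    (hn : 2 ≤ n)
    (hr : ∀ i, 1 ≤ i → i ≤ n → 1 ≤ r i)
    (hb : ∀ i, 1 ≤ i → i ≤ n → 1 ≤ b i)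
    (hxs : ∀ i, 1 ≤ i → i ≤ n → x i = x (i-1) + r i)
    (hys : ∀ i, 1 ≤ i → i ≤ n → y i = y (i-1) - b i)
    (hcross : ∀ i, 1 ≤ i → i + 1 ≤ n → b (i+1) * r i < b i * r (i+1))
    (hg1 : 1 ≤ b 1 * x 0 + r 1 * y 0)
    (heq : r n = b n) (hb1 : b 1 = 2) (hx1 : x 1 = 0) (hyn1 : y (n-1) = 0) :
    2*(n:ℤ) + r n - 1 ≤ x n + y 0 := by
  have hr1 : r 1 = 1 := by
    have htr : b n * r 1 < b 1 * r n :=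
      slopes_transW r b 0 n (fun j hj hjn => hr j hj hjn) hcross 1 n (by omega) (by omega) le_rfl
    have h1 := hr 1 (by omega) (by omega)
    have h2 := hb n (by omega) le_rfl
    nlinarith
  have hy1 : y 1 = y 0 - 2 := by
    have := hys 1 (by omega) (by omega); simp at this; omega
  have hg1r : 1 ≤ b 1 * x 1 + r 1 * y 1 := by
    have h1 : x 1 = x 0 + r 1 := by
      have := hxs 1 (by omega) (by omega); simpa using this
    have h2 : y 1 = y 0 - b 1 := by
      have := hys 1 (by omega) (by omega); simpa using this
    calc (1:ℤ) ≤ b 1 * x 0 + r 1 * y 0 := hg1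
      _ = b 1 * x 1 + r 1 * y 1 := by rw [h1, h2]; ring
  rcases Nat.lt_or_ge n 3 with hn2 | hn3
  · -- n = 2 : x 1 = 0 and y 1 = y (n-1) = 0 contradict g1
    have hn2' : n = 2 := by omega
    have hyy : y 1 = 0 := by rw [← hyn1, hn2']
    rw [hx1, hyy] at hg1r
    simp at hg1r
  · have hmid : ∀ i, 2 ≤ i → i ≤ n-1 → 5 ≤ r i + b i := by
      intro i h2 hil
      have htr1 : b n * r i < b i * r n :=
        slopes_transW r b 0 n (fun j hj hjn => hr j hj hjn) hcross i n (by omega) (by omega) le_rfl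
      have htr2 : b i * r 1 < b 1 * r i :=
        slopes_transW r b 0 n (fun j hj hjn => hr j hj hjn) hcross 1 i (by omega) (by omega) (by omega)
      rw [hr1, hb1] at htr2
      have hbn := hb n (by omega) le_rfl
      have h3 : r i < b i := by nlinarith
      have h4 : b i < 2 * r i := by omega
      omega
    have hT := tele_ge (fun i => x i - y i) 5 1 (n-1) (by omega) (fun i hi hit => by
      have h1 := hys i (by omega) (by omega)
      have h2 := hxs i (by omega) (by omega)
      have h3 := hmid i (by omega) (by omega)
      show x (i-1) - y (i-1) + 5 ≤ x i - y i
      omega)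
    beta_reduce at hT
    have hxn : x n = x (n-1) + r n := by
      have h := hxs n (by omega) le_rfl; exact h
    have hc1 : ((n-1:ℕ):ℤ) = (n:ℤ) - 1 := by omega
    have hc2 : ((1:ℕ):ℤ) = (1:ℤ) := by norm_num
    rw [hc1, hc2] at hT
    omega
/-- Case I: first-quadrant configuration (k = n, l = 1, b 1 ≥ 2). -/
lemma casei (x y r b : ℕ → ℤ) (n : ℕ)
    (hn : 2 ≤ n)
    (hr : ∀ i, 1 ≤ i → i ≤ n → 1 ≤ r i)
    (hb : ∀ i, 1 ≤ i → i ≤ n → 1 ≤ b i)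
    (hxs : ∀ i, 1 ≤ i → i ≤ n → x i = x (i-1) + r i)
    (hys : ∀ i, 1 ≤ i → i ≤ n → y i = y (i-1) - b i)
    (hcross : ∀ i, 1 ≤ i → i + 1 ≤ n → b (i+1) * r i < b i * r (i+1))
    (hy0 : 1 ≤ y 0)
    (hyab : ∀ j, j < n → 0 ≤ y j) (hyn : y n ≤ -1)
    (hx1 : 0 ≤ x 1)
    (hb1 : 2 ≤ b 1)
    (hg1 : 1 ≤ b 1 * x 0 + r 1 * y 0)
    (hgn : 1 ≤ b n * x (n-1) + r n * y (n-1)) :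
    (2*(n:ℤ) ≤ x n + y 0) ∧
    (b n ≤ r n → ∀ c : ℤ, (2*c ≤ 1 - y n ∨ (2*c ≤ 2 - y n ∧ r n ≠ 2 * b n)) →
      2*(n:ℤ) + c ≤ x n + y 0 + 1) := by
  have hy1 : 0 ≤ y 1 := hyab 1 (by omega)
  have hyn1 : 0 ≤ y (n-1) := hyab (n-1) (by omega)
  have hbn := hb n (by omega) le_rfl
  have hrn := hr n (by omega) le_rfl
  have hr1 := hr 1 (by omega) (by omega)
  have hxn : x n = x (n-1) + r n := hxs n (by omega) le_rfl
  have hynn : y n = y (n-1) - b n := hys n (by omega) le_rfl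
  have hy1' : y 1 = y 0 - b 1 := by
    have := hys 1 (by omega) (by omega); simpa using this
  have hg1r : 1 ≤ b 1 * x 1 + r 1 * y 1 := by
    have h1 : x 1 = x 0 + r 1 := by
      have := hxs 1 (by omega) (by omega); simpa using this
    calc (1:ℤ) ≤ b 1 * x 0 + r 1 * y 0 := hg1
      _ = b 1 * x 1 + r 1 * y 1 := by rw [h1, hy1']; ring
  -- middle telescope
  have hM := tele_ge (fun i => x i - y i) 2 1 (n-1) (by omega) (fun i hi hit => by
    have h1 := hys i (by omega) (by omega)
    have h2 := hxs i (by omega) (by omega)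
    have h3 := hr i (by omega) (by omega)
    have h4 := hb i (by omega) (by omega)
    show x (i-1) - y (i-1) + 2 ≤ x i - y i
    omega)
  beta_reduce at hM
  have hc1 : ((n-1:ℕ):ℤ) = (n:ℤ) - 1 := by omega
  have hc2 : ((1:ℕ):ℤ) = (1:ℤ) := by norm_num
  rw [hc1, hc2] at hM
  -- hM : x 1 - y 1 + 2*((n-1) - 1) ≤ x (n-1) - y (n-1)
  have hx1y : 1 ≤ x 1 + y 1 := by
    rcases le_or_gt 1 (y 1) with h | h
    · omega
    · have : y 1 = 0 := by omega
      rw [this] at hg1r; nlinarith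
  constructor
  · -- G1
    rcases le_or_gt 2 (r n) with h2 | h2
    · omega
    · have hrn1 : r n = 1 := by omega
      have htr : b n * r 1 < b 1 * r n :=
        slopes_transW r b 0 n (fun j hj hjn => hr j hj hjn) hcross 1 n (by omega) (by omega) le_rfl
      rcases le_or_gt 2 (b n) with hb2 | hb2
      · -- b 1 ≥ 3
        have hb13 : 3 ≤ b 1 := by nlinarith
        omega
      · have hbn1 : b n = 1 := by omega
        rcases le_or_gt 3 (b 1) with hb13 | hb12
        · omega
        · have hb12' : b 1 = 2 := by omega
          rcases le_or_gt 1 (x 1 + y (n-1)) with hxy | hxy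
          · omega
          · have hx10 : x 1 = 0 := by omega
            have hyn10 : y (n-1) = 0 := by omega
            have := mid5 x y r b n hn hr hb hxs hys hcross hg1 (by omega) hb12' hx10 hyn10
            omega
  · -- G2
    intro hflat c hcc
    have hcbound : 2*c ≤ 2 - y n := by rcases hcc with h | ⟨h, _⟩ <;> omega
    -- r n ≥ b n = y (n-1) - y n
    rcases le_or_gt 1 (x 1) with hx11 | hx11
    · omega
    · have hx10 : x 1 = 0 := by omega
      have hy11 : 1 ≤ y 1 := by
        by_contra h
        push_neg at h
        have : y 1 = 0 := by omega
        rw [hx10, this] at hg1r; nlinarith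
      rcases le_or_gt 1 (y (n-1)) with hyy | hyy
      · omega
      · have hyn10 : y (n-1) = 0 := by omega
        -- b n = -y n = D
        rcases le_or_gt (c+1) (r n) with hok | hbad
        · -- r n ≥ c + 1 : need b1 + rn ≥ c + 3, b1 ≥ 2
          omega
        · -- r n ≤ c : forces r n = b n ≤ 2 and c = r n
          have hbb : b n = - y n := by omega
          have hkey : r n = b n ∧ c = r n := by omega
          rcases le_or_gt 3 (b 1) with h3 | h3
          · omega
          · have hb12' : b 1 = 2 := by omega
            have := mid5 x y r b n hn hr hb hxs hys hcross hg1 hkey.1 hb12' hx10 hyn10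
            omega
/-- Main theorem, internal form: strong induction with peeling. -/
lemma main_lemma : ∀ n : ℕ, 1 ≤ n → ∀ x y r b : ℕ → ℤ, ∀ k l : ℕ,
    (∀ i, 1 ≤ i → i ≤ n → 1 ≤ r i) →
    (∀ i, 1 ≤ i → i ≤ n → 1 ≤ b i) →
    (∀ i, 1 ≤ i → i ≤ n → x i = x (i-1) + r i) →
    (∀ i, 1 ≤ i → i ≤ n → y i = y (i-1) - b i) →
    (∀ i, 1 ≤ i → i + 1 ≤ n → b (i+1) * r i < b i * r (i+1)) →
    x 0 ≤ -1 → 1 ≤ y 0 → 1 ≤ x n → y n ≤ -1 →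
    ∀ (hk1 : 1 ≤ k) (hkn : k ≤ n) (hyk : y k ≤ -1) (hky : ∀ j, j < k → 0 ≤ y j)
      (hl1 : 1 ≤ l) (hln : l ≤ n) (hxl : 0 ≤ x l) (hlx : ∀ j, j < l → x j ≤ -1)
      (hlk : l ≤ k)
      (hgk : 1 ≤ b k * x (k-1) + r k * y (k-1))
      (hgl : 1 ≤ b l * x (l-1) + r l * y (l-1)),
    (2*(n:ℤ) ≤ x n + y 0) ∧
    (b k ≤ r k → ∀ c : ℤ, 2*c ≤ 1 - y n → 2*(n:ℤ) + c ≤ x n + y 0 + 1) ∧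
    (b k ≤ r k → (∀ i, k ≤ i → i ≤ n → r i ≠ 2 * b i) →
      ∀ c : ℤ, 2*c ≤ 2 - y n → 2*(n:ℤ) + c ≤ x n + y 0 + 1) := by
  intro n
  induction n using Nat.strong_induction_on with
  | _ n IH =>
  intro hn x y r b k l hr hb hxs hys hcross hx0 hy0 hxn hyn
    hk1 hkn hyk hky hl1 hln hxl hlx hlk hgk hgl
  -- generic monotonicity
  have hxmono : ∀ s t : ℕ, s ≤ t → t ≤ n → x s ≤ x t := by
    intro s t hst htn
    have h := tele_ge x 1 s t hst (fun i hi hit => by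
      have h1 := hxs i (by omega) (by omega)
      have h2 := hr i (by omega) (by omega)
      omega)
    have : (0:ℤ) ≤ (t:ℤ) - (s:ℤ) := by omega
    nlinarith
  have hymono : ∀ s t : ℕ, s ≤ t → t ≤ n → y t ≤ y s := by
    intro s t hst htn
    have h := tele_ge (fun i => -(y i)) 1 s t hst (fun i hi hit => by
      have h1 := hys i (by omega) (by omega)
      have h2 := hb i (by omega) (by omega)
      show -(y (i-1)) + 1 ≤ -(y i)
      omega)
    beta_reduce at h
    have : (0:ℤ) ≤ (t:ℤ) - (s:ℤ) := by omega
    nlinarith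
  -- g_k and g_l at right endpoints
  have hgkr : 1 ≤ b k * x k + r k * y k := by
    have h1 := hxs k hk1 hkn
    have h2 := hys k hk1 hkn
    calc (1:ℤ) ≤ b k * x (k-1) + r k * y (k-1) := hgk
      _ = b k * x k + r k * y k := by rw [h1, h2]; ring
  have hglr : 1 ≤ b l * x l + r l * y l := by
    have h1 := hxs l hl1 hln
    have h2 := hys l hl1 hln
    calc (1:ℤ) ≤ b l * x (l-1) + r l * y (l-1) := hgl
      _ = b l * x l + r l * y l := by rw [h1, h2]; ring
  have hxk1 : 1 ≤ x k := by
    have h1 := hb k hk1 hkn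
    have h2 := hr k hk1 hkn
    nlinarith
  -- case n = 1
  rcases Nat.lt_or_ge n 2 with hn1 | hn2
  · have hne : n = 1 := by omega
    subst hne
    have hk' : k = 1 := by omega
    have hl' : l = 1 := by omega
    subst hk'
    subst hl'
    refine ⟨by omega, ?_, ?_⟩
    · intro hbk c hc
      have hC := cii x y r b 1 1 le_rfl hr hb hxs hys hcross hbk hx0 hy0
        (fun j hj => by interval_cases j; omega)
        hyn le_rfl le_rfl
        (fun j hj => by interval_cases j; exact hx0)
        hxl hgl hgk (c - 1) (by omega)
      omega
    · intro hbk _ c hc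
      have hC := cii x y r b 1 1 le_rfl hr hb hxs hys hcross hbk hx0 hy0
        (fun j hj => by interval_cases j; omega)
        hyn le_rfl le_rfl
        (fun j hj => by interval_cases j; exact hx0)
        hxl hgl hgk (c - 1) (by omega)
      omega
  -- n ≥ 2
  by_cases hpeelR : k ≤ n - 1 ∧ 2 ≤ r n
  · -- PEEL RIGHT
    obtain ⟨hkn1, hrn2⟩ := hpeelR
    have hxnn : x n = x (n-1) + r n := by
      have := hxs n (by omega) le_rfl; exact this
    have hynn : y n = y (n-1) - b n := by
      have := hys n (by omega) le_rfl; exact this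
    have hbnn := hb n (by omega) le_rfl
    obtain ⟨C1', C2', C3'⟩ := IH (n-1) (by omega) (by omega) x y r b k l
      (fun i hi hin => hr i hi (by omega)) (fun i hi hin => hb i hi (by omega))
      (fun i hi hin => hxs i hi (by omega)) (fun i hi hin => hys i hi (by omega))
      (fun i hi hin => hcross i hi (by omega))
      hx0 hy0
      (by have := hxmono k (n-1) hkn1 (by omega); omega)
      (by have := hymono k (n-1) hkn1 (by omega); omega)
      hk1 hkn1 hyk hky hl1 (by omega) hxl hlx hlk hgk hgl
    have hknlt : k < n := by omega
    refine ⟨?_, ?_, ?_⟩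
    · push_cast at C1' ⊢; omega
    · intro hbk c hc
      -- edge n is strictly flat
      have hflatn : b n + 1 ≤ r n := by
        have htr : b n * r k < b k * r n :=
          slopes_transW r b 0 n (fun j hj hjn => hr j hj hjn) hcross k n hk1 hknlt le_rfl
        have h2 : b k * r n ≤ r k * r n :=
          mul_le_mul_of_nonneg_right hbk (by have := hr n (by omega) le_rfl; omega)
        have h3 := hr k hk1 hkn
        nlinarith
      rcases le_or_gt 2 (b n) with hbn2 | hbn1
      · have h := C2' hbk (c - (b n + 1) / 2) (by omega)
        push_cast at h ⊢
        omega
      · have hbn1' : b n = 1 := by omega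
        rcases le_or_gt 3 (r n) with hrn3 | hrn2'
        · have h := C2' hbk (c - 1) (by omega)
          push_cast at h ⊢
          omega
        · have hrn2'' : r n = 2 := by omega
          rcases le_or_gt (2*c) (-(y n)) with hpar | hpar
          · have h := C2' hbk c (by omega)
            push_cast at h ⊢
            omega
          · -- 2c = 1 - y n : use C3'
            have hfree : ∀ i, k ≤ i → i ≤ n-1 → r i ≠ 2 * b i := by
              intro i hik hin
              have htr : b n * r i < b i * r n :=
                slopes_transW r b 0 n (fun j hj hjn => hr j hj hjn) hcross i n (by omega)
                  (by omega) le_rfl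
              rw [hbn1', hrn2''] at htr
              omega
            have h := C3' hbk hfree c (by omega)
            push_cast at h ⊢
            omega
    · intro hbk hfree c hc
      have hflatn : b n + 1 ≤ r n := by
        have htr : b n * r k < b k * r n :=
          slopes_transW r b 0 n (fun j hj hjn => hr j hj hjn) hcross k n hk1 hknlt le_rfl
        have h2 : b k * r n ≤ r k * r n :=
          mul_le_mul_of_nonneg_right hbk (by have := hr n (by omega) le_rfl; omega)
        have h3 := hr k hk1 hkn
        nlinarith
      have hfree' : ∀ i, k ≤ i → i ≤ n-1 → r i ≠ 2 * b i :=
        fun i hik hin => hfree i hik (by omega)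
      rcases le_or_gt 2 (b n) with hbn2 | hbn1
      · have h := C3' hbk hfree' (c - (b n + 1) / 2) (by omega)
        push_cast at h ⊢
        omega
      · have hbn1' : b n = 1 := by omega
        have hrn3 : 3 ≤ r n := by
          have := hfree n hkn le_rfl
          omega
        have h := C3' hbk hfree' (c - 1) (by omega)
        push_cast at h ⊢
        omega
  · by_cases hpeelL : 2 ≤ l ∧ 2 ≤ b 1
    · -- PEEL LEFT
      obtain ⟨hl2, hb12⟩ := hpeelL
      have hk2 : 2 ≤ k := by omega
      have hy1pos : 1 ≤ y 1 := by
        have h0 : 0 ≤ y 1 := hky 1 (by omega)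
        by_contra h
        push_neg at h
        have hy1z : y 1 = 0 := by omega
        -- then y 2 < 0 so k = 2, but x 1 ≤ -1 contradicts g_k
        have hy2 : y 2 = y 1 - b 2 := by
          have := hys 2 (by omega) (by omega); norm_num at this; exact this
        have hk2' : k = 2 := by
          by_contra hk2'
          have : 2 < k := by omega
          have := hky 2 this
          have := hb 2 (by omega) (by omega)
          omega
        have hx1 : x 1 ≤ -1 := hlx 1 (by omega)
        rw [hk2'] at hgk
        norm_num at hgk
        rw [hy1z] at hgk
        nlinarith [hb 2 (by omega) (by omega)]
      obtain ⟨C1', C2', C3'⟩ := IH (n-1) (by omega) (by omega)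
        (fun i => x (i+1)) (fun i => y (i+1)) (fun i => r (i+1)) (fun i => b (i+1))
        (k-1) (l-1)
        (fun i hi hin => hr (i+1) (by omega) (by omega))
        (fun i hi hin => hb (i+1) (by omega) (by omega))
        (fun i hi hin => by
          have h := hxs (i+1) (by omega) (by omega)
          have e : i - 1 + 1 = i := by omega
          show x (i+1) = x (i-1+1) + r (i+1)
          rw [e]
          simpa using h)
        (fun i hi hin => by
          have h := hys (i+1) (by omega) (by omega)
          have e : i - 1 + 1 = i := by omega
          show y (i+1) = y (i-1+1) - b (i+1)
          rw [e]
          simpa using h)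
        (fun i hi hin => hcross (i+1) (by omega) (by omega))
        (hlx 1 (by omega)) hy1pos
        (by have e : n - 1 + 1 = n := by omega
            show 1 ≤ x (n-1+1); rw [e]; exact hxn)
        (by have e : n - 1 + 1 = n := by omega
            show y (n-1+1) ≤ -1; rw [e]; exact hyn)
        (by omega) (by omega)
        (by have e : k - 1 + 1 = k := by omega
            show y (k-1+1) ≤ -1; rw [e]; exact hyk)
        (fun j hj => hky (j+1) (by omega))
        (by omega) (by omega)
        (by have e : l - 1 + 1 = l := by omega
            show 0 ≤ x (l-1+1); rw [e]; exact hxl)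
        (fun j hj => hlx (j+1) (by omega))
        (by omega)
        (by have e1 : k - 1 - 1 + 1 = k - 1 := by omega
            show 1 ≤ b (k-1+1) * x (k-1-1+1) + r (k-1+1) * y (k-1-1+1)
            have e2 : k - 1 + 1 = k := by omega
            rw [e1, e2]
            exact hgk)
        (by have e1 : l - 1 - 1 + 1 = l - 1 := by omega
            show 1 ≤ b (l-1+1) * x (l-1-1+1) + r (l-1+1) * y (l-1-1+1)
            have e2 : l - 1 + 1 = l := by omega
            rw [e1, e2]
            exact hgl)
      have hen : n - 1 + 1 = n := by omega
      have hek : k - 1 + 1 = k := by omega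
      rw [hen] at C1' C2' C3'
      rw [hek] at C2' C3'
      have hy1' : y 1 = y 0 - b 1 := by
        have := hys 1 (by omega) (by omega); simpa using this
      refine ⟨?_, ?_, ?_⟩
      · push_cast at C1' ⊢; omega
      · intro hbk c hc
        have h := C2' hbk c (by omega)
        push_cast at h ⊢
        omega
      · intro hbk hfree c hc
        have h := C3' hbk (fun i hik hin => hfree (i+1) (by omega) (by omega)) c (by omega)
        push_cast at h ⊢
        omega
    · -- IRREDUCIBLE
      push_neg at hpeelR hpeelL
      rcases le_or_gt (b 1) 1 with hb11 | hb12
      · -- ALL FLAT : b 1 = 1, k = n, use cii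
        have hb11' : b 1 = 1 := by
          have := hb 1 (by omega) (by omega); omega
        have hkeqn : k = n := by
          by_contra hknn
          have hkn1 : k ≤ n - 1 := by omega
          have hrn1 : r n ≤ 1 := by have := hpeelR hkn1; omega
          have htr : b n * r 1 < b 1 * r n :=
            slopes_transW r b 0 n (fun j hj hjn => hr j hj hjn) hcross 1 n (by omega)
              (by omega) le_rfl
          rw [hb11'] at htr
          nlinarith [hb n (by omega) le_rfl, hr 1 (by omega) (by omega),
            hr n (by omega) le_rfl]
        have hC := cii x y r b n l hn hr hb hxs hys hcross
          (by rw [hb11']; exact hr 1 (by omega) (by omega))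
          hx0 hy0 (fun j hj => hky j (by omega)) hyn hl1 hln hlx hxl hgl
          (by rw [← hkeqn]; exact hgk)
        refine ⟨hC 0 (by omega), ?_, ?_⟩
        · intro hbk c hc
          have := hC (c-1) (by omega)
          omega
        · intro hbk _ c hc
          have := hC (c-1) (by omega)
          omega
      · -- b 1 ≥ 2 so l = 1
        have hleq1 : l = 1 := by
          have := hpeelL
          omega
        rcases Nat.eq_or_lt_of_le hkn with hkeqn | hklt
        · -- k = n : CASE I
          have hCI := casei x y r b n hn2 hr hb hxs hys hcross hy0
            (by rw [← hkeqn]; exact hky) (by rw [← hkeqn]; exact hyk)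
            (by rw [← hleq1]; exact hxl) hb12
            (by have h := hgl; rw [hleq1] at h; simpa using h)
            (by rw [← hkeqn]; exact hgk)
          refine ⟨hCI.1, ?_, ?_⟩
          · intro hbk c hc
            exact hCI.2 (by rw [← hkeqn]; exact hbk) c (Or.inl hc)
          · intro hbk hfree c hc
            refine hCI.2 (by rw [← hkeqn]; exact hbk) c (Or.inr ⟨hc, ?_⟩)
            have := hfree n hkn le_rfl
            exact this
        · -- k < n and r n = 1 : ALL STEEP, mirror cii
          have hrn1 : r n = 1 := by
            have := hpeelR (by omega)
            have := hr n (by omega) le_rfl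
            omega
          have hsteepk : r k < b k := by
            have htr : b n * r k < b k * r n :=
              slopes_transW r b 0 n (fun j hj hjn => hr j hj hjn) hcross k n hk1 hklt le_rfl
            rw [hrn1] at htr
            nlinarith [hb n (by omega) le_rfl, hr k hk1 hkn]
          have hC1 : 2*(n:ℤ) ≤ x n + y 0 := by
            -- mirror configuration
            have hC := cii (fun i => y (n - i)) (fun i => x (n - i))
              (fun i => b (n+1-i)) (fun i => r (n+1-i)) n (n+1-k) hn
              (fun i hi hin => hb (n+1-i) (by omega) (by omega))
              (fun i hi hin => hr (n+1-i) (by omega) (by omega))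
              (fun i hi hin => by
                have h := hys (n+1-i) (by omega) (by omega)
                have e1 : n - (i-1) = n+1-i := by omega
                have e2 : n+1-i-1 = n - i := by omega
                show y (n-i) = y (n-(i-1)) + b (n+1-i)
                rw [e1]
                rw [e2] at h
                omega)
              (fun i hi hin => by
                have h := hxs (n+1-i) (by omega) (by omega)
                have e1 : n - (i-1) = n+1-i := by omega
                have e2 : n+1-i-1 = n - i := by omega
                show x (n-i) = x (n-(i-1)) - r (n+1-i)
                rw [e1]
                rw [e2] at h
                omega)
              (fun i hi hin => by
                have h := hcross (n-i) (by omega) (by omega)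
                have e1 : n+1-(i+1) = n-i := by omega
                have e2 : n - i + 1 = n+1-i := by omega
                show r (n+1-(i+1)) * b (n+1-i) < r (n+1-i) * b (n+1-(i+1))
                rw [e1]
                rw [e2] at h
                nlinarith [h])
              (by show r (n+1-1) ≤ b (n+1-1)
                  have e : n+1-1 = n := by omega
                  rw [e, hrn1]
                  exact hb n (by omega) le_rfl)
              (by show y (n-0) ≤ -1; simpa using hyn)
              (by show 1 ≤ x (n-0); simpa using hxn)
              (fun j hj => by
                show 0 ≤ x (n-j)
                have h1 : 0 ≤ x 1 := by rw [← hleq1]; exact hxl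
                have := hxmono 1 (n-j) (by omega) (by omega)
                omega)
              (by show x (n-n) ≤ -1; simpa using hx0)
              (by omega) (by omega)
              (fun j hj => by
                show y (n-j) ≤ -1
                have := hymono k (n-j) (by omega) (by omega)
                omega)
              (by show 0 ≤ y (n - (n+1-k))
                  have e : n - (n+1-k) = k-1 := by omega
                  rw [e]
                  exact hky (k-1) (by omega))
              (by show 1 ≤ r (n+1-(n+1-k)) * y (n-(n+1-k-1)) + b (n+1-(n+1-k)) * x (n-(n+1-k-1))
                  have e1 : n+1-(n+1-k) = k := by omega
                  have e2 : n-(n+1-k-1) = k := by omega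
                  rw [e1, e2]
                  linarith [hgkr])
              (by show 1 ≤ r (n+1-n) * y (n-(n-1)) + b (n+1-n) * x (n-(n-1))
                  have e1 : n+1-n = 1 := by omega
                  have e2 : n-(n-1) = 1 := by omega
                  rw [e1, e2]
                  have := hglr
                  rw [hleq1] at this
                  linarith)
              0 (by simp; omega)
            have e1 : n - n = 0 := by omega
            have e2 : n - 0 = n := by omega
            simp only [e1, e2] at hC
            omega
          refine ⟨hC1, ?_, ?_⟩
          · intro hbk c hc
            exact absurd hbk (by omega)
          · intro hbk _ c hc
            exact absurd hbk (by omega)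
lemma indep_basis (f₁ f₂ : ℤ × ℤ) (hbasis : IsZBasis f₁ f₂) (s t : ℤ)
    (h : s • f₁ + t • f₂ = 0) : s = 0 ∧ t = 0 := by
  have h1 : s * f₁.1 + t * f₂.1 = 0 := by
    have := congrArg Prod.fst h
    simpa [Prod.smul_def] using this
  have h2 : s * f₁.2 + t * f₂.2 = 0 := by
    have := congrArg Prod.snd h
    simpa [Prod.smul_def] using this
  have hs : s * (f₁.1 * f₂.2 - f₁.2 * f₂.1) = 0 := by linear_combination f₂.2 * h1 - f₂.1 * h2
  have ht : t * (f₁.1 * f₂.2 - f₁.2 * f₂.1) = 0 := by linear_combination f₁.1 * h2 - f₁.2 * h1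
  rcases hbasis with hd | hd <;> rw [hd] at hs ht <;> constructor <;> omega



/-- Corollary: if an integer frame splits an integer slope with `N` edges and endpoint frame
coordinates `(v₁, v₂)` (with `v₁ < 0 < v₂`) and `(w₁, w₂)` (with `w₂ < 0 < w₁`), then
`2N ≤ v₂ + w₁`; and if the frame forms small angle with the slope
(`α = (a k).1 / (-(a k).2) ≥ 1`, `k` the least index with `(c k).2 < 0`), then
`2N ≤ v₂ + w₁ - ⌈(-w₂)/2⌉ + 1`. -/
theorem stmt11 (o f₁ f₂ : ℤ × ℤ) (hbasis : IsZBasis f₁ f₂)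
    (N : ℕ) (hN : 1 ≤ N) (v a c : ℕ → ℤ × ℤ)
    (hslope : IsIntSlope f₁ f₂ N v a)
    (hcoords : FrameCoords o f₁ f₂ N v c)
    (hsplit : FrameSplits N c)
    (k : ℕ) (hkN : k ≤ N) (hk : (c k).2 < 0 ∧ ∀ j < k, 0 ≤ (c j).2) :
    2 * (N : ℤ) ≤ (c 0).2 + (c N).1 ∧
    (1 ≤ ((a k).1 : ℝ) / (-((a k).2 : ℝ)) →
      2 * (N : ℤ) ≤ (c 0).2 + (c N).1 - ⌈(-((c N).2 : ℚ)) / 2⌉ + 1) := by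
  obtain ⟨hstep, hpos, hturn⟩ := hslope
  obtain ⟨hc01, hc02, hcN1, hcN2, isp, hi1, hiN, lam, hlam0, hlam1, hq1, hq2⟩ := hsplit
  -- set up integer sequences
  set x : ℕ → ℤ := fun i => (c i).1 with hxdef
  set y : ℕ → ℤ := fun i => (c i).2 with hydef
  set r : ℕ → ℤ := fun i => (a i).1 with hrdef
  set b : ℕ → ℤ := fun i => -((a i).2) with hbdef
  -- step relations
  have hstepc : ∀ i, 1 ≤ i → i ≤ N → (c i).1 = (c (i-1)).1 + (a i).1 ∧
      (c i).2 = (c (i-1)).2 + (a i).2 := by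
    intro i h1 hiN'
    have hv1 := hcoords i hiN'
    have hv0 := hcoords (i-1) (by omega)
    have hvd := hstep i h1 hiN'
    have key : ((c i).1 - (c (i-1)).1 - (a i).1) • f₁ +
        ((c i).2 - (c (i-1)).2 - (a i).2) • f₂ = 0 := by
      have : v i - v (i-1) = ((c i).1 - (c (i-1)).1) • f₁ + ((c i).2 - (c (i-1)).2) • f₂ := by
        rw [hv1, hv0]
        ext <;> simp [Prod.smul_def] <;> ring
      rw [hvd] at this
      have h2 : ((c i).1 - (c (i-1)).1) • f₁ + ((c i).2 - (c (i-1)).2) • f₂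
          - ((a i).1 • f₁ + (a i).2 • f₂) = 0 := by rw [← this]; abel
      rw [← h2]
      ext <;> simp [Prod.smul_def] <;> ring
    have := indep_basis f₁ f₂ hbasis _ _ key
    constructor <;> omega
  have hxs : ∀ i, 1 ≤ i → i ≤ N → x i = x (i-1) + r i := fun i h1 h2 => (hstepc i h1 h2).1
  have hys : ∀ i, 1 ≤ i → i ≤ N → y i = y (i-1) - b i := by
    intro i h1 h2
    have := (hstepc i h1 h2).2
    simp only [hydef, hbdef]
    omega
  have hr : ∀ i, 1 ≤ i → i ≤ N → 1 ≤ r i := by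
    intro i h1 h2; have := (hpos i h1 h2).1; simp only [hrdef]; omega
  have hb : ∀ i, 1 ≤ i → i ≤ N → 1 ≤ b i := by
    intro i h1 h2; have := (hpos i h1 h2).2; simp only [hbdef]; omega
  have hcross : ∀ i, 1 ≤ i → i + 1 ≤ N → b (i+1) * r i < b i * r (i+1) := by
    intro i h1 h2
    have := hturn i h1 h2
    simp only [hrdef, hbdef]
    nlinarith [this]
  have hx0 : x 0 ≤ -1 := by simp only [hxdef]; omega
  have hy0 : 1 ≤ y 0 := by simp only [hydef]; omega
  have hxn : 1 ≤ x N := by simp only [hxdef]; omega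
  have hyn : y N ≤ -1 := by simp only [hydef]; omega
  have hk1 : 1 ≤ k := by
    rcases Nat.eq_zero_or_pos k with h | h
    · rw [h] at hk; omega
    · omega
  have hyk : y k ≤ -1 := by simp only [hydef]; omega
  have hky : ∀ j, j < k → 0 ≤ y j := fun j hj => hk.2 j hj
  -- monotonicity helpers
  have hxmono : ∀ s t : ℕ, s ≤ t → t ≤ N → x s ≤ x t := by
    intro s t hst htn
    have h := tele_ge x 1 s t hst (fun i hi hit => by
      have h1 := hxs i (by omega) (by omega)
      have h2 := hr i (by omega) (by omega)
      omega)
    have : (0:ℤ) ≤ (t:ℤ) - (s:ℤ) := by omega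
    nlinarith
  have hymono : ∀ s t : ℕ, s ≤ t → t ≤ N → y t ≤ y s := by
    intro s t hst htn
    have h := tele_ge (fun i => -(y i)) 1 s t hst (fun i hi hit => by
      have h1 := hys i (by omega) (by omega)
      have h2 := hb i (by omega) (by omega)
      show -(y (i-1)) + 1 ≤ -(y i)
      omega)
    beta_reduce at h
    have : (0:ℤ) ≤ (t:ℤ) - (s:ℤ) := by omega
    nlinarith
  -- construct l
  have hPN : 0 ≤ x N := by omega
  have hex : ∃ i, 0 ≤ x i := ⟨N, hPN⟩
  set l : ℕ := Nat.find hex with hldef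
  have hxl : 0 ≤ x l := Nat.find_spec hex
  have hlx : ∀ j, j < l → x j ≤ -1 := by
    intro j hj
    have := Nat.find_min hex hj
    omega
  have hln : l ≤ N := Nat.find_min' hex hPN
  have hl1 : 1 ≤ l := by
    rcases Nat.eq_zero_or_pos l with h | h
    · exfalso; rw [h] at hxl; omega
    · omega
  -- the lam-point coordinates
  have hq1' : (0:ℝ) < (1 - lam) * ((x (isp-1) : ℤ) : ℝ) + lam * ((x isp : ℤ) : ℝ) := hq1
  have hq2' : (0:ℝ) < (1 - lam) * ((y (isp-1) : ℤ) : ℝ) + lam * ((y isp : ℤ) : ℝ) := hq2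
  have hconvex_le : ∀ (A B : ℤ), A ≤ B →
      (1 - lam) * (A : ℝ) + lam * (B : ℝ) ≤ (B : ℝ) := by
    intro A B hAB
    have hA : (A:ℝ) ≤ B := by exact_mod_cast hAB
    nlinarith
  have hconvex_le' : ∀ (A B : ℤ), B ≤ A →
      (1 - lam) * (A : ℝ) + lam * (B : ℝ) ≤ (A : ℝ) := by
    intro A B hAB
    have hA : (B:ℝ) ≤ A := by exact_mod_cast hAB
    nlinarith
  -- g_k ≥ 1
  have hgk : 1 ≤ b k * x (k-1) + r k * y (k-1) := by
    rcases lt_trichotomy isp k with hik | hik | hik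
    · -- isp ≤ k - 1 : x isp ≥ 1, y (k-1) ≥ 0
      have hxisp : 1 ≤ x isp := by
        have hmono : x (isp - 1) ≤ x isp := hxmono (isp-1) isp (by omega) (by omega)
        have := hconvex_le (x (isp-1)) (x isp) hmono
        have hpos : (0:ℝ) < ((x isp : ℤ) : ℝ) := lt_of_lt_of_le hq1' this
        exact_mod_cast Int.cast_pos.mp hpos
      have hxk1 : 1 ≤ x (k-1) := le_trans hxisp (hxmono isp (k-1) (by omega) (by omega))
      have hyk1 : 0 ≤ y (k-1) := hky (k-1) (by omega)
      nlinarith [hb k hk1 hkN, hr k hk1 hkN]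
    · -- isp = k : g is constant along the edge
      subst hik
      have hgconst : b isp * x (isp-1) + r isp * y (isp-1) = b isp * x isp + r isp * y isp := by
        have h1 := hxs isp (by omega) (by omega)
        have h2 := hys isp (by omega) (by omega)
        rw [h1, h2]; ring
      have hreal : (0:ℝ) < ((b isp * x (isp-1) + r isp * y (isp-1) : ℤ) : ℝ) := by
        have hbr : (0:ℝ) < ((b isp : ℤ) : ℝ) := by
          have := hb isp (by omega) (by omega)
          exact_mod_cast by omega
        have hrr : (0:ℝ) < ((r isp : ℤ) : ℝ) := by
          have := hr isp (by omega) (by omega)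
          exact_mod_cast by omega
        have key : ((b isp * x (isp-1) + r isp * y (isp-1) : ℤ) : ℝ) =
            ((b isp : ℤ):ℝ) * ((1 - lam) * ((x (isp-1) : ℤ):ℝ) + lam * ((x isp : ℤ):ℝ)) +
            ((r isp : ℤ):ℝ) * ((1 - lam) * ((y (isp-1) : ℤ):ℝ) + lam * ((y isp : ℤ):ℝ)) := by
          have hg2 : ((b isp * x isp + r isp * y isp : ℤ) : ℝ) =
              ((b isp * x (isp-1) + r isp * y (isp-1) : ℤ) : ℝ) := by
            exact_mod_cast hgconst.symm
          push_cast at hg2 ⊢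
          nlinarith [hg2]
        rw [key]
        nlinarith [mul_pos hbr hq1', mul_pos hrr hq2']
      exact_mod_cast Int.cast_pos.mp hreal
    · -- isp > k : contradiction, q2 ≤ y (isp-1) ≤ y k ≤ -1
      exfalso
      have hmono : y isp ≤ y (isp-1) := hymono (isp-1) isp (by omega) (by omega)
      have := hconvex_le' (y (isp-1)) (y isp) hmono
      have h2 : (0:ℝ) < ((y (isp-1) : ℤ) : ℝ) := lt_of_lt_of_le hq2' this
      have h3 : 1 ≤ y (isp - 1) := Int.cast_pos.mp h2
      have h4 : y (isp-1) ≤ y k := hymono k (isp-1) (by omega) (by omega)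
      omega
  -- g_l ≥ 1
  have hgl : 1 ≤ b l * x (l-1) + r l * y (l-1) := by
    have hgconst : b l * x (l-1) + r l * y (l-1) = b l * x l + r l * y l := by
      have h1 := hxs l (by omega) (by omega)
      have h2 := hys l (by omega) (by omega)
      rw [h1, h2]; ring
    rcases lt_trichotomy isp l with hil | hil | hil
    · -- isp ≤ l - 1 : q1 < 0, contradiction
      exfalso
      have hmono : x (isp-1) ≤ x isp := hxmono (isp-1) isp (by omega) (by omega)
      have := hconvex_le (x (isp-1)) (x isp) hmono
      have hpos : (0:ℝ) < ((x isp : ℤ) : ℝ) := lt_of_lt_of_le hq1' this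
      have h3 : 1 ≤ x isp := Int.cast_pos.mp hpos
      have h4 := hlx isp (by omega)
      omega
    · -- isp = l : const argument
      have hgconst2 : b isp * x (isp-1) + r isp * y (isp-1) = b isp * x isp + r isp * y isp := by
        have h1 := hxs isp (by omega) (by omega)
        have h2 := hys isp (by omega) (by omega)
        rw [h1, h2]; ring
      have hreal : (0:ℝ) < ((b isp * x (isp-1) + r isp * y (isp-1) : ℤ) : ℝ) := by
        have hbr : (0:ℝ) < ((b isp : ℤ) : ℝ) := by
          have := hb isp (by omega) (by omega)
          exact_mod_cast by omega
        have hrr : (0:ℝ) < ((r isp : ℤ) : ℝ) := by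
          have := hr isp (by omega) (by omega)
          exact_mod_cast by omega
        have key : ((b isp * x (isp-1) + r isp * y (isp-1) : ℤ) : ℝ) =
            ((b isp : ℤ):ℝ) * ((1 - lam) * ((x (isp-1) : ℤ):ℝ) + lam * ((x isp : ℤ):ℝ)) +
            ((r isp : ℤ):ℝ) * ((1 - lam) * ((y (isp-1) : ℤ):ℝ) + lam * ((y isp : ℤ):ℝ)) := by
          have hg2 : ((b isp * x isp + r isp * y isp : ℤ) : ℝ) =
              ((b isp * x (isp-1) + r isp * y (isp-1) : ℤ) : ℝ) := by
            exact_mod_cast hgconst2.symm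
          push_cast at hg2 ⊢
          nlinarith [hg2]
        rw [key]
        nlinarith [mul_pos hbr hq1', mul_pos hrr hq2']
      have hint : 1 ≤ b isp * x (isp-1) + r isp * y (isp-1) := Int.cast_pos.mp hreal
      rw [hil] at hint
      exact hint
    · -- isp > l : y l ≥ 1, x l ≥ 0
      have hmono : y isp ≤ y (isp-1) := hymono (isp-1) isp (by omega) (by omega)
      have := hconvex_le' (y (isp-1)) (y isp) hmono
      have h2 : (0:ℝ) < ((y (isp-1) : ℤ) : ℝ) := lt_of_lt_of_le hq2' this
      have h3 : 1 ≤ y (isp - 1) := Int.cast_pos.mp h2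
      have h4 : y l ≥ y (isp - 1) := hymono l (isp-1) (by omega) (by omega)
      rw [hgconst]
      nlinarith [hr l hl1 hln, hb l hl1 hln]
  -- l ≤ k
  have hlk : l ≤ k := by
    by_contra h
    push_neg at h
    have h1 : x (l-1) ≤ -1 := hlx (l-1) (by omega)
    have h2 : y (l-1) ≤ -1 := by
      have := hymono k (l-1) (by omega) (by omega)
      omega
    nlinarith [hb l hl1 hln, hr l hl1 hln, hgl]
  -- apply the main lemma
  obtain ⟨C1, C2, C3⟩ := main_lemma N hN x y r b k l hr hb hxs hys hcross
    hx0 hy0 hxn hyn hk1 hkN hyk hky hl1 hln hxl hlx hlk hgk hgl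
  have exN : x N = (c N).1 := rfl
  have ey0 : y 0 = (c 0).2 := rfl
  have eyN : y N = (c N).2 := rfl
  constructor
  · omega
  · intro hα
    -- derive b k ≤ r k
    have hbk : b k ≤ r k := by
      have hbkpos : (0:ℝ) < ((b k : ℤ) : ℝ) := by
        have := hb k hk1 hkN
        exact_mod_cast by omega
      have h2 : ((b k : ℤ) : ℝ) ≤ ((r k : ℤ) : ℝ) := by
        have h3 : (-((a k).2 : ℝ)) = ((b k : ℤ) : ℝ) := by
          simp only [hbdef]; push_cast; ring
        have h4 : ((a k).1 : ℝ) = ((r k : ℤ) : ℝ) := by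
          simp only [hrdef]
        rw [h3, h4] at hα
        exact (one_le_div hbkpos).mp hα
      exact_mod_cast h2
    -- the ceiling
    set cc : ℤ := ⌈(-((c N).2 : ℚ)) / 2⌉ with hccdef
    have hcc1 : ((-((c N).2 : ℚ)) / 2 : ℚ) ≤ (cc : ℚ) := Int.le_ceil _
    have hcc2 : (cc : ℚ) < (-((c N).2 : ℚ)) / 2 + 1 := Int.ceil_lt_add_one _
    have hD : 2 * cc ≤ 1 - y N := by
      have : (2 * cc : ℚ) < -((c N).2 : ℚ) + 2 := by linarith
      have h2 : (2 * cc : ℤ) < -(c N).2 + 2 := by exact_mod_cast this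
      omega
    have := C2 hbk cc hD
    omega
end

section
/- Suppose that an integer frame (o; f₁, f₂) splits an integer slope Q having N edges and endpoints v = o + v₁f₁ + v₂f₂ with v₁ < 0, v₂ > 0 and w = o + w₁f₁ + w₂f₂ with w₁ > 0, w₂ < 0, and suppose that all vertices of Q belong to a proper sublattice of ℤ² (a sublattice Γ with Γ ≠ ℤ²). Then 2N ≤ v₂ + w₁ − 1. -/
open Set

namespace S12


lemma int_one_le_mul {a b : ℤ} (ha : 1 ≤ a) (hb : 1 ≤ b) : 1 ≤ a * b := by nlinarith

lemma chain_x {s N : ℕ} {u x : ℕ → ℤ}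
    (hu : ∀ i, s + 1 ≤ i → i ≤ N → 1 ≤ u i)
    (hrec : ∀ i, s + 1 ≤ i → i ≤ N → x i = x (i - 1) + u i) :
    ∀ a b, s ≤ a → a ≤ b → b ≤ N → x a + ((b : ℤ) - (a : ℤ)) ≤ x b := by
  intro a b hsa hab
  induction b, hab using Nat.le_induction with
  | base => intro _; simp
  | succ n hn ih =>
    intro hN
    have h1 : x (n + 1) = x n + u (n + 1) := by
      have := hrec (n + 1) (by omega) hN
      simpa using this
    have h2 := ih (by omega)
    have h3 := hu (n + 1) (by omega) hN
    push_cast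
    push_cast at h2
    linarith

lemma chain_y {s N : ℕ} {w y : ℕ → ℤ}
    (hw : ∀ i, s + 1 ≤ i → i ≤ N → 1 ≤ w i)
    (hrec : ∀ i, s + 1 ≤ i → i ≤ N → y i = y (i - 1) - w i) :
    ∀ a b, s ≤ a → a ≤ b → b ≤ N → y b + ((b : ℤ) - (a : ℤ)) ≤ y a := by
  intro a b hsa hab
  induction b, hab using Nat.le_induction with
  | base => intro _; simp
  | succ n hn ih =>
    intro hN
    have h1 : y (n + 1) = y n - w (n + 1) := by
      have := hrec (n + 1) (by omega) hN
      simpa using this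
    have h2 := ih (by omega)
    have h3 := hw (n + 1) (by omega) hN
    push_cast
    push_cast at h2
    linarith

lemma glem : ∀ (e : ℕ), 1 ≤ e → ∀ (t N : ℕ) (u w x y : ℕ → ℤ) (q : ℤ), 0 ≤ q →
    N = t + e → 1 ≤ t →
    (∀ i, t ≤ i → i ≤ N → 1 ≤ u i ∧ 1 ≤ w i) →
    (∀ i, t ≤ i → i + 1 ≤ N → 2 ≤ w i * u (i+1) - u i * w (i+1)) →
    (∀ i, t ≤ i → i ≤ N → x i = x (i-1) + u i ∧ y i = y (i-1) - w i) →
    (q = 0 ∨ ∀ i, t ≤ i → i ≤ N → q * w i + 2 ≤ u i) →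
    2 * ((e : ℤ) + 1) + q ≤ (y (t-1) - y (N-1)) + (x N - x t) := by
  intro e he
  induction e, he using Nat.le_induction with
  | base =>
    intro t N u w x y q hq hN ht hUW hdet hrec hsh
    subst hN
    have hyt : y t = y (t-1) - w t := (hrec t le_rfl (by omega)).2
    have hxt : x (t+1) = x t + u (t+1) := by
      have := (hrec (t+1) (by omega) le_rfl).1
      simpa using this
    have hNt : t + 1 - 1 = t := by omega
    rw [hNt]
    have hd := hdet t le_rfl le_rfl
    obtain ⟨hut, hwt⟩ := hUW t le_rfl (by omega)
    obtain ⟨hut1, hwt1⟩ := hUW (t+1) (by omega) le_rfl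
    have hprod : 1 ≤ u t * w (t+1) := int_one_le_mul hut hwt1
    have key : 4 + q ≤ w t + u (t+1) := by
      rcases hsh with hq0 | hsh
      · subst hq0
        rcases le_or_gt (w t) 1 with h1 | h1
        · have hw1 : w t = 1 := le_antisymm h1 hwt
          rw [hw1] at hd
          nlinarith
        · rcases le_or_gt (u (t+1)) 1 with h2 | h2
          · have hu1 : u (t+1) = 1 := le_antisymm h2 hut1
            rw [hu1] at hd
            nlinarith
          · norm_num; linarith
      · have hst := hsh t le_rfl (by omega)
        have hst1 := hsh (t+1) (by omega) le_rfl
        rcases le_or_gt (w t) 1 with h1 | h1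
        · have hw1 : w t = 1 := le_antisymm h1 hwt
          rw [hw1] at hd hst
          have : (q + 2) * 1 ≤ u t * w (t+1) :=
            mul_le_mul (by linarith) hwt1 (by norm_num) (by linarith)
          nlinarith
        · have : q * 1 ≤ q * w (t+1) := mul_le_mul_of_nonneg_left hwt1 hq
          nlinarith
    push_cast
    linarith
  | succ e he ih =>
    intro t N u w x y q hq hN ht hUW hdet hrec hsh
    have hih := ih (t+1) N u w x y q hq (by omega) (by omega)
      (fun i h1 h2 => hUW i (by omega) h2)
      (fun i h1 h2 => hdet i (by omega) h2)
      (fun i h1 h2 => hrec i (by omega) h2)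
      (by rcases hsh with h | h
          · exact Or.inl h
          · exact Or.inr (fun i h1 h2 => h i (by omega) h2))
    have hyt : y t = y (t-1) - w t := (hrec t le_rfl (by omega)).2
    have hxt : x (t+1) = x t + u (t+1) := by
      have := (hrec (t+1) (by omega) (by omega)).1
      simpa using this
    have ht1 : t + 1 - 1 = t := by omega
    rw [ht1] at hih
    obtain ⟨hut1, hwt1⟩ := hUW (t+1) (by omega) (by omega)
    obtain ⟨hut, hwt⟩ := hUW t le_rfl (by omega)
    push_cast at hih ⊢
    linarith

set_option maxHeartbeats 2000000 in
lemma mainP (d : ℕ) : ∀ (s N k : ℕ) (u w x y : ℕ → ℤ) (q : ℤ),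
    1 ≤ d → N = s + d → 0 ≤ q →
    (∀ i, s + 1 ≤ i → i ≤ N → 1 ≤ u i ∧ 1 ≤ w i) →
    (∀ i j, s + 1 ≤ i → i < j → j ≤ N → 2 ≤ w i * u j - u i * w j) →
    (∀ i, s + 1 ≤ i → i ≤ N → x i = x (i-1) + u i ∧ y i = y (i-1) - w i) →
    x s ≤ -1 → y N ≤ -1 →
    s + 1 ≤ k → k ≤ N → 1 ≤ y (k-1) → 1 ≤ x k →
    1 ≤ w k * x (k-1) + u k * y (k-1) →
    (q = 0 ∨ ∀ i, s + 1 ≤ i → i ≤ N → q * w i + 2 ≤ u i) →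
    2 * (d : ℤ) + 1 + q ≤ y s + x N := by
  induction d using Nat.strong_induction_on with
  | _ d IH =>
  intro s N k u w x y q hd1 hN hq hUW hdet hrec hxs hyN hk1 hkN hyk hxk hE hsh
  rcases eq_or_lt_of_le hd1 with hd | hd
  · -- base case d = 1
    have hd' : d = 1 := hd.symm
    subst hd'
    have hk' : k = s + 1 := by omega
    subst hk'
    have hNs : N = s + 1 := by omega
    subst hNs
    have hidx : s + 1 - 1 = s := by omega
    rw [hidx] at hyk hE
    have hxrec : x (s+1) = x s + u (s+1) := by
      have := (hrec (s+1) le_rfl le_rfl).1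
      simpa using this
    have hyrec : y (s+1) = y s - w (s+1) := by
      have := (hrec (s+1) le_rfl le_rfl).2
      simpa using this
    obtain ⟨hu1, hw1⟩ := hUW (s+1) le_rfl le_rfl
    have hE2 : w (s+1) * x (s+1) + u (s+1) * y (s+1)
        = w (s+1) * x s + u (s+1) * y s := by
      rw [hxrec, hyrec]; ring
    have hwxs : w (s+1) * x s ≤ w (s+1) * (-1) :=
      mul_le_mul_of_nonneg_left hxs (by linarith)
    have huyN : u (s+1) * y (s+1) ≤ u (s+1) * (-1) :=
      mul_le_mul_of_nonneg_left hyN (by linarith)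
    rcases hsh with hq0 | hshr
    · -- q = 0
      subst hq0
      by_contra hcon
      push_neg at hcon
      have hys1 : y s = 1 := by omega
      have hxN1 : x (s+1) = 1 := by omega
      rw [hys1] at hE
      rw [hxN1] at hE2
      nlinarith
    · -- q ≥ 1 case handled too (also fine if q = 0 in this branch)
      have huq : q * w (s+1) + 2 ≤ u (s+1) := hshr (s+1) le_rfl le_rfl
      -- w * x(s+1) ≥ 1 + u
      have hwx : 1 + u (s+1) * (- y (s+1)) ≤ w (s+1) * x (s+1) := by
        nlinarith [hE, hE2]
      rcases le_or_gt 2 (y s) with hy2 | hy2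
      · -- x (s+1) ≥ q + 1
        have hx1 : q + 1 ≤ x (s+1) := by
          by_contra hcc
          push_neg at hcc
          have hxq : x (s+1) ≤ q := by omega
          have h1 : w (s+1) * x (s+1) ≤ w (s+1) * q :=
            mul_le_mul_of_nonneg_left hxq (by linarith)
          have h2 : q * 1 ≤ q * w (s+1) := mul_le_mul_of_nonneg_left hw1 hq
          nlinarith
        push_cast
        linarith
      · -- y s = 1
        have hys1 : y s = 1 := by omega
        have hwge2 : 2 ≤ w (s+1) := by
          rw [hyrec, hys1] at hyN
          linarith
        have hyval : - y (s+1) = w (s+1) - 1 := by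
          rw [hyrec, hys1]; ring
        have hx2 : q + 2 ≤ x (s+1) := by
          by_contra hcc
          push_neg at hcc
          have hxq : x (s+1) ≤ q + 1 := by omega
          have h1 : w (s+1) * x (s+1) ≤ w (s+1) * (q+1) :=
            mul_le_mul_of_nonneg_left hxq (by linarith)
          have h2 : (q * w (s+1) + 2) * (w (s+1) - 1) ≤ u (s+1) * (w (s+1) - 1) :=
            mul_le_mul_of_nonneg_right huq (by linarith)
          rw [hyval] at hwx
          nlinarith [mul_nonneg (mul_nonneg hq (by linarith : (0:ℤ) ≤ w (s+1) - 2)) (by linarith : (0:ℤ) ≤ w (s+1))]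
        push_cast
        linarith
  · -- inductive step d ≥ 2
    classical
    have hex : ∃ j, s + 1 ≤ j ∧ j ≤ N ∧ 1 ≤ y (j - 1) ∧ 1 ≤ x j ∧
        1 ≤ w j * x (j - 1) + u j * y (j - 1) := ⟨k, hk1, hkN, hyk, hxk, hE⟩
    have hexmin : ∃ k₀, (s + 1 ≤ k₀ ∧ k₀ ≤ N ∧ 1 ≤ y (k₀ - 1) ∧ 1 ≤ x k₀ ∧
        1 ≤ w k₀ * x (k₀ - 1) + u k₀ * y (k₀ - 1)) ∧ ∀ m, m < k₀ →
        ¬(s + 1 ≤ m ∧ m ≤ N ∧ 1 ≤ y (m - 1) ∧ 1 ≤ x m ∧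
          1 ≤ w m * x (m - 1) + u m * y (m - 1)) :=
      ⟨Nat.find hex, Nat.find_spec hex, fun m hm => Nat.find_min hex hm⟩
    obtain ⟨k₀, ⟨hk01, hk0N, hyk0, hxk0, hE0⟩, hmin⟩ := hexmin
    -- x (k₀ - 1) ≤ 0
    have hxk0m : x (k₀ - 1) ≤ 0 := by
      rcases eq_or_lt_of_le hk01 with h | h
      · have he : k₀ - 1 = s := by omega
        rw [he]; linarith
      · by_contra hpos
        push_neg at hpos
        have h1 : 1 ≤ x (k₀ - 1) := hpos
        have hy2 : 1 ≤ y (k₀ - 1 - 1) := by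
          have hmono := chain_y (fun i a b => (hUW i a b).2)
            (fun i a b => (hrec i a b).2) (k₀ - 2) (k₀ - 1) (by omega) (by omega) (by omega)
          have he : k₀ - 1 - 1 = k₀ - 2 := by omega
          rw [he]
          have hc : ((k₀ - 1 : ℕ) : ℤ) - ((k₀ - 2 : ℕ) : ℤ) = 1 := by omega
          rw [hc] at hmono
          linarith
        have hEm : 1 ≤ w (k₀-1) * x (k₀-1-1) + u (k₀-1) * y (k₀-1-1) := by
          have hxr : x (k₀-1) = x (k₀-1-1) + u (k₀-1) := (hrec (k₀-1) (by omega) (by omega)).1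
          have hyr : y (k₀-1) = y (k₀-1-1) - w (k₀-1) := (hrec (k₀-1) (by omega) (by omega)).2
          obtain ⟨hu', hw'⟩ := hUW (k₀-1) (by omega) (by omega)
          have hid : w (k₀-1) * x (k₀-1-1) + u (k₀-1) * y (k₀-1-1)
              = w (k₀-1) * x (k₀-1) + u (k₀-1) * y (k₀-1) := by
            rw [hxr, hyr]; ring
          rw [hid]
          have p1 : 1 ≤ w (k₀-1) * x (k₀-1) := int_one_le_mul hw' h1
          have p2 : 1 ≤ u (k₀-1) * y (k₀-1) := int_one_le_mul hu' hyk0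
          linarith
        exact hmin (k₀ - 1) (by omega) ⟨by omega, by omega, hy2, h1, hEm⟩
    by_cases hA : s + 2 ≤ k₀ ∧ x (s+1) ≤ -1
    · -- Case A : peel the leftmost edge
      obtain ⟨hA1, hA2⟩ := hA
      obtain ⟨hu1, hw1⟩ := hUW (s+1) le_rfl (by omega)
      have hys : y (s+1) = y s - w (s+1) := by
        have := (hrec (s+1) le_rfl (by omega)).2
        simpa using this
      rcases le_or_gt 2 (w (s+1)) with hw2 | hw2
      · -- A1 : w (s+1) ≥ 2
        have hsub := IH (d-1) (by omega) (s+1) N k₀ u w x y q (by omega) (by omega) hq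
          (fun i h1 h2 => hUW i (by omega) h2)
          (fun i j h1 h2 h3 => hdet i j (by omega) h2 h3)
          (fun i h1 h2 => hrec i (by omega) h2)
          hA2 hyN hA1 hk0N hyk0 hxk0 hE0
          (by rcases hsh with h | h
              · exact Or.inl h
              · exact Or.inr (fun i h1 h2 => h i (by omega) h2))
        have hc : ((d - 1 : ℕ) : ℤ) = (d : ℤ) - 1 := by omega
        rw [hc] at hsub
        linarith
      · -- A2 : w (s+1) = 1
        have hw1e : w (s+1) = 1 := by omega
        have hshsub : ∀ i, s+2 ≤ i → i ≤ N → u (s+1) * w i + 2 ≤ u i := by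
          intro i hi1 hi2
          have hdi := hdet (s+1) i le_rfl (by omega) hi2
          rw [hw1e] at hdi
          linarith
        have hsub := IH (d-1) (by omega) (s+1) N k₀ u w x y (u (s+1)) (by omega) (by omega)
          (by linarith)
          (fun i h1 h2 => hUW i (by omega) h2)
          (fun i j h1 h2 h3 => hdet i j (by omega) h2 h3)
          (fun i h1 h2 => hrec i (by omega) h2)
          hA2 hyN hA1 hk0N hyk0 hxk0 hE0
          (Or.inr hshsub)
        have hq'q : q + 1 ≤ u (s+1) := by
          rcases hsh with h | h
          · rw [h]; linarith
          · have := h (s+1) le_rfl (by omega)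
            rw [hw1e] at this
            linarith
        have hc : ((d - 1 : ℕ) : ℤ) = (d : ℤ) - 1 := by omega
        rw [hc] at hsub
        linarith
    · by_cases hB : k₀ + 1 ≤ N ∧ y (N-1) ≤ -1
      · -- Case B : peel the rightmost edge
        obtain ⟨hB1, hB2⟩ := hB
        have hxN : x N = x (N-1) + u N := (hrec N (by omega) le_rfl).1
        obtain ⟨huN, hwN⟩ := hUW N (by omega) le_rfl
        rcases le_or_gt 1 q with hq1 | hq0
        · -- q ≥ 1 : u N ≥ q + 2
          have hshr : ∀ i, s+1 ≤ i → i ≤ N → q * w i + 2 ≤ u i := by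
            rcases hsh with h | h
            · exfalso; omega
            · exact h
          have huNq : q + 2 ≤ u N := by
            have h2 : q * 1 ≤ q * w N := mul_le_mul_of_nonneg_left hwN hq
            have := hshr N (by omega) le_rfl
            linarith
          have hsub := IH (d-1) (by omega) s (N-1) k₀ u w x y q (by omega) (by omega) hq
            (fun i h1 h2 => hUW i h1 (by omega))
            (fun i j h1 h2 h3 => hdet i j h1 h2 (by omega))
            (fun i h1 h2 => hrec i h1 (by omega))
            hxs hB2 hk01 (by omega) hyk0 hxk0 hE0
            (Or.inr (fun i h1 h2 => hshr i h1 (by omega)))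
          have hc : ((d - 1 : ℕ) : ℤ) = (d : ℤ) - 1 := by omega
          rw [hc] at hsub
          linarith
        · have hq0e : q = 0 := by omega
          rcases le_or_gt 2 (u N) with hu2 | hu2
          · -- B1
            have hsub := IH (d-1) (by omega) s (N-1) k₀ u w x y 0 (by omega) (by omega) le_rfl
              (fun i h1 h2 => hUW i h1 (by omega))
              (fun i j h1 h2 h3 => hdet i j h1 h2 (by omega))
              (fun i h1 h2 => hrec i h1 (by omega))
              hxs hB2 hk01 (by omega) hyk0 hxk0 hE0
              (Or.inl rfl)
            have hc : ((d - 1 : ℕ) : ℤ) = (d : ℤ) - 1 := by omega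
            rw [hc] at hsub
            linarith
          · -- B2 : u N = 1, flip
            have huN1 : u N = 1 := by omega
            have hshsub : ∀ i, s+1 ≤ i → i ≤ N-1 → w N * u i + 2 ≤ w i := by
              intro i hi1 hi2
              have hdi := hdet i N hi1 (by omega) le_rfl
              rw [huN1] at hdi
              linarith
            have hflip := IH (d-1) (by omega) s (N-1) (N + s - k₀)
              (fun i => w (N + s - i)) (fun i => u (N + s - i))
              (fun j => y (N - 1 + s - j)) (fun j => x (N - 1 + s - j))
              (w N) (by omega) (by omega) (by linarith)
              (by intro i hi1 hi2
                  exact ⟨(hUW (N+s-i) (by omega) (by omega)).2,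
                         (hUW (N+s-i) (by omega) (by omega)).1⟩)
              (by intro i j hi1 hij hj2
                  show 2 ≤ u (N+s-i) * w (N+s-j) - w (N+s-i) * u (N+s-j)
                  have := hdet (N+s-j) (N+s-i) (by omega) (by omega) (by omega)
                  linarith)
              (by intro i hi1 hi2
                  have e1 : N - 1 + s - i = N + s - i - 1 := by omega
                  have e2 : N - 1 + s - (i - 1) = N + s - i := by omega
                  have hx' := (hrec (N+s-i) (by omega) (by omega)).1
                  have hy' := (hrec (N+s-i) (by omega) (by omega)).2
                  constructor
                  · show y (N - 1 + s - i) = y (N - 1 + s - (i-1)) + w (N + s - i)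
                    rw [e1, e2]
                    linarith
                  · show x (N - 1 + s - i) = x (N - 1 + s - (i-1)) - u (N + s - i)
                    rw [e1, e2]
                    linarith)
              (by show y (N - 1 + s - s) ≤ -1
                  have e : N - 1 + s - s = N - 1 := by omega
                  rw [e]; exact hB2)
              (by show x (N - 1 + s - (N-1)) ≤ -1
                  have e : N - 1 + s - (N-1) = s := by omega
                  rw [e]; exact hxs)
              (by omega) (by omega)
              (by show 1 ≤ x (N - 1 + s - (N + s - k₀ - 1))
                  have e : N - 1 + s - (N + s - k₀ - 1) = k₀ := by omega
                  rw [e]; exact hxk0)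
              (by show 1 ≤ y (N - 1 + s - (N + s - k₀))
                  have e : N - 1 + s - (N + s - k₀) = k₀ - 1 := by omega
                  rw [e]; exact hyk0)
              (by show 1 ≤ u (N + s - (N + s - k₀)) * y (N - 1 + s - (N + s - k₀ - 1))
                    + w (N + s - (N + s - k₀)) * x (N - 1 + s - (N + s - k₀ - 1))
                  have e1 : N + s - (N + s - k₀) = k₀ := by omega
                  have e2 : N - 1 + s - (N + s - k₀ - 1) = k₀ := by omega
                  rw [e1, e2]
                  have hxr := (hrec k₀ hk01 hk0N).1
                  have hyr := (hrec k₀ hk01 hk0N).2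
                  have key : u k₀ * (y (k₀-1) - w k₀) + w k₀ * (x (k₀-1) + u k₀)
                      = w k₀ * x (k₀-1) + u k₀ * y (k₀-1) := by ring
                  rw [hxr, hyr, key]
                  exact hE0)
              (Or.inr (by
                  intro i hi1 hi2
                  show w N * u (N + s - i) + 2 ≤ w (N + s - i)
                  exact hshsub (N+s-i) (by omega) (by omega)))
            have e4 : N - 1 + s - s = N - 1 := by omega
            have e5 : N - 1 + s - (N - 1) = s := by omega
            rw [e4, e5] at hflip
            have hc : ((d - 1 : ℕ) : ℤ) = (d : ℤ) - 1 := by omega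
            rw [hc] at hflip
            linarith
      · -- Case C
        push_neg at hA hB
        have hC1 : k₀ = s + 1 ∨ (k₀ = s + 2 ∧ x (s+1) = 0) := by
          rcases eq_or_lt_of_le hk01 with h | h
          · exact Or.inl h.symm
          · have hx1ge : -1 < x (s+1) := hA (by omega)
            have hmono := chain_x (fun i a b => (hUW i a b).1)
              (fun i a b => (hrec i a b).1) (s+1) (k₀-1) (by omega) (by omega) (by omega)
            have hk2 : k₀ = s + 2 := by
              by_contra hcc
              have hk3 : s + 3 ≤ k₀ := by omega
              have hc : (2:ℤ) ≤ ((k₀ - 1 : ℕ):ℤ) - ((s+1 : ℕ):ℤ) := by omega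
              linarith
            right
            refine ⟨hk2, ?_⟩
            have he : k₀ - 1 = s + 1 := by omega
            rw [he] at hxk0m
            omega
        rcases eq_or_lt_of_le hk0N with hkN' | hkN'
        · -- C1 : k₀ = N, so N = s+2, x (s+1) = 0
          obtain ⟨hk2, hx10⟩ : k₀ = s + 2 ∧ x (s+1) = 0 := by
            rcases hC1 with h | h
            · exfalso; omega
            · exact h
          have hNs2 : N = s + 2 := by omega
          have hyrecN : y N = y (N-1) - w N := (hrec N (by omega) le_rfl).2
          have hy1 : 1 ≤ y (N-1) := by
            have he : k₀ - 1 = N - 1 := by omega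
            rw [he] at hyk0; exact hyk0
          have hw2 : 2 ≤ w N := by linarith
          obtain ⟨hu1, hw1⟩ := hUW (s+1) le_rfl (by omega)
          obtain ⟨huN, hwN⟩ := hUW N (by omega) le_rfl
          have hdst := hdet (s+1) N le_rfl (by omega) le_rfl
          have hprod : 2 ≤ u (s+1) * w N := by nlinarith
          have hxrecN : x N = x (N-1) + u N := (hrec N (by omega) le_rfl).1
          have hyrec1 : y (s+1) = y s - w (s+1) := by
            have := (hrec (s+1) le_rfl (by omega)).2; simpa using this
          have hxN1 : x (N-1) = 0 := by
            have he : N - 1 = s + 1 := by omega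
            rw [he]; exact hx10
          have hy1' : 1 ≤ y (s+1) := by
            have he : N - 1 = s+1 := by omega
            rw [he] at hy1; exact hy1
          have hd2 : (d:ℤ) = 2 := by omega
          rcases le_or_gt 1 q with hq1 | hq0
          · have hshr : ∀ i, s+1 ≤ i → i ≤ N → q * w i + 2 ≤ u i := by
              rcases hsh with h | h
              · exfalso; omega
              · exact h
            have hsN := hshr N (by omega) le_rfl
            have h2 : q * 2 ≤ q * w N := mul_le_mul_of_nonneg_left hw2 hq
            rw [hd2]
            linarith
          · have hq0e : q = 0 := by omega
            have h4 : 4 ≤ w (s+1) + u N := by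
              have h4' : 4 ≤ w (s+1) * u N := by linarith
              rcases le_or_gt (w (s+1)) 1 with h | h
              · have he : w (s+1) = 1 := by omega
                rw [he] at h4'; linarith
              · rcases le_or_gt (u N) 1 with h' | h'
                · have he : u N = 1 := by omega
                  rw [he] at h4'; linarith
                · linarith
            rw [hq0e, hd2]
            linarith
        · -- C2 : k₀ < N and y (N-1) ≥ 0
          have hyN1 : 0 ≤ y (N-1) := by
            have := hB (by omega); linarith
          rcases hC1 with hk00 | ⟨hk02, hx10⟩
          · -- k₀ = s + 1
            have hg := glem (N - s - 1) (by omega) (s+1) N u w x y q hq (by omega) (by omega)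
              (fun i h1 h2 => hUW i (by omega) h2)
              (fun i h1 h2 => hdet i (i+1) (by omega) (by omega) h2)
              (fun i h1 h2 => hrec i (by omega) h2)
              (by rcases hsh with h | h
                  · exact Or.inl h
                  · exact Or.inr (fun i h1 h2 => h i (by omega) h2))
            have he : s + 1 - 1 = s := by omega
            rw [he] at hg
            have hcast : ((N - s - 1 : ℕ):ℤ) = (d:ℤ) - 1 := by omega
            rw [hcast] at hg
            have hx1 : 1 ≤ x (s+1) := by rw [← hk00]; exact hxk0
            linarith
          · -- k₀ = s + 2, x (s+1) = 0
            have hNs3 : s + 3 ≤ N := by omega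
            obtain ⟨hu1, hw1⟩ := hUW (s+1) le_rfl (by omega)
            have hyrec1 : y (s+1) = y s - w (s+1) := by
              have := (hrec (s+1) le_rfl (by omega)).2; simpa using this
            have hx2 : 1 ≤ x (s+2) := by rw [← hk02]; exact hxk0
            rcases le_or_gt 2 (w (s+1)) with hw2 | hw2
            · have hg := glem (N - s - 2) (by omega) (s+2) N u w x y q hq (by omega) (by omega)
                (fun i h1 h2 => hUW i (by omega) h2)
                (fun i h1 h2 => hdet i (i+1) (by omega) (by omega) h2)
                (fun i h1 h2 => hrec i (by omega) h2)
                (by rcases hsh with h | h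
                    · exact Or.inl h
                    · exact Or.inr (fun i h1 h2 => h i (by omega) h2))
              have he : s + 2 - 1 = s + 1 := by omega
              rw [he] at hg
              have hcast : ((N - s - 2 : ℕ):ℤ) = (d:ℤ) - 2 := by omega
              rw [hcast] at hg
              linarith
            · have hw1e : w (s+1) = 1 := by omega
              have hshsub : ∀ i, s+2 ≤ i → i ≤ N → u (s+1) * w i + 2 ≤ u i := by
                intro i hi1 hi2
                have hdi := hdet (s+1) i le_rfl (by omega) hi2
                rw [hw1e] at hdi; linarith
              have hg := glem (N - s - 2) (by omega) (s+2) N u w x y (u (s+1))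
                (by linarith) (by omega) (by omega)
                (fun i h1 h2 => hUW i (by omega) h2)
                (fun i h1 h2 => hdet i (i+1) (by omega) (by omega) h2)
                (fun i h1 h2 => hrec i (by omega) h2)
                (Or.inr hshsub)
              have he : s + 2 - 1 = s + 1 := by omega
              rw [he] at hg
              have hcast : ((N - s - 2 : ℕ):ℤ) = (d:ℤ) - 2 := by omega
              rw [hcast] at hg
              have hq'q : q + 1 ≤ u (s+1) := by
                rcases hsh with h | h
                · rw [h]; linarith
                · have := h (s+1) le_rfl (by omega)
                  rw [hw1e] at this; linarith
              linarith




/-- subgroup of pairs with `p ∣ A x + B y` -/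
def formSubgroup (p A B : ℤ) : AddSubgroup (ℤ × ℤ) where
  carrier := {z | p ∣ A * z.1 + B * z.2}
  zero_mem' := by simp
  add_mem' := by
    intro a b ha hb
    simp only [Set.mem_setOf_eq] at *
    have h := dvd_add ha hb
    have e : A * a.1 + B * a.2 + (A * b.1 + B * b.2) = A * (a + b).1 + B * (a + b).2 := by
      simp [Prod.fst_add, Prod.snd_add]; ring
    rwa [e] at h
  neg_mem' := by
    intro a ha
    simp only [Set.mem_setOf_eq] at *
    have h := ha.neg_right
    have e : -(A * a.1 + B * a.2) = A * (-a).1 + B * (-a).2 := by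
      simp; ring
    rwa [e] at h

lemma form_on_closure {p A B : ℤ} {f g : ℤ × ℤ}
    (hf : p ∣ A * f.1 + B * f.2) (hg : p ∣ A * g.1 + B * g.2) :
    ∀ z ∈ AddSubgroup.closure {f, g}, p ∣ A * z.1 + B * z.2 := by
  intro z hz
  have hle : AddSubgroup.closure {f, g} ≤ formSubgroup p A B := by
    rw [AddSubgroup.closure_le]
    intro t ht
    simp only [Set.mem_insert_iff, Set.mem_singleton_iff] at ht
    rcases ht with rfl | rfl
    · exact hf
    · exact hg
  exact hle hz

lemma sublattice_form (Γ : AddSubgroup (ℤ × ℤ)) (hΓ : IsSublatticeZ2 Γ) (hproper : Γ ≠ ⊤) :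
    ∃ p : ℕ, p.Prime ∧ ∃ A B : ℤ, (¬(((p:ℤ) ∣ A) ∧ ((p:ℤ) ∣ B))) ∧
      ∀ z ∈ Γ, (p:ℤ) ∣ A * z.1 + B * z.2 := by
  obtain ⟨f, g, hD, hclos⟩ := hΓ
  set D := f.1 * g.2 - f.2 * g.1 with hDdef
  have habs : 2 ≤ D.natAbs := by
    by_contra hcc
    push_neg at hcc
    have h1 : D.natAbs = 1 := by
      have : D.natAbs ≠ 0 := Int.natAbs_ne_zero.mpr hD
      omega
    have hD2 : D * D = 1 := by
      rcases Int.natAbs_eq_iff.mp h1 with h | h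
      · rw [h]; ring
      · rw [h]; ring
    apply hproper
    rw [hclos, eq_top_iff]
    intro z _
    have hz : z = ((z.1 * g.2 - z.2 * g.1) * D) • f + ((f.1 * z.2 - f.2 * z.1) * D) • g := by
      have e1 : (((z.1 * g.2 - z.2 * g.1) * D) • f + ((f.1 * z.2 - f.2 * z.1) * D) • g).1
          = ((z.1 * g.2 - z.2 * g.1) * D) * f.1 + ((f.1 * z.2 - f.2 * z.1) * D) * g.1 := by
        simp [Prod.fst_add, smul_eq_mul]
      have e2 : (((z.1 * g.2 - z.2 * g.1) * D) • f + ((f.1 * z.2 - f.2 * z.1) * D) • g).2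
          = ((z.1 * g.2 - z.2 * g.1) * D) * f.2 + ((f.1 * z.2 - f.2 * z.1) * D) * g.2 := by
        simp [Prod.snd_add, smul_eq_mul]
      apply Prod.ext
      · rw [e1]
        linear_combination (-z.1) * hD2
      · rw [e2]
        linear_combination (-z.2) * hD2
    rw [hz]
    have hfm : f ∈ AddSubgroup.closure ({f, g} : Set (ℤ × ℤ)) :=
      AddSubgroup.subset_closure (by simp)
    have hgm : g ∈ AddSubgroup.closure ({f, g} : Set (ℤ × ℤ)) :=
      AddSubgroup.subset_closure (by simp)
    exact AddSubgroup.add_mem _ (AddSubgroup.zsmul_mem _ hfm _) (AddSubgroup.zsmul_mem _ hgm _)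
  set p := D.natAbs.minFac with hpdef
  have hpp : p.Prime := Nat.minFac_prime (by omega)
  have hp2 : 2 ≤ (p:ℤ) := by exact_mod_cast hpp.two_le
  have hpD : (p:ℤ) ∣ D := by
    have h1 : (p:ℤ) ∣ (D.natAbs : ℤ) := Int.natCast_dvd_natCast.mpr (Nat.minFac_dvd _)
    exact dvd_trans h1 (Int.natAbs_dvd.mpr dvd_rfl)
  refine ⟨p, hpp, ?_⟩
  by_cases hgc : ((p:ℤ) ∣ g.1) ∧ ((p:ℤ) ∣ g.2)
  · by_cases hfc : ((p:ℤ) ∣ f.1) ∧ ((p:ℤ) ∣ f.2)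
    · refine ⟨1, 0, ?_, ?_⟩
      · rintro ⟨h1, _⟩
        have := Int.le_of_dvd (by norm_num) h1
        omega
      · rw [hclos]
        apply form_on_closure
        · have := hfc.1; simpa using this
        · have := hgc.1; simpa using this
    · refine ⟨-f.2, f.1, ?_, ?_⟩
      · rintro ⟨h1, h2⟩
        exact hfc ⟨h2, (dvd_neg.mp h1)⟩
      · rw [hclos]
        apply form_on_closure
        · have e : -f.2 * f.1 + f.1 * f.2 = 0 := by ring
          rw [e]
          exact dvd_zero _
        · have e : -f.2 * g.1 + f.1 * g.2 = D := by rw [hDdef]; ring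
          rw [e]; exact hpD
  · refine ⟨g.2, -g.1, ?_, ?_⟩
    · rintro ⟨h1, h2⟩
      exact hgc ⟨dvd_neg.mp h2, h1⟩
    · rw [hclos]
      apply form_on_closure
      · have e : g.2 * f.1 + -g.1 * f.2 = D := by rw [hDdef]; ring
        rw [e]; exact hpD
      · have e : g.2 * g.1 + -g.1 * g.2 = 0 := by ring
        rw [e]
        exact dvd_zero _

lemma basis_coords {f₁ f₂ : ℤ × ℤ} (hb : IsZBasis f₁ f₂) {m n m' n' : ℤ}
    (h : m • f₁ + n • f₂ = m' • f₁ + n' • f₂) : m = m' ∧ n = n' := by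
  have h1 : m * f₁.1 + n * f₂.1 = m' * f₁.1 + n' * f₂.1 := by
    have := congrArg Prod.fst h
    simpa [Prod.fst_add, smul_eq_mul] using this
  have h2 : m * f₁.2 + n * f₂.2 = m' * f₁.2 + n' * f₂.2 := by
    have := congrArg Prod.snd h
    simpa [Prod.snd_add, smul_eq_mul] using this
  have hm : (m - m') * (f₁.1 * f₂.2 - f₁.2 * f₂.1) = 0 := by
    linear_combination f₂.2 * h1 - f₂.1 * h2
  have hn : (n - n') * (f₁.1 * f₂.2 - f₁.2 * f₂.1) = 0 := by
    linear_combination f₁.1 * h2 - f₁.2 * h1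
  rcases hb with hb | hb <;> rw [hb] at hm hn <;>
    exact ⟨by linarith, by linarith⟩

lemma det_pos_pairwise {N : ℕ} {u w : ℕ → ℤ}
    (hUW : ∀ i, 1 ≤ i → i ≤ N → 1 ≤ u i ∧ 1 ≤ w i)
    (hcons : ∀ i, 1 ≤ i → i + 1 ≤ N → 0 < w i * u (i+1) - u i * w (i+1)) :
    ∀ i j, 1 ≤ i → i < j → j ≤ N → 0 < w i * u j - u i * w j := by
  intro i j hi hij
  induction j, hij using Nat.le_induction with
  | base => intro h; exact hcons i hi h
  | succ n hn ih =>
    intro hN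
    have h1 := ih (by omega)
    have h2 := hcons n (by omega) hN
    obtain ⟨hui, hwi⟩ := hUW i (by omega) (by omega)
    obtain ⟨hun, hwn⟩ := hUW n (by omega) (by omega)
    obtain ⟨hun1, hwn1⟩ := hUW (n+1) (by omega) hN
    have hkey : w n * (w i * u (n+1) - u i * w (n+1))
        = w (n+1) * (w i * u n - u i * w n) + w i * (w n * u (n+1) - u n * w (n+1)) := by
      ring
    have hpos : 0 < w n * (w i * u (n+1) - u i * w (n+1)) := by
      rw [hkey]
      have a1 : 0 < w (n+1) * (w i * u n - u i * w n) := mul_pos (by linarith) h1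
      have a2 : 0 < w i * (w n * u (n+1) - u n * w (n+1)) := mul_pos (by linarith) h2
      linarith
    by_contra hcc
    push_neg at hcc
    have : w n * (w i * u (n+1) - u i * w (n+1)) ≤ 0 :=
      mul_nonpos_of_nonneg_of_nonpos (by linarith) hcc
    linarith

lemma dvd_det {p A B ui wi uj wj : ℤ} (hp : Prime p)
    (hnb : ¬(p ∣ A ∧ p ∣ B))
    (hi : p ∣ A * ui - B * wi) (hj : p ∣ A * uj - B * wj) :
    p ∣ wi * uj - ui * wj := by
  have hA : p ∣ A * (wi * uj - ui * wj) := by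
    have e : A * (wi * uj - ui * wj) = wi * (A * uj - B * wj) - wj * (A * ui - B * wi) := by
      ring
    rw [e]
    exact dvd_sub (hj.mul_left wi) (hi.mul_left wj)
  have hB : p ∣ B * (wi * uj - ui * wj) := by
    have e : B * (wi * uj - ui * wj) = ui * (A * uj - B * wj) - uj * (A * ui - B * wi) := by
      ring
    rw [e]
    exact dvd_sub (hj.mul_left ui) (hi.mul_left uj)
  by_cases hdA : p ∣ A
  · have hdB : ¬ p ∣ B := fun hb => hnb ⟨hdA, hb⟩
    exact (hp.dvd_or_dvd hB).resolve_left hdB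
  · exact (hp.dvd_or_dvd hA).resolve_left hdA


end S12

/-- Theorem: if an integer frame splits an integer slope with `N` edges all of whose vertices
belong to a proper sublattice of `ℤ²`, then `2N ≤ v₂ + w₁ - 1`. -/
theorem stmt12 (o f₁ f₂ : ℤ × ℤ) (hbasis : IsZBasis f₁ f₂)
    (N : ℕ) (hN : 1 ≤ N) (v a c : ℕ → ℤ × ℤ)
    (hslope : IsIntSlope f₁ f₂ N v a)
    (hcoords : FrameCoords o f₁ f₂ N v c)
    (hsplit : FrameSplits N c)
    (Γ : AddSubgroup (ℤ × ℤ)) (hΓ : IsSublatticeZ2 Γ) (hproper : Γ ≠ ⊤)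
    (hmem : ∀ i ≤ N, v i ∈ Γ) :
    2 * (N : ℤ) ≤ (c 0).2 + (c N).1 - 1 := by
  obtain ⟨hslope1, hslope2, hslope3⟩ := hslope
  -- coordinate steps
  have hstep : ∀ i, 1 ≤ i → i ≤ N →
      (c i).1 - (c (i-1)).1 = (a i).1 ∧ (c i).2 - (c (i-1)).2 = (a i).2 := by
    intro i h1 h2
    have hvi := hcoords i h2
    have hvi1 := hcoords (i-1) (by omega)
    have hvec := hslope1 i h1 h2
    have hcomb : ((c i).1 - (c (i-1)).1) • f₁ + ((c i).2 - (c (i-1)).2) • f₂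
        = (a i).1 • f₁ + (a i).2 • f₂ := by
      rw [sub_smul, sub_smul, ← hvec, hvi, hvi1]
      abel
    exact S12.basis_coords hbasis hcomb
  have hUW : ∀ i, 1 ≤ i → i ≤ N → 1 ≤ (a i).1 ∧ 1 ≤ -(a i).2 := by
    intro i h1 h2
    have := hslope2 i h1 h2
    omega
  have hcons : ∀ i, 1 ≤ i → i + 1 ≤ N →
      0 < (-(a i).2) * (a (i+1)).1 - (a i).1 * (-(a (i+1)).2) := by
    intro i h1 h2
    have := hslope3 i h1 h2
    linarith [this]
  obtain ⟨p, hpp, A, B, hnAB, hform⟩ := S12.sublattice_form Γ hΓ hproper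
  have hpprime : Prime (p:ℤ) := Nat.prime_iff_prime_int.mp hpp
  have hp2 : (2:ℤ) ≤ (p:ℤ) := by exact_mod_cast hpp.two_le
  have hedge : ∀ i, 1 ≤ i → i ≤ N →
      (p:ℤ) ∣ (A * f₁.1 + B * f₁.2) * (a i).1 - (A * f₂.1 + B * f₂.2) * (-(a i).2) := by
    intro i h1 h2
    have hmemdiff : v i - v (i-1) ∈ Γ := sub_mem (hmem i h2) (hmem (i-1) (by omega))
    have hdvd := hform _ hmemdiff
    have hvec := hslope1 i h1 h2
    have hc1 : (v i - v (i-1)).1 = (a i).1 * f₁.1 + (a i).2 * f₂.1 := by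
      rw [hvec]; simp [Prod.fst_add, smul_eq_mul]
    have hc2 : (v i - v (i-1)).2 = (a i).1 * f₁.2 + (a i).2 * f₂.2 := by
      rw [hvec]; simp [Prod.snd_add, smul_eq_mul]
    rw [hc1, hc2] at hdvd
    have e : A * ((a i).1 * f₁.1 + (a i).2 * f₂.1) + B * ((a i).1 * f₁.2 + (a i).2 * f₂.2)
        = (A * f₁.1 + B * f₁.2) * (a i).1 - (A * f₂.1 + B * f₂.2) * (-(a i).2) := by
      ring
    rwa [e] at hdvd
  have hnAB' : ¬(((p:ℤ) ∣ (A * f₁.1 + B * f₁.2)) ∧ ((p:ℤ) ∣ (A * f₂.1 + B * f₂.2))) := by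
    rintro ⟨h1, h2⟩
    apply hnAB
    constructor
    · have e : A * (f₁.1 * f₂.2 - f₁.2 * f₂.1)
          = (A * f₁.1 + B * f₁.2) * f₂.2 - (A * f₂.1 + B * f₂.2) * f₁.2 := by ring
      have hd : (p:ℤ) ∣ A * (f₁.1 * f₂.2 - f₁.2 * f₂.1) := by
        rw [e]; exact dvd_sub (h1.mul_right _) (h2.mul_right _)
      rcases hbasis with hb | hb <;> rw [hb] at hd
      · simpa using hd
      · rw [mul_neg_one] at hd
        exact dvd_neg.mp hd
    · have e : B * (f₁.1 * f₂.2 - f₁.2 * f₂.1)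
          = (A * f₂.1 + B * f₂.2) * f₁.1 - (A * f₁.1 + B * f₁.2) * f₂.1 := by ring
      have hd : (p:ℤ) ∣ B * (f₁.1 * f₂.2 - f₁.2 * f₂.1) := by
        rw [e]; exact dvd_sub (h2.mul_right _) (h1.mul_right _)
      rcases hbasis with hb | hb <;> rw [hb] at hd
      · simpa using hd
      · rw [mul_neg_one] at hd
        exact dvd_neg.mp hd
  have hdet2 : ∀ i j, 1 ≤ i → i < j → j ≤ N →
      2 ≤ (-(a i).2) * (a j).1 - (a i).1 * (-(a j).2) := by
    intro i j h1 h2 h3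
    have hpos : 0 < -(a i).2 * (a j).1 - (a i).1 * -(a j).2 :=
      S12.det_pos_pairwise (N := N) (u := fun i => (a i).1)
        (w := fun i => -(a i).2) hUW hcons i j h1 h2 h3
    have hdvd := S12.dvd_det hpprime hnAB' (hedge i h1 (by omega)) (hedge j (by omega) h3)
    have := Int.le_of_dvd (by linarith [hpos]) hdvd
    linarith
  obtain ⟨hc01, hc02, hcN1, hcN2, k, hk1, hkN, lam, hl0, hl1, hX, hY⟩ := hsplit
  have hstepk := hstep k hk1 hkN
  have hu1 : 1 ≤ (a k).1 := (hUW k hk1 hkN).1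
  have hw1 : 1 ≤ -(a k).2 := (hUW k hk1 hkN).2
  have hxr : ((c k).1 : ℝ) = ((c (k-1)).1 : ℝ) + ((a k).1 : ℝ) := by
    have : (c k).1 = (c (k-1)).1 + (a k).1 := by linarith [hstepk.1]
    exact_mod_cast this
  have hyr : ((c k).2 : ℝ) = ((c (k-1)).2 : ℝ) + ((a k).2 : ℝ) := by
    have : (c k).2 = (c (k-1)).2 + (a k).2 := by linarith [hstepk.2]
    exact_mod_cast this
  have hu0r : (0:ℝ) < ((a k).1 : ℝ) := by exact_mod_cast (by linarith : (0:ℤ) < (a k).1)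
  have hw0r : (0:ℝ) < (-(a k).2 : ℝ) := by exact_mod_cast (by linarith : (0:ℤ) < -(a k).2)
  have hxk : 1 ≤ (c k).1 := by
    have hXle : (1 - lam) * ((c (k-1)).1:ℝ) + lam * ((c k).1:ℝ)
        = ((c k).1:ℝ) - (1-lam) * ((a k).1:ℝ) := by
      rw [hxr]; ring
    have hmul : (0:ℝ) ≤ (1 - lam) * ((a k).1 : ℝ) :=
      mul_nonneg (by linarith) (by linarith)
    have h0 : (0:ℝ) < ((c k).1 : ℝ) := by
      rw [hXle] at hX
      linarith
    have : (0:ℤ) < (c k).1 := by exact_mod_cast h0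
    omega
  have hyk : 1 ≤ (c (k-1)).2 := by
    have hYle : (1 - lam) * ((c (k-1)).2:ℝ) + lam * ((c k).2:ℝ)
        = ((c (k-1)).2:ℝ) + lam * ((a k).2:ℝ) := by
      rw [hyr]; ring
    have hmul : lam * ((a k).2 : ℝ) ≤ 0 :=
      mul_nonpos_of_nonneg_of_nonpos hl0 (by linarith)
    have h0 : (0:ℝ) < ((c (k-1)).2 : ℝ) := by
      rw [hYle] at hY
      linarith
    have : (0:ℤ) < (c (k-1)).2 := by exact_mod_cast h0
    omega
  have hE : 1 ≤ -(a k).2 * (c (k-1)).1 + (a k).1 * (c (k-1)).2 := by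
    have hidd : ((-(a k).2 * (c (k-1)).1 + (a k).1 * (c (k-1)).2 : ℤ) : ℝ)
        = (-(a k).2 : ℝ) * ((1 - lam) * ((c (k-1)).1:ℝ) + lam * ((c k).1:ℝ))
          + ((a k).1 : ℝ) * ((1 - lam) * ((c (k-1)).2:ℝ) + lam * ((c k).2:ℝ)) := by
      push_cast
      rw [hxr, hyr]
      ring
    have hp1 := mul_pos hw0r hX
    have hp2' := mul_pos hu0r hY
    have h0 : (0:ℝ) < ((-(a k).2 * (c (k-1)).1 + (a k).1 * (c (k-1)).2 : ℤ) : ℝ) := by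
      rw [hidd]; linarith
    have : (0:ℤ) < -(a k).2 * (c (k-1)).1 + (a k).1 * (c (k-1)).2 := by exact_mod_cast h0
    omega
  have hmain := S12.mainP N 0 N k (fun i => (a i).1) (fun i => -(a i).2)
      (fun j => (c j).1) (fun j => (c j).2) 0
      hN (by omega) le_rfl
      (fun i h1 h2 => hUW i h1 h2)
      (fun i j h1 h2 h3 => hdet2 i j h1 h2 h3)
      (fun i h1 h2 => ⟨by
          show (c i).1 = (c (i-1)).1 + (a i).1
          linarith [(hstep i h1 h2).1], by
          show (c i).2 = (c (i-1)).2 - -(a i).2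
          linarith [(hstep i h1 h2).2]⟩)
      (by show (c 0).1 ≤ -1; omega)
      (by show (c N).2 ≤ -1; omega)
      hk1 hkN hyk hxk hE (Or.inl rfl)
  linarith
end

section
/- Let n ≥ 3 be an integer and let P be a type II_n polygon all of whose vertices belong to a sublattice Γ of ℤ² with invariant factor sequence (1, n). Then the large e₁-step of Γ and the large e₂-step of Γ (with respect to the standard basis (e₁, e₂) of ℤ²) are both greater than or equal to 2. -/
/-!
If the large `e₁`-step of `Γ` were `1`, then `(1, 0) ∈ Γ`, so the determinant of `Γ`, a multiple
of `n`, divides the second coordinate of every point of `Γ`: all vertices of `P` lie on the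
lines `x₂ ∈ nℤ`. By Krein–Milman, `P` has a vertex `v` with `v₁ < 0`, because the segment
`[(0,0),(0,n)]` splits `P`. If `v₂ ≤ 0`, join `v` to a point of `P` above `x₂ = n`; this crosses
`x₂ = 0` at some `z` with `z₁ ≥ 0`, since the bottom segment splits `P`, and then `[v, z]` meets
`x₁ = 0` at height `≤ 0`. The left segment forces that point to be `(0,0) ∈ nℤ²`, a
contradiction. If `v₂ ≥ n`, the same argument upside down produces `(0, n)`. The `e₂`-step is
handled by exchanging the roles of the coordinates.
-/

open Set

/-- The segment `[p, q]`, lying on a line `L` through `p` and `q`, splits `P`: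
`P ∩ L ⊆ [p, q]` and both open half-planes bounded by `L` contain points of `P`. -/
def SegSplits (P : Set (ℝ × ℝ)) (p q : ℝ × ℝ) : Prop :=
  ∃ a b c : ℝ, ¬(a = 0 ∧ b = 0) ∧
    a * p.1 + b * p.2 = c ∧ a * q.1 + b * q.2 = c ∧
    (∀ x ∈ P, a * x.1 + b * x.2 = c → x ∈ segment ℝ p q) ∧
    (∃ x ∈ P, a * x.1 + b * x.2 < c) ∧ (∃ x ∈ P, c < a * x.1 + b * x.2)

/-- The vertical line `x₁ = c` splits `P`. -/
def VLineSplits (P : Set (ℝ × ℝ)) (c : ℝ) : Prop :=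
  (∃ x ∈ P, x.1 < c) ∧ (∃ x ∈ P, c < x.1)

/-- The horizontal line `x₂ = c` splits `P`. -/
def HLineSplits (P : Set (ℝ × ℝ)) (c : ℝ) : Prop :=
  (∃ x ∈ P, x.2 < c) ∧ (∃ x ∈ P, c < x.2)

/-- Type II_n polygon: a convex integer polygon free of points of `nℤ²` such that each of the
segments `[(0,0),(n,0)]`, `[(n,0),(n,n)]`, `[(0,n),(n,n)]`, `[(0,0),(0,n)]` splits it. -/
def TypeII (n : ℕ) (P : Set (ℝ × ℝ)) : Prop :=
  IsConvexIntegerPolygon P ∧ FreeOfLattice n P ∧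
  SegSplits P (0, 0) ((n : ℝ), 0) ∧
  SegSplits P ((n : ℝ), 0) ((n : ℝ), (n : ℝ)) ∧
  SegSplits P (0, (n : ℝ)) ((n : ℝ), (n : ℝ)) ∧
  SegSplits P (0, 0) (0, (n : ℝ))


section Convex

variable {E : Type*} [AddCommGroup E] [Module ℝ E] {P : Set E}

lemma exists_mem_segment_apply_eq (g : E →ₗ[ℝ] ℝ) {v w : E} {c : ℝ} (hv : g v ≤ c)
    (hw : c ≤ g w) : ∃ z ∈ segment ℝ v w, g z = c := by
  have hc : c ∈ segment ℝ (g v) (g w) := by rw [segment_eq_Icc (hv.trans hw)]; exact ⟨hv, hw⟩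
  rwa [← LinearMap.coe_toAffineMap, ← image_segment] at hc

lemma apply_le_of_mem_segment (g : E →ₗ[ℝ] ℝ) {v z x : E} {c : ℝ} (hv : g v ≤ c) (hz : g z = c)
    (hx : x ∈ segment ℝ v z) : g x ≤ c := by
  have hgx : g x ∈ segment ℝ (g v) (g z) :=
    image_segment ℝ g.toAffineMap v z ▸ mem_image_of_mem _ hx
  rw [hz, segment_eq_Icc hv] at hgx
  exact hgx.2

lemma Convex.exists_mem_eq_zero_le (hP : Convex ℝ P) (f g : E →ₗ[ℝ] ℝ) {v w : E} {a : ℝ}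
    (hv : v ∈ P) (hw : w ∈ P) (hfv : f v < 0) (hgv : g v ≤ a) (hgw : a ≤ g w)
    (hline : ∀ x ∈ P, g x = a → 0 ≤ f x) : ∃ x ∈ P, f x = 0 ∧ g x ≤ a := by
  obtain ⟨z, hz, hgz⟩ := exists_mem_segment_apply_eq g hgv hgw
  have hzP := hP.segment_subset hv hw hz
  obtain ⟨x, hx, hfx⟩ := exists_mem_segment_apply_eq f hfv.le (hline z hzP hgz)
  exact ⟨x, hP.segment_subset hv hzP hx, hfx, apply_le_of_mem_segment g hgv hgz hx⟩

variable [TopologicalSpace E] [T2Space E] [IsTopologicalAddGroup E] [ContinuousSMul ℝ E]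
  [LocallyConvexSpace ℝ E]

lemma IsCompact.exists_mem_extremePoints_lt (hc : IsCompact P) (hconv : Convex ℝ P)
    (f : E →L[ℝ] ℝ) {r : ℝ} (h : ∃ x ∈ P, f x < r) : ∃ v ∈ extremePoints ℝ P, f v < r := by
  by_contra! hge
  obtain ⟨x, hx, hfx⟩ := h
  have hsub : P ⊆ {z | r ≤ f z} := by
    rw [← closure_convexHull_extremePoints hc hconv]
    exact closure_minimal (convexHull_min hge (convex_halfSpace_ge f.toLinearMap.isLinear r))
      (isClosed_le continuous_const f.continuous)
  exact (hsub hx).not_gt hfx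

lemma IsCompact.exists_mem_extremePoints_mem_Ioo (hc : IsCompact P) (hconv : Convex ℝ P)
    (f : E →L[ℝ] ℝ) (g : E →ₗ[ℝ] ℝ) {N : ℝ} (hN : 0 ≤ N) (hleft : ∃ x ∈ P, f x < 0)
    (hside : ∀ x ∈ P, f x = 0 → g x ∈ Ioo 0 N) (hbot : ∀ x ∈ P, g x = 0 → 0 ≤ f x)
    (htop : ∀ x ∈ P, g x = N → 0 ≤ f x) (hbelow : ∃ x ∈ P, g x < 0)
    (habove : ∃ x ∈ P, N < g x) : ∃ v ∈ extremePoints ℝ P, g v ∈ Ioo 0 N := by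
  obtain ⟨v, hvE, hfv⟩ := hc.exists_mem_extremePoints_lt hconv f hleft
  have hvP : v ∈ P := extremePoints_subset hvE
  refine ⟨v, hvE, ?_⟩
  by_contra hv
  rcases le_or_gt (g v) 0 with hv0 | hv0
  · obtain ⟨w, hw, hgw⟩ := habove
    obtain ⟨x, hx, hfx, hgx⟩ :=
      hconv.exists_mem_eq_zero_le f g hvP hw hfv hv0 (by linarith) hbot
    exact (hside x hx hfx).1.not_ge hgx
  · -- with `-g` and level `-N`, the top line plays the role of the bottom one
    obtain ⟨w, hw, hgw⟩ := hbelow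
    have hvN : N ≤ g v := not_lt.1 fun h => hv ⟨hv0, h⟩
    obtain ⟨x, hx, hfx, hgx⟩ := hconv.exists_mem_eq_zero_le f (-g) hvP hw hfv
      (a := -N) (by simpa using hvN) (by simp; linarith)
      (fun x hx h => htop x hx (by simp at h; linarith))
    exact (hside x hx hfx).2.not_ge (by simpa using hgx)

end Convex

lemma IsConvexIntegerPolygon.isCompact {P : Set (ℝ × ℝ)} (hP : IsConvexIntegerPolygon P) :
    IsCompact P := by
  obtain ⟨V, rfl, -⟩ := hP
  exact (V.finite_toSet.image _).isCompact_convexHull ℝ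

lemma IsConvexIntegerPolygon.convex {P : Set (ℝ × ℝ)} (hP : IsConvexIntegerPolygon P) :
    Convex ℝ P := by
  obtain ⟨V, rfl, -⟩ := hP
  exact convex_convexHull ℝ _

lemma FreeOfLattice.ne_of_mem {n : ℕ} {P : Set (ℝ × ℝ)} (hP : FreeOfLattice n P) {x : ℝ × ℝ}
    (hx : x ∈ P) (u v : ℤ) : x ≠ ((n : ℝ) * u, (n : ℝ) * v) := by
  rintro rfl
  exact hP u v (by simpa [intPt] using hx)

section SegSplits

variable {P : Set (ℝ × ℝ)} {h N : ℝ}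

lemma SegSplits.mem_Icc_and_hLineSplits (hN : 0 < N) (hs : SegSplits P (0, h) (N, h)) :
    (∀ x ∈ P, x.2 = h → x.1 ∈ Icc 0 N) ∧ HLineSplits P h := by
  obtain ⟨a, b, c, hab, h₀, h₁, hline, ⟨x, hxP, hx⟩, ⟨y, hyP, hy⟩⟩ := hs
  dsimp only at h₀ h₁
  obtain rfl : a = 0 := (mul_eq_zero.1 (by linarith : a * N = 0)).resolve_right hN.ne'
  obtain rfl : c = b * h := by linarith
  have hb : b ≠ 0 := fun hb => hab ⟨rfl, hb⟩
  refine ⟨fun z hz hz₂ => ?_, ?_⟩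
  · have hseg := Prod.segment_subset _ _ (hline z hz (by rw [hz₂]; ring))
    simpa [segment_eq_Icc hN.le] using hseg.1
  · rcases hb.lt_or_gt with hb | hb
    · exact ⟨⟨y, hyP, by nlinarith⟩, ⟨x, hxP, by nlinarith⟩⟩
    · exact ⟨⟨x, hxP, by nlinarith⟩, ⟨y, hyP, by nlinarith⟩⟩

lemma SegSplits.mem_Icc_and_vLineSplits (hN : 0 < N) (hs : SegSplits P (h, 0) (h, N)) :
    (∀ x ∈ P, x.1 = h → x.2 ∈ Icc 0 N) ∧ VLineSplits P h := by
  obtain ⟨a, b, c, hab, h₀, h₁, hline, ⟨x, hxP, hx⟩, ⟨y, hyP, hy⟩⟩ := hs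
  dsimp only at h₀ h₁
  obtain rfl : b = 0 := (mul_eq_zero.1 (by linarith : b * N = 0)).resolve_right hN.ne'
  obtain rfl : c = a * h := by linarith
  have ha : a ≠ 0 := fun ha => hab ⟨ha, rfl⟩
  refine ⟨fun z hz hz₁ => ?_, ?_⟩
  · have hseg := Prod.segment_subset _ _ (hline z hz (by rw [hz₁]; ring))
    simpa [segment_eq_Icc hN.le] using hseg.2
  · rcases ha.lt_or_gt with ha | ha
    · exact ⟨⟨y, hyP, by nlinarith⟩, ⟨x, hxP, by nlinarith⟩⟩
    · exact ⟨⟨x, hxP, by nlinarith⟩, ⟨y, hyP, by nlinarith⟩⟩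

end SegSplits

namespace TypeII

variable {n : ℕ} {P : Set (ℝ × ℝ)}

lemma exists_mem_extremePoints_snd_mem_Ioo (hP : TypeII n P) (hn : 0 < n) :
    ∃ v ∈ extremePoints ℝ P, v.2 ∈ Ioo 0 (n : ℝ) := by
  obtain ⟨hpoly, hfree, hbot, -, htop, hleft⟩ := hP
  have hN : (0 : ℝ) < n := by exact_mod_cast hn
  obtain ⟨hbot, hbelow, -⟩ := hbot.mem_Icc_and_hLineSplits hN
  obtain ⟨htop, -, habove⟩ := htop.mem_Icc_and_hLineSplits hN
  obtain ⟨hleft, hlt, -⟩ := hleft.mem_Icc_and_vLineSplits hN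
  refine hpoly.isCompact.exists_mem_extremePoints_mem_Ioo hpoly.convex
    (ContinuousLinearMap.fst ℝ ℝ ℝ) (LinearMap.snd ℝ ℝ ℝ) hN.le hlt (fun x hx hx₁ => ?_)
    (fun x hx hx₂ => (hbot x hx hx₂).1) (fun x hx hx₂ => (htop x hx hx₂).1) hbelow habove
  obtain ⟨h0, hn'⟩ := hleft x hx hx₁
  exact ⟨h0.lt_of_ne fun h =>
      hfree.ne_of_mem hx 0 0 (Prod.ext (by simpa using hx₁) (by simp [← h])),
    hn'.lt_of_ne fun h => hfree.ne_of_mem hx 0 1 (Prod.ext (by simpa using hx₁) (by simp [h]))⟩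

lemma exists_mem_extremePoints_fst_mem_Ioo (hP : TypeII n P) (hn : 0 < n) :
    ∃ v ∈ extremePoints ℝ P, v.1 ∈ Ioo 0 (n : ℝ) := by
  obtain ⟨hpoly, hfree, hbot, hright, -, hleft⟩ := hP
  have hN : (0 : ℝ) < n := by exact_mod_cast hn
  obtain ⟨hbot, hlt, -⟩ := hbot.mem_Icc_and_hLineSplits hN
  obtain ⟨hright, -, habove⟩ := hright.mem_Icc_and_vLineSplits hN
  obtain ⟨hleft, hbelow, -⟩ := hleft.mem_Icc_and_vLineSplits hN
  refine hpoly.isCompact.exists_mem_extremePoints_mem_Ioo hpoly.convex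
    (ContinuousLinearMap.snd ℝ ℝ ℝ) (LinearMap.fst ℝ ℝ ℝ) hN.le hlt (fun x hx hx₂ => ?_)
    (fun x hx hx₁ => (hleft x hx hx₁).1) (fun x hx hx₁ => (hright x hx hx₁).1) hbelow habove
  obtain ⟨h0, hn'⟩ := hbot x hx hx₂
  exact ⟨h0.lt_of_ne fun h =>
      hfree.ne_of_mem hx 0 0 (Prod.ext (by simp [← h]) (by simpa using hx₂)),
    hn'.lt_of_ne fun h => hfree.ne_of_mem hx 1 0 (Prod.ext (by simp [h]) (by simpa using hx₂))⟩

end TypeII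

lemma gcd_entries_dvd_det (a b c d : ℤ) :
    Nat.gcd (Nat.gcd a.natAbs b.natAbs) (Nat.gcd c.natAbs d.natAbs) ∣ (a * d - b * c).natAbs := by
  set δ := Nat.gcd (Nat.gcd a.natAbs b.natAbs) (Nat.gcd c.natAbs d.natAbs)
  have hδ : ∀ e : ℤ, δ ∣ e.natAbs → (δ : ℤ) ∣ e := fun e => Int.natCast_dvd.2
  rw [← Int.natCast_dvd]
  have ha := hδ a ((Nat.gcd_dvd_left _ _).trans (Nat.gcd_dvd_left _ _))
  have hb := hδ b ((Nat.gcd_dvd_left _ _).trans (Nat.gcd_dvd_right _ _))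
  have hc := hδ c ((Nat.gcd_dvd_right _ _).trans (Nat.gcd_dvd_left _ _))
  have hd := hδ d ((Nat.gcd_dvd_right _ _).trans (Nat.gcd_dvd_right _ _))
  exact dvd_sub (ha.mul_right d) (hb.mul_right c)

namespace HasInvFactors

variable {Γ : AddSubgroup (ℤ × ℤ)} {δ n : ℕ}

lemma pos (hΓ : HasInvFactors Γ δ n) : 0 < n := by
  obtain ⟨a, b, c, d, hdet, -, rfl, rfl⟩ := hΓ
  have hpos := Int.natAbs_pos.2 hdet
  have hdvd := gcd_entries_dvd_det a b c d
  exact Nat.div_pos (Nat.le_of_dvd hpos hdvd) (Nat.pos_of_dvd_of_pos hdvd hpos)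

lemma exists_dvd_det (hΓ : HasInvFactors Γ δ n) : ∃ a b c d : ℤ,
    (∀ p : ℤ × ℤ, p ∈ Γ ↔ ∃ u v : ℤ, p = (a * u + b * v, c * u + d * v)) ∧
      (n : ℤ) ∣ a * d - b * c := by
  obtain ⟨a, b, c, d, -, hmem, rfl, rfl⟩ := hΓ
  exact ⟨a, b, c, d, hmem, Int.natCast_dvd.2 (Nat.div_dvd_of_dvd (gcd_entries_dvd_det a b c d))⟩

lemma dvd_snd_of_mem (hΓ : HasInvFactors Γ δ n) (h : ((1 : ℤ), (0 : ℤ)) ∈ Γ) :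
    ∀ p ∈ Γ, (n : ℤ) ∣ p.2 := by
  obtain ⟨a, b, c, d, hmem, hn⟩ := hΓ.exists_dvd_det
  obtain ⟨u, v, huv⟩ := (hmem _).1 h
  simp only [Prod.mk.injEq] at huv
  have hc : (n : ℤ) ∣ c :=
    hn.trans (Dvd.intro_left (-v) (by linear_combination a * huv.2 - c * huv.1))
  have hd : (n : ℤ) ∣ d :=
    hn.trans (Dvd.intro_left u (by linear_combination b * huv.2 - d * huv.1))
  rintro p hp
  obtain ⟨u', v', rfl⟩ := (hmem p).1 hp
  exact dvd_add (hc.mul_right _) (hd.mul_right _)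

lemma dvd_fst_of_mem (hΓ : HasInvFactors Γ δ n) (h : ((0 : ℤ), (1 : ℤ)) ∈ Γ) :
    ∀ p ∈ Γ, (n : ℤ) ∣ p.1 := by
  obtain ⟨a, b, c, d, hmem, hn⟩ := hΓ.exists_dvd_det
  obtain ⟨u, v, huv⟩ := (hmem _).1 h
  simp only [Prod.mk.injEq] at huv
  have ha : (n : ℤ) ∣ a :=
    hn.trans (Dvd.intro_left v (by linear_combination c * huv.1 - a * huv.2))
  have hb : (n : ℤ) ∣ b :=
    hn.trans (Dvd.intro_left (-u) (by linear_combination d * huv.1 - b * huv.2))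
  rintro p hp
  obtain ⟨u', v', rfl⟩ := (hmem p).1 hp
  exact dvd_add (ha.mul_right _) (hb.mul_right _)

end HasInvFactors

lemma Int.not_natCast_dvd_of_cast_mem_Ioo {m : ℤ} {n : ℕ} (h : (m : ℝ) ∈ Ioo 0 (n : ℝ)) :
    ¬(n : ℤ) ∣ m := by
  obtain ⟨h0, hn⟩ := h
  exact fun hdvd => (Int.le_of_dvd (by exact_mod_cast h0) hdvd).not_gt (by exact_mod_cast hn)

theorem stmt13_general (n : ℕ) (P : Set (ℝ × ℝ)) (hP : TypeII n P)
    (Γ : AddSubgroup (ℤ × ℤ)) (hfac : HasInvFactors Γ 1 n)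
    (hvert : VerticesIn P Γ)
    (S₁ S₂ : ℕ)
    (hS₁ : 0 < S₁ ∧ ∀ u : ℤ, (u, (0 : ℤ)) ∈ Γ ↔ (S₁ : ℤ) ∣ u)
    (hS₂ : 0 < S₂ ∧ ∀ u : ℤ, ((0 : ℤ), u) ∈ Γ ↔ (S₂ : ℤ) ∣ u) :
    2 ≤ S₁ ∧ 2 ≤ S₂ := by
  have hn := hfac.pos
  constructor
  · by_contra! hS
    have h10 : ((1 : ℤ), (0 : ℤ)) ∈ Γ := (hS₁.2 1).2 (by simp [show S₁ = 1 by omega])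
    obtain ⟨v, hv, hvn⟩ := hP.exists_mem_extremePoints_snd_mem_Ioo hn
    obtain ⟨p, hp, rfl⟩ := hvert v hv
    exact Int.not_natCast_dvd_of_cast_mem_Ioo hvn (hfac.dvd_snd_of_mem h10 p hp)
  · by_contra! hS
    have h01 : ((0 : ℤ), (1 : ℤ)) ∈ Γ := (hS₂.2 1).2 (by simp [show S₂ = 1 by omega])
    obtain ⟨v, hv, hvn⟩ := hP.exists_mem_extremePoints_fst_mem_Ioo hn
    obtain ⟨p, hp, rfl⟩ := hvert v hv
    exact Int.not_natCast_dvd_of_cast_mem_Ioo hvn (hfac.dvd_fst_of_mem h01 p hp)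

/-- Lemma: if `P` is a type II_n polygon (`n ≥ 3`) whose vertices belong to a sublattice `Γ`
of `ℤ²` with invariant factor sequence `(1, n)`, then the large `e₁`-step `S₁` and the large
`e₂`-step `S₂` of `Γ` are both at least 2. -/
theorem stmt13 (n : ℕ) (hn : 3 ≤ n) (P : Set (ℝ × ℝ)) (hP : TypeII n P)
    (Γ : AddSubgroup (ℤ × ℤ)) (hΓ : IsSublatticeZ2 Γ) (hfac : HasInvFactors Γ 1 n)
    (hvert : VerticesIn P Γ)
    (S₁ S₂ : ℕ)
    (hS₁ : 0 < S₁ ∧ ∀ u : ℤ, (u, (0 : ℤ)) ∈ Γ ↔ (S₁ : ℤ) ∣ u)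
    (hS₂ : 0 < S₂ ∧ ∀ u : ℤ, ((0 : ℤ), u) ∈ Γ ↔ (S₂ : ℤ) ∣ u) :
    2 ≤ S₁ ∧ 2 ≤ S₂ :=
  stmt13_general n P hP Γ hfac hvert S₁ S₂ hS₁ hS₂
end
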